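/- arXiv:2503.13379 — 6 statements merged into one kernel-verified Lean document; each statement's English description precedes it below -/
import Mathlib

section
/- Let X be a finite set, Y a compact Hausdorff topological space, f : X → [0,∞) a function, and g : X×Y → [0,∞) a function such that g(x,·) is continuous on Y for every x ∈ X. Then, for a fixed n ∈ ℕ, the inequality ∑_{x⃗∈X^n} f^{⊗n}(x⃗) τ(x⃗) ≤ sup_{y∈Y} ∑_{x⃗∈X^n} g_y^{⊗n}(x⃗) τ(x⃗) holds for every function τ : X^n → [0,1] if and only if there exists a probability measure μ_n on the Borel σ-algebra of Y such that f^{⊗n}(x⃗) ≤ ∫_Y g_y^{⊗n}(x⃗) dμ_n(y) for every x⃗ ∈ X^n. -/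
open MeasureTheory Filter

open Module Set Pointwise

lemma aux_card_le {E : Type*} [NormedAddCommGroup E] [NormedSpace ℝ E] [FiniteDimensional ℝ E]
    {ι : Type*} [Fintype ι] {p : ι → E} (h : AffineIndependent ℝ p) :
    Fintype.card ι ≤ finrank ℝ E + 1 := by
  cases isEmpty_or_nonempty ι
  · simp
  · rw [← h.finrank_vectorSpan_add_one]
    exact Nat.add_le_add_right (Submodule.finrank_le _) 1

lemma aux_isCompact_convexHull {E : Type*} [NormedAddCommGroup E] [NormedSpace ℝ E]
    [FiniteDimensional ℝ E] {s : Set E} (hs : IsCompact s) : IsCompact (convexHull ℝ s) := by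
  classical
  set m := finrank ℝ E + 1 with hm
  have key : convexHull ℝ s = ⋃ k ∈ Finset.range (m + 1),
      (fun p : (Fin k → ℝ) × (Fin k → E) => ∑ i, p.1 i • p.2 i) ''
        ((stdSimplex ℝ (Fin k)) ×ˢ (Set.pi Set.univ fun _ => s)) := by
    apply Set.Subset.antisymm
    · intro x hx
      obtain ⟨ι, hft, z, w, hzs, hai, hw0, hw1, hwz⟩ := eq_pos_convex_span_of_mem_convexHull hx
      have hcard : Fintype.card ι ≤ m := aux_card_le hai
      set k := Fintype.card ι with hk
      let e : ι ≃ Fin k := Fintype.equivFin ι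
      refine Set.mem_biUnion (Finset.mem_range.2 (Nat.lt_succ_of_le hcard))
        ⟨(w ∘ e.symm, z ∘ e.symm), ⟨⟨fun i => (hw0 _).le, ?_⟩, fun i _ => hzs ⟨_, rfl⟩⟩, ?_⟩
      · show ∑ i : Fin k, w (e.symm i) = 1
        rw [Equiv.sum_comp e.symm w]; exact hw1
      · show ∑ i : Fin k, w (e.symm i) • z (e.symm i) = x
        rw [← hwz]
        exact Equiv.sum_comp e.symm fun j => w j • z j
    · refine Set.iUnion₂_subset fun k _ => ?_
      rintro x ⟨⟨wv, zv⟩, ⟨⟨hw0, hw1⟩, hz⟩, rfl⟩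
      simp only at hw0 hw1 hz ⊢
      show ∑ i : Fin k, wv i • zv i ∈ _
      rw [← Finset.centerMass_eq_of_sum_1 _ _ hw1]
      exact Finset.centerMass_mem_convexHull _ (fun i _ => hw0 i) (by rw [hw1]; norm_num)
        (fun i _ => hz i (Set.mem_univ i))
  rw [key]
  refine (Finset.range (m + 1)).finite_toSet.isCompact_biUnion fun k _ => ?_
  refine IsCompact.image (IsCompact.prod (isCompact_stdSimplex _ _)
    (isCompact_univ_pi fun _ => hs)) ?_
  exact continuous_finset_sum _ fun i _ =>
    ((continuous_apply i).comp continuous_fst).smul ((continuous_apply i).comp continuous_snd)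



/-- Let `X` be a finite set, `Y` a compact Hausdorff space,
`f : X → [0,∞)`, and `g : X × Y → [0,∞)` with each `g(x,·)` continuous.  For a fixed
`n ≥ 1`, the inequality
`∑_{x⃗} f^{⊗n}(x⃗) τ(x⃗) ≤ sup_y ∑_{x⃗} g_y^{⊗n}(x⃗) τ(x⃗)` holds for every
`τ : X^n → [0,1]` if and only if there is a Borel probability measure `μ` on `Y` with
`f^{⊗n}(x⃗) ≤ ∫_Y g_y^{⊗n}(x⃗) dμ(y)` for every `x⃗ ∈ X^n`. -/
theorem fixed_copy_test_bound_iff_arithmetic_mean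
    {X Y : Type*} [Fintype X]
    [TopologicalSpace Y] [CompactSpace Y] [T2Space Y]
    [MeasurableSpace Y] [BorelSpace Y] [Nonempty Y]
    (f : X → ℝ) (g : X → Y → ℝ)
    (hf : ∀ x, 0 ≤ f x) (hg : ∀ x y, 0 ≤ g x y)
    (hgc : ∀ x, Continuous (g x))
    (n : ℕ) (hn : 0 < n) :
    (∀ τ : (Fin n → X) → ℝ, (∀ xs, τ xs ∈ Set.Icc (0:ℝ) 1) →
        ∑ xs : Fin n → X, (∏ j, f (xs j)) * τ xs ≤
          ⨆ y : Y, ∑ xs : Fin n → X, (∏ j, g (xs j) y) * τ xs) ↔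
      (∃ μ : Measure Y, IsProbabilityMeasure μ ∧
        ∀ xs : Fin n → X, (∏ j, f (xs j)) ≤ ∫ y, ∏ j, g (xs j) y ∂μ) := by
  constructor
  · intro h
    classical
    set w : Y → (Fin n → X) → ℝ := fun y xs => ∏ j, g (xs j) y with hwdef
    set v : (Fin n → X) → ℝ := fun xs => ∏ j, f (xs j) with hvdef
    have hwc : Continuous w := continuous_pi fun xs => continuous_finset_prod _ fun j _ => hgc _
    set K : Set ((Fin n → X) → ℝ) := convexHull ℝ (Set.range w) with hKdef
    set N : Set ((Fin n → X) → ℝ) := Set.pi Set.univ fun _ => Set.Iic (0:ℝ) with hNdef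
    have hKcomp : IsCompact K := aux_isCompact_convexHull (isCompact_range hwc)
    have hKconv : Convex ℝ K := convex_convexHull _ _
    have hNclosed : IsClosed N := isClosed_set_pi fun _ _ => isClosed_Iic
    have hNconv : Convex ℝ N := convex_pi fun _ _ => convex_Iic 0
    have hSclosed : IsClosed (K + N) := hNclosed.add_left_of_isCompact hKcomp
    have hSconv : Convex ℝ (K + N) := hKconv.add hNconv
    -- first show v ∈ K + N
    have hvS : v ∈ K + N := by
      by_contra hvS
      obtain ⟨φ, u, hlt, hu⟩ := geometric_hahn_banach_closed_point hSconv hSclosed hvS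
      set lam : (Fin n → X) → ℝ := fun xs => φ (fun j => if xs = j then (1:ℝ) else 0) with hlam
      have hrep : ∀ p : (Fin n → X) → ℝ, φ p = ∑ xs, p xs * lam xs := by
        intro p
        conv_lhs => rw [pi_eq_sum_univ p, map_sum]
        exact Finset.sum_congr rfl fun xs _ => by rw [φ.map_smul, smul_eq_mul]
      have hq0 : w (Classical.arbitrary Y) ∈ K := subset_convexHull _ _ ⟨_, rfl⟩
      have hmemS : ∀ q ∈ K, ∀ c, (∀ xs, c xs ≤ 0) → q + c ∈ K + N := by
        intro q hq c hc
        exact Set.add_mem_add hq fun xs _ => hc xs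
      have hKS : ∀ q ∈ K, φ q < u := by
        intro q hq
        have := hlt (q + 0) (hmemS q hq 0 fun xs => le_refl 0)
        simpa using this
      have hq0u : φ (w (Classical.arbitrary Y)) < u := hKS _ hq0
      -- nonnegativity of lam
      have hlam0 : ∀ xs, 0 ≤ lam xs := by
        intro xs
        by_contra hneg
        push_neg at hneg
        set t : ℝ := (u + 1 - φ (w (Classical.arbitrary Y))) / (-lam xs) with ht
        have htpos : 0 < t := div_pos (by linarith) (by linarith)
        have hc : ∀ xs', (fun j => if xs = j then -t else 0) xs' ≤ 0 := by
          intro xs'; by_cases hx : xs = xs' <;> simp [hx, htpos.le]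
        have hmem := hlt _ (hmemS _ hq0 _ hc)
        have heq : φ (w (Classical.arbitrary Y) + fun j => if xs = j then -t else 0)
            = φ (w (Classical.arbitrary Y)) + -t * lam xs := by
          rw [map_add]
          congr 1
          have : (fun j => if xs = j then -t else 0) = (-t) • (fun j => if xs = j then (1:ℝ) else 0) := by
            funext j; by_cases hx : xs = j <;> simp [hx]
          rw [this, φ.map_smul, smul_eq_mul]
        rw [heq] at hmem
        have : -t * lam xs = u + 1 - φ (w (Classical.arbitrary Y)) := by
          have hl : lam xs ≠ 0 := ne_of_lt hneg
          rw [ht]; field_simp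
        rw [this] at hmem
        linarith
      -- lam is nonzero somewhere
      have hvgt : u < ∑ xs, v xs * lam xs := by rw [← hrep]; exact hu
      have hex : ∃ xs, lam xs ≠ 0 := by
        by_contra hall
        push_neg at hall
        have h1 : φ v = 0 := by rw [hrep]; simp [hall]
        have h2 : φ (w (Classical.arbitrary Y)) = 0 := by rw [hrep]; simp [hall]
        rw [h2] at hq0u
        rw [h1] at hu
        linarith
      obtain ⟨xs₀, hxs₀⟩ := hex
      have hxs₀pos : 0 < lam xs₀ := (hlam0 xs₀).lt_of_ne (Ne.symm hxs₀)
      have hne : (Finset.univ : Finset (Fin n → X)).Nonempty := ⟨xs₀, Finset.mem_univ _⟩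
      set M : ℝ := Finset.univ.sup' hne lam with hM
      have hMpos : 0 < M := lt_of_lt_of_le hxs₀pos (Finset.le_sup' lam (Finset.mem_univ xs₀))
      set τ : (Fin n → X) → ℝ := fun xs => lam xs / M with hτdef
      have hτmem : ∀ xs, τ xs ∈ Set.Icc (0:ℝ) 1 := by
        intro xs
        constructor
        · exact div_nonneg (hlam0 xs) hMpos.le
        · rw [div_le_one hMpos]
          exact Finset.le_sup' lam (Finset.mem_univ xs)
      have hsum := h τ hτmem
      have hLHS : ∑ xs : Fin n → X, (∏ j, f (xs j)) * τ xs = (∑ xs, v xs * lam xs) / M := by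
        rw [Finset.sum_div]
        exact Finset.sum_congr rfl fun xs _ => by rw [hτdef, hvdef]; ring
      have hRHS : (⨆ y : Y, ∑ xs : Fin n → X, (∏ j, g (xs j) y) * τ xs) ≤ u / M := by
        refine ciSup_le fun y => ?_
        have : ∑ xs : Fin n → X, (∏ j, g (xs j) y) * τ xs = φ (w y) / M := by
          rw [hrep, Finset.sum_div]
          exact Finset.sum_congr rfl fun xs _ => by rw [hτdef, hwdef]; ring
        rw [this]
        have := hKS (w y) (subset_convexHull _ _ ⟨y, rfl⟩)
        have h' : φ (w y) ≤ u := this.le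
        gcongr
      have hfinal : u / M < (∑ xs, v xs * lam xs) / M := by
        have := mul_lt_mul_of_pos_right hvgt (inv_pos.2 hMpos)
        simpa [div_eq_mul_inv] using this
      rw [hLHS] at hsum
      linarith
    -- extract μ from v ∈ K + N
    obtain ⟨q, hq, c, hc, hqc⟩ := hvS
    have hvle : ∀ xs, v xs ≤ q xs := by
      intro xs
      have hcx : c xs ≤ 0 := hc xs (Set.mem_univ xs)
      have : q xs + c xs = v xs := congrFun hqc xs
      linarith
    rw [hKdef, convexHull_eq] at hq
    obtain ⟨ι, t, a, z, ha0, ha1, hzs, hcm⟩ := hq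
    have hzy : ∀ i ∈ t, ∃ y, w y = z i := fun i hi => hzs i hi
    choose! yy hyy using hzy
    set μ : Measure Y := ∑ i ∈ t, (a i).toNNReal • Measure.dirac (yy i) with hμdef
    have hμuniv : μ Set.univ = 1 := by
      have h1 : μ Set.univ = ∑ i ∈ t, ((a i).toNNReal : ENNReal) := by
        rw [hμdef]
        rw [Measure.coe_finset_sum, Finset.sum_apply]
        refine Finset.sum_congr rfl fun i hi => ?_
        rw [Measure.smul_apply, Measure.dirac_apply_of_mem (Set.mem_univ _),
          ENNReal.smul_def, smul_eq_mul, mul_one]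
      rw [h1, ← ENNReal.coe_finset_sum]
      norm_cast
      rw [← Real.toNNReal_sum_of_nonneg ha0, ha1]
      simp
    refine ⟨μ, ⟨hμuniv⟩, fun xs => ?_⟩
    have hwcx : Continuous fun y => ∏ j, g (xs j) y := continuous_finset_prod _ fun j _ => hgc _
    have hkey : ∫ y, ∏ j, g (xs j) y ∂μ = ∑ i ∈ t, a i * z i xs := by
      rw [hμdef, integral_finset_sum_measure (fun i _ =>
        hwcx.integrable_of_hasCompactSupport (HasCompactSupport.of_compactSpace _))]
      refine Finset.sum_congr rfl fun i hi => ?_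
      rw [integral_smul_nnreal_measure, integral_dirac]
      simp only [NNReal.smul_def, smul_eq_mul]
      rw [Real.coe_toNNReal _ (ha0 i hi), ← hyy i hi]
    rw [hkey]
    have hqeq : ∑ i ∈ t, a i * z i xs = q xs := by
      rw [Finset.centerMass_eq_of_sum_1 _ _ ha1] at hcm
      have := congrFun hcm xs
      simpa [Finset.sum_apply] using this
    rw [hqeq]
    exact hvle xs
  · rintro hex τ hτ
    classical
    obtain ⟨μ, hμ, hle⟩ := hex
    have hint : ∀ F : Y → ℝ, Continuous F → Integrable F μ := fun F hF =>
      hF.integrable_of_hasCompactSupport (HasCompactSupport.of_compactSpace F)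
    have hwc : ∀ xs : Fin n → X, Continuous fun y => ∏ j, g (xs j) y := fun xs =>
      continuous_finset_prod _ fun j _ => hgc _
    set F : Y → ℝ := fun y => ∑ xs : Fin n → X, (∏ j, g (xs j) y) * τ xs with hF
    have hFc : Continuous F := continuous_finset_sum _ fun xs _ => (hwc xs).mul continuous_const
    have hbdd : BddAbove (Set.range F) := (isCompact_range hFc).bddAbove
    calc ∑ xs : Fin n → X, (∏ j, f (xs j)) * τ xs
        ≤ ∑ xs : Fin n → X, (∫ y, ∏ j, g (xs j) y ∂μ) * τ xs := by
          refine Finset.sum_le_sum fun xs _ => ?_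
          exact mul_le_mul_of_nonneg_right (hle xs) (hτ xs).1
      _ = ∫ y, F y ∂μ := by
          rw [hF, integral_finset_sum (f := fun xs y => (∏ j, g (xs j) y) * τ xs) _ fun xs _ => ((hwc xs).mul continuous_const).integrable_of_hasCompactSupport (HasCompactSupport.of_compactSpace _)]
          exact Finset.sum_congr rfl fun xs _ => (integral_mul_const (τ xs) _).symm
      _ ≤ ∫ _, (⨆ y, F y) ∂μ := integral_mono (hint F hFc) (integrable_const _)
            (fun y => le_ciSup hbdd y)
      _ = ⨆ y, F y := by simp [measure_univ]
end

section
/- Let X be a finite set, Y a compact Hausdorff topological space, f : X → [0,∞) a function, and g : X×Y → [0,∞) a function such that g(x,·) is continuous on Y for every x ∈ X. Then the inequality ∑_{x⃗∈X^n} f^{⊗n}(x⃗) τ(x⃗) ≤ sup_{y∈Y} ∑_{x⃗∈X^n} g_y^{⊗n}(x⃗) τ(x⃗) holds for every n ∈ ℕ and every function τ : X^n → [0,1] if and only if there exists a probability measure ν on the Borel σ-algebra of Y such that f(x) ≤ exp(∫_Y log g(x,y) dν(y)) for every x ∈ X. -/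
open MeasureTheory Filter
open scoped ENNReal

noncomputable section

/-- Integral of the positive part of `log ∘ h`. -/
def logPlusInt {Y : Type*} [MeasurableSpace Y] (ν : Measure Y) (h : Y → ℝ) : ℝ≥0∞ :=
  ∫⁻ y, ENNReal.ofReal (Real.log (h y)) ∂ν

open Classical in
/-- Integral of the negative part of `log ∘ h`, with the convention `log 0 = -∞`. -/
def logMinusInt {Y : Type*} [MeasurableSpace Y] (ν : Measure Y) (h : Y → ℝ) : ℝ≥0∞ :=
  ∫⁻ y, (if h y = 0 then ⊤ else ENNReal.ofReal (-Real.log (h y))) ∂ν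

/-- `geomBound ν c h` says: the integral `∫ log h dν` exists in `[-∞, ∞)`
(with the convention `log 0 = -∞`) and `c ≤ exp (∫ log h dν)` (with `exp (-∞) = 0`). -/
def geomBound {Y : Type*} [MeasurableSpace Y] (ν : Measure Y) (c : ℝ) (h : Y → ℝ) : Prop :=
  logPlusInt ν h ≠ ⊤ ∧
    (logMinusInt ν h = ⊤ → c ≤ 0) ∧
    (logMinusInt ν h ≠ ⊤ →
      c ≤ Real.exp ((logPlusInt ν h).toReal - (logMinusInt ν h).toReal))

end

set_option maxHeartbeats 1000000

noncomputable section

def trlog (T t : ℝ) : ℝ := Real.log (max t (Real.exp (-T)))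

lemma trlog_continuous (T : ℝ) {Y : Type*} [TopologicalSpace Y] {h : Y → ℝ}
    (hc : Continuous h) : Continuous (fun y => trlog T (h y)) := by
  apply Continuous.log (hc.max continuous_const)
  intro y
  exact ne_of_gt (lt_max_of_lt_right (Real.exp_pos _))

lemma log_le_trlog {t : ℝ} (ht : 0 < t) (T : ℝ) : Real.log t ≤ trlog T t :=
  Real.log_le_log ht (le_max_left _ _)

lemma trlog_anti {T₁ T₂ t : ℝ} (h : T₁ ≤ T₂) : trlog T₂ t ≤ trlog T₁ t := by
  apply Real.log_le_log (lt_max_of_lt_right (Real.exp_pos _))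
  exact max_le_max le_rfl (Real.exp_le_exp.2 (neg_le_neg h))

lemma trlog_zero (T : ℝ) : trlog T 0 = -T := by
  simp [trlog, max_eq_right (Real.exp_pos (-T)).le, Real.log_exp]

lemma trlog_eq_log {T t : ℝ} (h : Real.exp (-T) ≤ t) : trlog T t = Real.log t := by
  simp [trlog, max_eq_left h]

lemma sum_dite_fin {M : Type*} [AddCommMonoid M] {k n : ℕ} (hle : n ≤ k) (ψ : Fin n → M) :
    (∑ i : Fin k, if h : (i : ℕ) < n then ψ ⟨i, h⟩ else 0) = ∑ j : Fin n, ψ j := by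
  classical
  set ψ' : ℕ → M := fun i => if h : i < n then ψ ⟨i, h⟩ else 0 with hψ'
  have h1 : (∑ i : Fin k, if h : (i : ℕ) < n then ψ ⟨i, h⟩ else 0) = ∑ i ∈ Finset.range k, ψ' i :=
    Fin.sum_univ_eq_sum_range ψ' k
  have h2 : ∑ j : Fin n, ψ j = ∑ i ∈ Finset.range n, ψ' i := by
    rw [← Fin.sum_univ_eq_sum_range ψ' n]
    apply Finset.sum_congr rfl
    intro j _
    rw [hψ']
    simp only [Fin.is_lt, dif_pos, Fin.eta]
  rw [h1, h2]
  rw [Finset.sum_subset (Finset.range_subset_range.2 hle)]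
  intro i hi hni
  rw [Finset.mem_range] at hni
  exact dif_neg hni

section
variable {X Y : Type*} [Fintype X]
    [TopologicalSpace Y] [CompactSpace Y] [T2Space Y] [Nonempty Y]

lemma exists_max {h : Y → ℝ} (hc : Continuous h) : ∃ y0, ∀ y, h y ≤ h y0 := by
  obtain ⟨y0, -, hy0⟩ := isCompact_univ.exists_isMaxOn Set.univ_nonempty hc.continuousOn
  exact ⟨y0, fun y => hy0 (Set.mem_univ y)⟩

lemma ciSup_le_max {h : Y → ℝ} {y0 : Y} (hy0 : ∀ y, h y ≤ h y0) : (⨆ y, h y) = h y0 :=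
  le_antisymm (ciSup_le hy0) (le_ciSup ⟨h y0, Set.forall_mem_range.2 hy0⟩ y0)

lemma exists_weights (f : X → ℝ) (g : X → Y → ℝ) (hg : ∀ x y, 0 ≤ g x y)
    (hgc : ∀ x, Continuous (g x))
    (hB : ∀ c : X → ℕ, 0 < ∑ x, c x → ∏ x, f x ^ c x ≤ ⨆ y, ∏ x, g x y ^ c x)
    (T : ℝ) {ε : ℝ} (hε : 0 < ε) :
    ∃ (yv : Fin (Fintype.card X + 1) → Y) (wv : Fin (Fintype.card X + 1) → ℝ),
      (∀ i, wv i ∈ Set.Icc (0:ℝ) 1) ∧ (∑ i, wv i) = 1 ∧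
      ∀ x, 0 < f x → Real.log (f x) ≤ ε + ∑ i, wv i * trlog T (g x (yv i)) := by
  classical
  obtain ⟨y₀⟩ := ‹Nonempty Y›
  set k := Fintype.card X + 1 with hk
  set P : Finset X := Finset.univ.filter (fun x => 0 < f x) with hP
  set Φ : Y → (↥P → ℝ) := fun y x => trlog T (g ↑x y) with hΦ
  set K : Set (↥P → ℝ) := Set.range Φ with hK
  set D : Set (↥P → ℝ) := {d | ∃ c ∈ convexHull ℝ K, d ≤ c} with hD
  set v : ↥P → ℝ := fun x => Real.log (f ↑x) with hv
  have hKD : ∀ y, Φ y ∈ D := fun y => ⟨Φ y, subset_convexHull ℝ K ⟨y, rfl⟩, le_rfl⟩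
  have hDconv : Convex ℝ D := by
    rintro d₁ ⟨c₁, hc₁, hd₁⟩ d₂ ⟨c₂, hc₂, hd₂⟩ a b ha hb hab
    refine ⟨a • c₁ + b • c₂, (convex_convexHull ℝ K) hc₁ hc₂ ha hb hab, ?_⟩
    intro x
    simp only [Pi.add_apply, Pi.smul_apply, smul_eq_mul]
    exact add_le_add (mul_le_mul_of_nonneg_left (hd₁ x) ha)
      (mul_le_mul_of_nonneg_left (hd₂ x) hb)
  -- main claim
  have hvD : v ∈ closure D := by
    by_contra hvc
    obtain ⟨φ, u, hDu, huv⟩ :=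
      geometric_hahn_banach_closed_point hDconv.closure isClosed_closure hvc
    have hDu' : ∀ d ∈ D, φ d < u := fun d hd => hDu d (subset_closure hd)
    set ex : ↥P → (↥P → ℝ) := fun x => fun j => if x = j then 1 else 0 with hex
    set p : ↥P → ℝ := fun x => φ (ex x) with hp
    have hφ : ∀ w : ↥P → ℝ, φ w = ∑ x, w x * p x := by
      intro w
      conv_lhs => rw [pi_eq_sum_univ w, map_sum]
      apply Finset.sum_congr rfl
      intro x _
      rw [_root_.map_smul, smul_eq_mul]
    -- p is nonneg
    have hpnn : ∀ x, 0 ≤ p x := by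
      intro x
      by_contra hneg
      push_neg at hneg
      set t : ℝ := (|u| + |φ (Φ y₀)| + 1) / (-p x) with ht
      have htpos : 0 < t := div_pos (by positivity) (by linarith)
      have hel : Φ y₀ - t • ex x ∈ D := by
        refine ⟨Φ y₀, subset_convexHull ℝ K ⟨y₀, rfl⟩, ?_⟩
        intro j
        simp only [Pi.sub_apply, Pi.smul_apply, smul_eq_mul, hex]
        have : 0 ≤ t * (if x = j then (1:ℝ) else 0) := by positivity
        linarith
      have hlt := hDu' _ hel
      rw [map_sub, _root_.map_smul, smul_eq_mul] at hlt
      have htp : t * (-p x) = |u| + |φ (Φ y₀)| + 1 :=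
        div_mul_cancel₀ _ (by linarith)
      have h1 : φ (Φ y₀) ≥ -|φ (Φ y₀)| := neg_abs_le _
      have h2 : u ≤ |u| := le_abs_self _
      nlinarith
    -- the two cases
    rcases eq_or_lt_of_le (Finset.sum_nonneg (fun x _ => hpnn x)) with hps | hps
    · have hall : ∀ x : ↥P, p x = 0 := by
        intro x
        have := (Finset.sum_eq_zero_iff_of_nonneg (fun x _ => hpnn x)).1 hps.symm
        exact this x (Finset.mem_univ x)
      have h1 : φ v = 0 := by rw [hφ]; simp [hall]
      have h2 : φ (Φ y₀) = 0 := by rw [hφ]; simp [hall]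
      have := hDu' _ (hKD y₀)
      rw [h2] at this
      linarith
    · -- bounds
      have hbdd : ∀ x : ↥P, ∃ C, ∀ y, |trlog T (g ↑x y)| ≤ C := by
        intro x
        obtain ⟨y1, hy1⟩ := exists_max ((trlog_continuous T (hgc ↑x)).abs)
        exact ⟨_, hy1⟩
      choose Cx hCx using hbdd
      set C₀ : ℝ := (∑ x, |Cx x|) + (∑ x, |Real.log (f ↑x)|) + 1 with hC₀
      have hC₀pos : 0 < C₀ := by positivity
      have htr_le : ∀ (x : ↥P) (y : Y), |trlog T (g ↑x y)| ≤ C₀ := by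
        intro x y
        calc |trlog T (g ↑x y)| ≤ Cx x := hCx x y
          _ ≤ |Cx x| := le_abs_self _
          _ ≤ ∑ x, |Cx x| := Finset.single_le_sum (f := fun i => |Cx i|)
              (fun i _ => abs_nonneg _) (Finset.mem_univ x)
          _ ≤ C₀ := by
              have : (0:ℝ) ≤ ∑ x, |Real.log (f ↑x)| := Finset.sum_nonneg (fun i _ => abs_nonneg _)
              linarith
      have hlf_le : ∀ x : ↥P, |Real.log (f ↑x)| ≤ C₀ := by
        intro x
        calc |Real.log (f ↑x)| ≤ ∑ x : X, |Real.log (f x)| :=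
              Finset.single_le_sum (f := fun i : X => |Real.log (f i)|)
              (fun i _ => abs_nonneg _) (Finset.mem_univ (↑x : X))
          _ ≤ C₀ := by
              have : (0:ℝ) ≤ ∑ x, |Cx x| := Finset.sum_nonneg (fun i _ => abs_nonneg _)
              linarith
      set δ : ℝ := φ v - u with hδ
      have hδpos : 0 < δ := by simp only [hδ]; linarith
      set m : ℝ := (Fintype.card ↥P : ℝ) with hm
      have hmnn : 0 ≤ m := by positivity
      obtain ⟨N₀, hN₀⟩ := exists_nat_gt ((2 * m * C₀) / δ)
      set N : ℕ := N₀ + 1 with hN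
      have hNpos : (0:ℝ) < N := by positivity
      have hNgt : (2 * m * C₀) / δ < N := by
        refine hN₀.trans_le ?_
        exact_mod_cast Nat.le_succ N₀
      have hNδ : 2 * m * C₀ < N * δ := by
        rw [div_lt_iff₀ hδpos] at hNgt
        linarith
      set c' : ↥P → ℕ := fun x => ⌈(N:ℝ) * p x⌉₊ with hc'
      set c : X → ℕ := fun x => if h : x ∈ P then c' ⟨x, h⟩ else 0 with hc
      have hcP : ∀ x : ↥P, c ↑x = c' x := by
        intro x
        rw [hc]
        simp only [x.2, dif_pos]
      have hceil1 : ∀ x : ↥P, (N:ℝ) * p x ≤ c' x := fun x => Nat.le_ceil _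
      have hceil2 : ∀ x : ↥P, (c' x : ℝ) ≤ N * p x + 1 := by
        intro x
        exact le_of_lt (Nat.ceil_lt_add_one (mul_nonneg hNpos.le (hpnn x)))
      -- positivity of total count
      obtain ⟨x₀, -, hx₀⟩ := Finset.exists_lt_of_sum_lt (by simpa using hps :
        (∑ _x : ↥P, (0:ℝ)) < ∑ x : ↥P, p x)
      have hcx₀ : 0 < c' x₀ := Nat.ceil_pos.2 (by positivity)
      have hsumc : ∑ x, c x = ∑ x : ↥P, c' x := by
        calc ∑ x, c x = ∑ x ∈ P, c x :=
              (Finset.sum_subset (Finset.subset_univ P) (fun x _ hx => dif_neg hx)).symm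
          _ = ∑ x : ↥P, c ↑x := (Finset.sum_coe_sort P c).symm
          _ = ∑ x : ↥P, c' x := Finset.sum_congr rfl (fun x _ => hcP x)
      have hcpos : 0 < ∑ x, c x := by
        rw [hsumc]
        exact lt_of_lt_of_le hcx₀
          (Finset.single_le_sum (f := fun i => c' i) (fun i _ => Nat.zero_le _)
            (Finset.mem_univ x₀))
      have hP1 := hB c hcpos
      obtain ⟨ystar, hystar⟩ := exists_max (h := fun y => ∏ x, g x y ^ c x)
        (continuous_finset_prod _ (fun x _ => (hgc x).pow (c x)))
      rw [ciSup_le_max hystar] at hP1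
      have hLHSpos : 0 < ∏ x, f x ^ c x := by
        apply Finset.prod_pos
        intro x _
        rcases Nat.eq_zero_or_pos (c x) with h | h
        · rw [h, pow_zero]; exact one_pos
        · have hxP : x ∈ P := by
            by_contra hxP
            rw [hc] at h; simp [hxP] at h
          have : 0 < f x := (Finset.mem_filter.1 hxP).2
          positivity
      have hgpos : ∀ x : X, 0 < c x → 0 < g x ystar := by
        intro x hcx
        rcases (hg x ystar).lt_or_eq with h | h
        · exact h
        · exfalso
          have : ∏ x, g x ystar ^ c x = 0 :=
            Finset.prod_eq_zero (Finset.mem_univ x) (by rw [← h, zero_pow hcx.ne'])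
          rw [this] at hP1
          linarith
      have hL1 : ∑ x, (c x : ℝ) * Real.log (f x) ≤ ∑ x, (c x : ℝ) * Real.log (g x ystar) := by
        have hfne : ∀ x ∈ Finset.univ, f x ^ c x ≠ (0:ℝ) := by
          intro x _
          rcases Nat.eq_zero_or_pos (c x) with h | h
          · rw [h, pow_zero]; exact one_ne_zero
          · have hxP : x ∈ P := by
              by_contra hxP
              rw [hc] at h; simp [hxP] at h
            exact pow_ne_zero _ (ne_of_gt (Finset.mem_filter.1 hxP).2)
        have hgne : ∀ x ∈ Finset.univ, g x ystar ^ c x ≠ (0:ℝ) := by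
          intro x _
          rcases Nat.eq_zero_or_pos (c x) with h | h
          · rw [h, pow_zero]; exact one_ne_zero
          · exact pow_ne_zero _ (ne_of_gt (hgpos x h))
        have := Real.log_le_log hLHSpos hP1
        rw [Real.log_prod hfne, Real.log_prod hgne] at this
        simpa only [Real.log_pow] using this
      -- restrict both sums to P
      have hrestr : ∀ h : X → ℝ, ∑ x, (c x : ℝ) * h x = ∑ x : ↥P, (c' x : ℝ) * h ↑x := by
        intro h
        calc ∑ x, (c x : ℝ) * h x = ∑ x ∈ P, (c x : ℝ) * h x :=
              (Finset.sum_subset (Finset.subset_univ P)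
                (fun x _ hx => by rw [hc]; simp [hx])).symm
          _ = ∑ x : ↥P, (c ↑x : ℝ) * h ↑x := (Finset.sum_coe_sort P _).symm
          _ = ∑ x : ↥P, (c' x : ℝ) * h ↑x := by
              exact Finset.sum_congr rfl (fun x _ => by rw [hcP x])
      have hS1 : ∑ x : ↥P, (c' x : ℝ) * Real.log (f ↑x) ≤
          ∑ x : ↥P, (c' x : ℝ) * trlog T (g ↑x ystar) := by
        have h1 := hL1
        rw [hrestr (fun x => Real.log (f x)), hrestr (fun x => Real.log (g x ystar))] at h1
        refine h1.trans (Finset.sum_le_sum ?_)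
        intro x _
        rcases Nat.eq_zero_or_pos (c' x) with h | h
        · simp [h]
        · have hgp : 0 < g ↑x ystar := hgpos ↑x (by rw [hcP x]; exact h)
          exact mul_le_mul_of_nonneg_left (log_le_trlog hgp T) (Nat.cast_nonneg _)
      have hLB : (N:ℝ) * φ v - m * C₀ ≤ ∑ x : ↥P, (c' x : ℝ) * Real.log (f ↑x) := by
        have hterm : ∀ x : ↥P,
            (N:ℝ) * p x * Real.log (f ↑x) - C₀ ≤ (c' x : ℝ) * Real.log (f ↑x) := by
          intro x
          have h1 : |(c' x : ℝ) - N * p x| ≤ 1 := by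
            rw [abs_le]
            constructor
            · linarith [hceil1 x]
            · linarith [hceil2 x]
          have h2 := hlf_le x
          have h3 : |((c' x : ℝ) - N * p x) * Real.log (f ↑x)| ≤ 1 * C₀ := by
            rw [abs_mul]
            exact mul_le_mul h1 h2 (abs_nonneg _) zero_le_one
          have h4 : -(1 * C₀) ≤ ((c' x : ℝ) - N * p x) * Real.log (f ↑x) := by
            have := neg_abs_le (((c' x : ℝ) - N * p x) * Real.log (f ↑x))
            linarith
          rw [sub_mul] at h4
          linarith
        have hsum : ∑ x : ↥P, ((N:ℝ) * p x * Real.log (f ↑x) - C₀)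
            = (N:ℝ) * φ v - m * C₀ := by
          rw [Finset.sum_sub_distrib, Finset.sum_const, Finset.card_univ, hφ v,
            Finset.mul_sum, hm]
          simp only [hv, nsmul_eq_mul]
          congr 1
          exact Finset.sum_congr rfl (fun x _ => by ring)
        rw [← hsum]
        exact Finset.sum_le_sum (fun x _ => hterm x)
      have hUB : ∑ x : ↥P, (c' x : ℝ) * trlog T (g ↑x ystar)
          ≤ (N:ℝ) * φ (Φ ystar) + m * C₀ := by
        have hterm : ∀ x : ↥P, (c' x : ℝ) * trlog T (g ↑x ystar)
            ≤ (N:ℝ) * p x * trlog T (g ↑x ystar) + C₀ := by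
          intro x
          have h1 : |(c' x : ℝ) - N * p x| ≤ 1 := by
            rw [abs_le]
            constructor
            · linarith [hceil1 x]
            · linarith [hceil2 x]
          have h2 := htr_le x ystar
          have h3 : |((c' x : ℝ) - N * p x) * trlog T (g ↑x ystar)| ≤ 1 * C₀ := by
            rw [abs_mul]
            exact mul_le_mul h1 h2 (abs_nonneg _) zero_le_one
          have h4 : ((c' x : ℝ) - N * p x) * trlog T (g ↑x ystar) ≤ 1 * C₀ :=
            (le_abs_self _).trans h3
          rw [sub_mul] at h4
          linarith
        have hsum : ∑ x : ↥P, ((N:ℝ) * p x * trlog T (g ↑x ystar) + C₀)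
            = (N:ℝ) * φ (Φ ystar) + m * C₀ := by
          rw [Finset.sum_add_distrib, Finset.sum_const, Finset.card_univ, hφ (Φ ystar),
            Finset.mul_sum, hm]
          simp only [hΦ, nsmul_eq_mul]
          congr 1
          exact Finset.sum_congr rfl (fun x _ => by ring)
        rw [← hsum]
        exact Finset.sum_le_sum (fun x _ => hterm x)
      have hyu : φ (Φ ystar) < u := hDu' _ (hKD ystar)
      have hchain : (N:ℝ) * φ v - m * C₀ ≤ (N:ℝ) * φ (Φ ystar) + m * C₀ :=
        le_trans hLB (le_trans hS1 hUB)
      have h5 : (N:ℝ) * δ ≤ 2 * m * C₀ := by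
        rw [hδ]
        nlinarith
      linarith
  -- extraction of the weights from `v ∈ closure D`
  obtain ⟨d, hdD, hdist⟩ := Metric.mem_closure_iff.1 hvD ε hε
  obtain ⟨cpt, hcpt, hdc⟩ := hdD
  obtain ⟨ι, hι, z, w, hzK, hai, hwpos, hwsum, hwz⟩ :=
    eq_pos_convex_span_of_mem_convexHull hcpt
  haveI hFι : Fintype ι := hι
  have hwsum' : (∑ i : ι, w i) = 1 := by rw [Subsingleton.elim hFι hι]; exact hwsum
  have hwz' : (∑ i : ι, w i • z i) = cpt := by rw [Subsingleton.elim hFι hι]; exact hwz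
  have hcard : Fintype.card ι ≤ k := by
    have h1 : Fintype.card ι ≤ Module.finrank ℝ (↥P → ℝ) + 1 :=
      hai.card_le_finrank_succ.trans (by
        have := Submodule.finrank_le (vectorSpan ℝ (Set.range z))
        omega)
    have h2 : Module.finrank ℝ (↥P → ℝ) = Fintype.card ↥P := by
      simp [Module.finrank_pi]
    have h3 : Fintype.card ↥P ≤ Fintype.card X := by
      rw [Fintype.card_coe]
      exact (Finset.card_le_univ P).trans_eq Finset.card_univ
    rw [hk]
    omega
  set nι := Fintype.card ι with hnι
  set eι : ι ≃ Fin nι := Fintype.equivFin ι with heι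
  have hzK' : ∀ j : ι, ∃ y, Φ y = z j := fun j => hzK ⟨j, rfl⟩
  choose yc hyc using hzK'
  set yv : Fin k → Y := fun i => if h : (i:ℕ) < nι then yc (eι.symm ⟨i, h⟩) else y₀ with hyv
  set wv : Fin k → ℝ := fun i => if h : (i:ℕ) < nι then w (eι.symm ⟨i, h⟩) else 0 with hwv
  refine ⟨yv, wv, ?_, ?_, ?_⟩
  · intro i
    simp only [hwv]
    by_cases h : (i:ℕ) < nι
    · rw [dif_pos h]
      refine ⟨(hwpos _).le, ?_⟩
      calc w (eι.symm ⟨i, h⟩) ≤ ∑ j, w j :=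
            Finset.single_le_sum (f := w) (fun j _ => (hwpos j).le) (Finset.mem_univ _)
        _ = 1 := hwsum'
    · rw [dif_neg h]
      exact ⟨le_rfl, zero_le_one⟩
  · simp only [hwv]
    rw [sum_dite_fin hcard (fun j => w (eι.symm j)), Equiv.sum_comp eι.symm w]
    exact hwsum'
  · intro x hx
    have hxP : x ∈ P := by rw [hP]; simp [hx]
    have h1 : v ⟨x, hxP⟩ - d ⟨x, hxP⟩ ≤ ε := by
      have hd1 := dist_le_pi_dist v d ⟨x, hxP⟩
      rw [Real.dist_eq] at hd1
      have := (le_abs_self (v ⟨x, hxP⟩ - d ⟨x, hxP⟩)).trans hd1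
      linarith
    have h2 : d ⟨x, hxP⟩ ≤ cpt ⟨x, hxP⟩ := hdc ⟨x, hxP⟩
    have h3 : cpt ⟨x, hxP⟩ = ∑ j : ι, w j * z j ⟨x, hxP⟩ := by
      rw [← hwz', Finset.sum_apply]
      exact Finset.sum_congr rfl (fun j _ => by simp)
    have h4 : ∑ i, wv i * trlog T (g x (yv i)) = ∑ j : ι, w j * z j ⟨x, hxP⟩ := by
      have step1 : ∀ i : Fin k, wv i * trlog T (g x (yv i)) =
          if h : (i:ℕ) < nι then
            w (eι.symm ⟨i, h⟩) * trlog T (g x (yc (eι.symm ⟨i, h⟩))) else 0 := by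
        intro i
        simp only [hwv, hyv]
        by_cases h : (i:ℕ) < nι
        · simp only [dif_pos h]
        · simp only [dif_neg h, zero_mul]
      rw [Finset.sum_congr rfl (fun i _ => step1 i)]
      rw [sum_dite_fin hcard
        (fun j : Fin nι => w (eι.symm j) * trlog T (g x (yc (eι.symm j))))]
      rw [Equiv.sum_comp eι.symm (fun j : ι => w j * trlog T (g x (yc j)))]
      refine Finset.sum_congr rfl (fun j _ => ?_)
      congr 1
      have := hyc j
      calc trlog T (g x (yc j)) = Φ (yc j) ⟨x, hxP⟩ := rfl
        _ = z j ⟨x, hxP⟩ := by rw [this]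
    have hlog : Real.log (f x) = v ⟨x, hxP⟩ := rfl
    rw [hlog, h4]
    linarith

end


section Forward
variable {X Y : Type*} [Fintype X]
    [TopologicalSpace Y] [CompactSpace Y] [T2Space Y]
    [MeasurableSpace Y] [BorelSpace Y] [Nonempty Y]

lemma step_B (f : X → ℝ) (g : X → Y → ℝ)
    (H : ∀ n : ℕ, 0 < n → ∀ τ : (Fin n → X) → ℝ, (∀ xs, τ xs ∈ Set.Icc (0:ℝ) 1) →
        ∑ xs : Fin n → X, (∏ j, f (xs j)) * τ xs ≤
          ⨆ y : Y, ∑ xs : Fin n → X, (∏ j, g (xs j) y) * τ xs)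
    (c : X → ℕ) (hc : 0 < ∑ x, c x) :
    ∏ x, f x ^ c x ≤ ⨆ y, ∏ x, g x y ^ c x := by
  classical
  set n := ∑ x, c x with hn
  have hcard : Fintype.card (Σ x : X, Fin (c x)) = n := by simp [Fintype.card_sigma, hn]
  let e := Fintype.equivFinOfCardEq hcard
  set xs : Fin n → X := fun j => (e.symm j).1 with hxs
  have key : ∀ h : X → ℝ, ∏ j, h (xs j) = ∏ x, h x ^ c x := by
    intro h
    have h1 : ∏ j, h (xs j) = ∏ p : Σ x : X, Fin (c x), h p.1 :=
      Equiv.prod_comp e.symm (fun s : Σ x : X, Fin (c x) => h s.1)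
    rw [h1, ← Finset.univ_sigma_univ, Finset.prod_sigma]
    simp
  have := H n hc (fun v => if v = xs then 1 else 0) (by
    intro v; by_cases h : v = xs <;> simp [h])
  simp only [mul_ite, mul_one, mul_zero, Finset.sum_ite_eq', Finset.mem_univ, if_true] at this
  calc ∏ x, f x ^ c x = ∏ j, f (xs j) := (key f).symm
    _ ≤ ⨆ y : Y, ∏ j, g (xs j) y := this
    _ = ⨆ y, ∏ x, g x y ^ c x := iSup_congr (fun y => key (fun x => g x y))


lemma forward_direction (f : X → ℝ) (g : X → Y → ℝ)
    (hf : ∀ x, 0 ≤ f x) (hg : ∀ x y, 0 ≤ g x y) (hgc : ∀ x, Continuous (g x))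
    (H : ∀ n : ℕ, 0 < n → ∀ τ : (Fin n → X) → ℝ, (∀ xs, τ xs ∈ Set.Icc (0:ℝ) 1) →
        ∑ xs : Fin n → X, (∏ j, f (xs j)) * τ xs ≤
          ⨆ y : Y, ∑ xs : Fin n → X, (∏ j, g (xs j) y) * τ xs) :
    ∃ ν : Measure Y, IsProbabilityMeasure ν ∧ ∀ x, geomBound ν (f x) (g x) := by
  classical
  set k := Fintype.card X + 1 with hk
  have hB := step_B f g H
  haveI : CompactSpace (Set.Icc (0:ℝ) 1) := isCompact_iff_compactSpace.mp isCompact_Icc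
  -- the compact space of candidate data
  set Z := (Fin k → Y) × (Fin k → Set.Icc (0:ℝ) 1) with hZ
  set S : ℕ → Set Z := fun n => {z | (∑ i, (z.2 i : ℝ)) = 1 ∧
      ∀ x, 0 < f x →
        Real.log (f x) ≤ 1/(n+1) + ∑ i, (z.2 i : ℝ) * trlog n (g x (z.1 i))} with hS
  have hSclosed : ∀ n, IsClosed (S n) := by
    intro n
    have hc1 : Continuous fun z : Z => ∑ i, (z.2 i : ℝ) :=
      continuous_finset_sum _ (fun i _ =>
        continuous_subtype_val.comp ((continuous_apply i).comp continuous_snd))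
    have hrw : S n = {z : Z | (∑ i, (z.2 i : ℝ)) = 1} ∩
        ⋂ (x : X) (_ : 0 < f x),
          {z : Z | Real.log (f x) ≤ 1/(n+1) + ∑ i, (z.2 i : ℝ) * trlog n (g x (z.1 i))} := by
      ext z
      simp only [hS, Set.mem_setOf_eq, Set.mem_inter_iff, Set.mem_iInter]
    rw [hrw]
    apply IsClosed.inter (isClosed_eq hc1 continuous_const)
    apply isClosed_iInter
    intro x
    apply isClosed_iInter
    intro hx
    apply isClosed_le continuous_const
    apply Continuous.add continuous_const
    apply continuous_finset_sum _ (fun i _ => ?_)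
    exact (continuous_subtype_val.comp ((continuous_apply i).comp continuous_snd)).mul
      ((trlog_continuous _ (hgc x)).comp ((continuous_apply i).comp continuous_fst))
  have hSnonempty : ∀ n, (S n).Nonempty := by
    intro n
    obtain ⟨yv, wv, hIcc, hsum, hineq⟩ := exists_weights f g hg hgc hB (n : ℝ)
      (by positivity : (0:ℝ) < 1/(n+1))
    exact ⟨(yv, fun i => ⟨wv i, hIcc i⟩), hsum, hineq⟩
  have hSanti : ∀ m n : ℕ, m ≤ n → S n ⊆ S m := by
    intro m n hmn z hz
    refine ⟨hz.1, fun x hx => ?_⟩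
    refine (hz.2 x hx).trans (add_le_add ?_ ?_)
    · apply one_div_le_one_div_of_le (by positivity)
      have : (m:ℝ) ≤ (n:ℝ) := Nat.cast_le.2 hmn
      linarith
    · refine Finset.sum_le_sum (fun i _ => ?_)
      exact mul_le_mul_of_nonneg_left (trlog_anti (Nat.cast_le.2 hmn)) (z.2 i).2.1
  obtain ⟨z, hz⟩ := IsCompact.nonempty_iInter_of_directed_nonempty_isCompact_isClosed S
    (fun a b => ⟨max a b, hSanti a _ (le_max_left a b), hSanti b _ (le_max_right a b)⟩)
    hSnonempty (fun n => (hSclosed n).isCompact) hSclosed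
  rw [Set.mem_iInter] at hz
  set yv : Fin k → Y := z.1 with hyv
  set wv : Fin k → ℝ := fun i => (z.2 i : ℝ) with hwv
  have hwnn : ∀ i, 0 ≤ wv i := fun i => (z.2 i).2.1
  have hwle : ∀ i, wv i ≤ 1 := fun i => (z.2 i).2.2
  have hw1 : (∑ i, wv i) = 1 := (hz 0).1
  have hineq : ∀ (n : ℕ) x, 0 < f x →
      Real.log (f x) ≤ 1/(n+1) + ∑ i, wv i * trlog n (g x (yv i)) :=
    fun n x hx => (hz n).2 x hx
  -- the measure
  set ν : Measure Y := ∑ i : Fin k, ENNReal.ofReal (wv i) • Measure.dirac (yv i) with hν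
  have hmeas1 : ∀ x, Measurable fun y => ENNReal.ofReal (Real.log (g x y)) := fun x =>
    ENNReal.measurable_ofReal.comp (Real.measurable_log.comp (hgc x).measurable)
  have hmeas2 : ∀ x, Measurable fun y =>
      (if g x y = 0 then (⊤ : ℝ≥0∞) else ENNReal.ofReal (-Real.log (g x y))) := by
    intro x
    apply Measurable.ite (measurableSet_eq_fun (hgc x).measurable measurable_const)
      measurable_const
    exact ENNReal.measurable_ofReal.comp ((Real.measurable_log.comp (hgc x).measurable).neg)
  have hprob : IsProbabilityMeasure ν := by
    constructor
    rw [hν, Measure.finset_sum_apply]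
    have : ∀ i : Fin k, (ENNReal.ofReal (wv i) • Measure.dirac (yv i)) Set.univ
        = ENNReal.ofReal (wv i) := by
      intro i
      rw [Measure.smul_apply, smul_eq_mul, measure_univ, mul_one]
    rw [Finset.sum_congr rfl (fun i _ => this i), ← ENNReal.ofReal_sum_of_nonneg
      (fun i _ => hwnn i), hw1, ENNReal.ofReal_one]
  refine ⟨ν, hprob, fun x => ?_⟩
  have hplus : logPlusInt ν (g x)
      = ∑ i, ENNReal.ofReal (wv i) * ENNReal.ofReal (Real.log (g x (yv i))) := by
    rw [logPlusInt, hν, lintegral_finset_sum_measure]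
    refine Finset.sum_congr rfl (fun i _ => ?_)
    rw [lintegral_smul_measure, lintegral_dirac' _ (hmeas1 x), smul_eq_mul]
  have hplusne : logPlusInt ν (g x) ≠ ⊤ := by
    rw [hplus]
    exact (ENNReal.sum_lt_top.2 (fun i _ =>
      ENNReal.mul_lt_top ENNReal.ofReal_lt_top ENNReal.ofReal_lt_top)).ne
  rcases eq_or_lt_of_le (hf x) with hx0 | hx
  · -- f x = 0 : trivial bound
    exact ⟨hplusne, fun _ => hx0.symm.le, fun _ => hx0.symm.le.trans (Real.exp_pos _).le⟩
  -- case 0 < f x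
  have hsupp : ∀ i, 0 < wv i → 0 < g x (yv i) := by
    intro i0 hwi0
    rcases (hg x (yv i0)).lt_or_eq with h | h
    · exact h
    · exfalso
      set B : ℝ := ∑ i, |trlog 0 (g x (yv i))| with hBdef
      have key : ∀ n : ℕ,
          Real.log (f x) ≤ 1 + (B - |trlog 0 (g x (yv i0))|) + wv i0 * (-(n:ℝ)) := by
        intro n
        have h1 := hineq n x hx
        have hsplit : ∑ i, wv i * trlog (n:ℝ) (g x (yv i))
            = wv i0 * trlog (n:ℝ) (g x (yv i0))
              + ∑ i ∈ Finset.univ.erase i0, wv i * trlog (n:ℝ) (g x (yv i)) :=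
          (Finset.add_sum_erase _ _ (Finset.mem_univ i0)).symm
        have h3 : ∑ i ∈ Finset.univ.erase i0, wv i * trlog (n:ℝ) (g x (yv i))
            ≤ ∑ i ∈ Finset.univ.erase i0, |trlog 0 (g x (yv i))| := by
          refine Finset.sum_le_sum (fun i _ => ?_)
          have ha : trlog (n:ℝ) (g x (yv i)) ≤ trlog 0 (g x (yv i)) :=
            trlog_anti (by positivity)
          calc wv i * trlog (n:ℝ) (g x (yv i)) ≤ wv i * trlog 0 (g x (yv i)) :=
                mul_le_mul_of_nonneg_left ha (hwnn i)
            _ ≤ |wv i * trlog 0 (g x (yv i))| := le_abs_self _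
            _ = wv i * |trlog 0 (g x (yv i))| := by rw [abs_mul, abs_of_nonneg (hwnn i)]
            _ ≤ 1 * |trlog 0 (g x (yv i))| :=
                mul_le_mul_of_nonneg_right (hwle i) (abs_nonneg _)
            _ = |trlog 0 (g x (yv i))| := one_mul _
        have h4 : ∑ i ∈ Finset.univ.erase i0, |trlog 0 (g x (yv i))|
            = B - |trlog 0 (g x (yv i0))| := by
          rw [hBdef, ← Finset.add_sum_erase _ _ (Finset.mem_univ i0)]
          ring
        have h5 : trlog (n:ℝ) (g x (yv i0)) = -(n:ℝ) := by rw [← h, trlog_zero]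
        have h6 : 1/((n:ℝ)+1) ≤ 1 := by
          rw [div_le_one (by positivity)]
          have : (0:ℝ) ≤ n := Nat.cast_nonneg n
          linarith
        rw [hsplit, h5] at h1
        linarith
      obtain ⟨n, hn⟩ := exists_nat_gt
        ((1 + (B - |trlog 0 (g x (yv i0))|) - Real.log (f x)) / wv i0)
      have hk2 := key n
      rw [div_lt_iff₀ hwi0] at hn
      nlinarith
  have hm2 : Measurable (fun y => @ite _ (g x y = 0) (Classical.propDecidable _)
      (⊤:ℝ≥0∞) (ENNReal.ofReal (-Real.log (g x y)))) := by
    apply Measurable.ite (measurableSet_eq_fun (hgc x).measurable measurable_const)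
      measurable_const
    apply Measurable.comp ENNReal.measurable_ofReal
    exact (Real.measurable_log.comp (hgc x).measurable).neg
  have hminus : logMinusInt ν (g x) = ∑ i, ENNReal.ofReal (wv i) *
      (@ite _ (g x (yv i) = 0) (Classical.propDecidable _)
        (⊤:ℝ≥0∞) (ENNReal.ofReal (-Real.log (g x (yv i))))) := by
    rw [logMinusInt, hν, lintegral_finset_sum_measure]
    refine Finset.sum_congr rfl (fun i _ => ?_)
    rw [lintegral_smul_measure, lintegral_dirac' _ hm2, smul_eq_mul]
  have hminusne : logMinusInt ν (g x) ≠ ⊤ := by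
    rw [hminus]
    refine (ENNReal.sum_lt_top.2 (fun i _ => ?_)).ne
    rcases eq_or_lt_of_le (hwnn i) with h0 | hpos
    · rw [← h0, ENNReal.ofReal_zero, zero_mul]
      exact ENNReal.zero_lt_top
    · rw [if_neg (hsupp i hpos).ne']
      exact ENNReal.mul_lt_top ENNReal.ofReal_lt_top ENNReal.ofReal_lt_top
  have hlog : Real.log (f x) ≤ ∑ i, wv i * Real.log (g x (yv i)) := by
    set R : ℝ := ∑ i, |Real.log (g x (yv i))| with hR
    have hconv : ∀ n : ℕ, R ≤ n →
        ∑ i, wv i * trlog (n:ℝ) (g x (yv i)) = ∑ i, wv i * Real.log (g x (yv i)) := by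
      intro n hn
      refine Finset.sum_congr rfl (fun i _ => ?_)
      rcases eq_or_lt_of_le (hwnn i) with h0 | hpos
      · rw [← h0, zero_mul, zero_mul]
      · congr 1
        apply trlog_eq_log
        have hs1 := Finset.single_le_sum (f := fun i => |Real.log (g x (yv i))|)
          (fun i _ => abs_nonneg _) (Finset.mem_univ i)
        have hs2 := neg_abs_le (Real.log (g x (yv i)))
        have h2 : Real.exp (-(n:ℝ)) ≤ Real.exp (Real.log (g x (yv i))) :=
          Real.exp_le_exp.2 (by simp only [hR] at hn; linarith)
        rwa [Real.exp_log (hsupp i hpos)] at h2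
    refine le_of_forall_pos_le_add ?_
    intro η hη
    obtain ⟨n, hn1⟩ := exists_nat_ge (max R (1/η))
    have hnR : R ≤ n := (le_max_left _ _).trans hn1
    have hnη : 1/η ≤ n := (le_max_right _ _).trans hn1
    have h1 := hineq n x hx
    rw [hconv n hnR] at h1
    have h2 : 1/((n:ℝ)+1) ≤ η := by
      rw [div_le_iff₀ (by positivity)]
      rw [div_le_iff₀ hη] at hnη
      nlinarith
    linarith
  refine ⟨hplusne, fun hcontra => absurd hcontra hminusne, fun _ => ?_⟩
  have hplusR : (logPlusInt ν (g x)).toReal = ∑ i, wv i * max (Real.log (g x (yv i))) 0 := by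
    rw [hplus, ENNReal.toReal_sum (fun i _ =>
      ENNReal.mul_ne_top ENNReal.ofReal_ne_top ENNReal.ofReal_ne_top)]
    refine Finset.sum_congr rfl (fun i _ => ?_)
    rw [ENNReal.toReal_mul, ENNReal.toReal_ofReal (hwnn i), ENNReal.toReal_ofReal']
  have hminusR : (logMinusInt ν (g x)).toReal
      = ∑ i, wv i * max (-Real.log (g x (yv i))) 0 := by
    rw [hminus, ENNReal.toReal_sum (fun i _ => ?_)]
    · refine Finset.sum_congr rfl (fun i _ => ?_)
      rcases eq_or_lt_of_le (hwnn i) with h0 | hpos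
      · rw [← h0]
        simp
      · rw [if_neg (hsupp i hpos).ne', ENNReal.toReal_mul,
          ENNReal.toReal_ofReal (hwnn i), ENNReal.toReal_ofReal']
    · rcases eq_or_lt_of_le (hwnn i) with h0 | hpos
      · rw [← h0, ENNReal.ofReal_zero, zero_mul]
        exact ENNReal.zero_ne_top
      · rw [if_neg (hsupp i hpos).ne']
        exact ENNReal.mul_ne_top ENNReal.ofReal_ne_top ENNReal.ofReal_ne_top
  have hfinal : (logPlusInt ν (g x)).toReal - (logMinusInt ν (g x)).toReal
      = ∑ i, wv i * Real.log (g x (yv i)) := by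
    rw [hplusR, hminusR, ← Finset.sum_sub_distrib]
    refine Finset.sum_congr rfl (fun i _ => ?_)
    rw [← mul_sub, max_zero_sub_max_neg_zero_eq_self]
  rw [hfinal]
  calc f x = Real.exp (Real.log (f x)) := (Real.exp_log hx).symm
    _ ≤ _ := Real.exp_le_exp.2 hlog

end Forward

section Backward
variable {X Y : Type*} [Fintype X]
    [TopologicalSpace Y] [CompactSpace Y] [T2Space Y]
    [MeasurableSpace Y] [BorelSpace Y] [Nonempty Y]

lemma cont_integrable (ν : Measure Y) [IsFiniteMeasure ν] {h : Y → ℝ} (hc : Continuous h) :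
    Integrable h ν :=
  hc.integrable_of_hasCompactSupport
    (IsCompact.of_isClosed_subset isCompact_univ (isClosed_tsupport h) (Set.subset_univ _))

lemma backward_direction (f : X → ℝ) (g : X → Y → ℝ)
    (hf : ∀ x, 0 ≤ f x) (hg : ∀ x y, 0 ≤ g x y) (hgc : ∀ x, Continuous (g x))
    (ν : Measure Y) (hprob : IsProbabilityMeasure ν)
    (hgb : ∀ x, geomBound ν (f x) (g x)) :
    ∀ n : ℕ, 0 < n → ∀ τ : (Fin n → X) → ℝ, (∀ xs, τ xs ∈ Set.Icc (0:ℝ) 1) →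
        ∑ xs : Fin n → X, (∏ j, f (xs j)) * τ xs ≤
          ⨆ y : Y, ∑ xs : Fin n → X, (∏ j, g (xs j) y) * τ xs := by
  classical
  -- per-x facts, for x with 0 < f x
  have hmlog : ∀ x, Measurable fun y => Real.log (g x y) :=
    fun x => Real.measurable_log.comp (hgc x).measurable
  have hxfacts : ∀ x, 0 < f x →
      (∀ᵐ y ∂ν, g x y ≠ 0) ∧ Integrable (fun y => Real.log (g x y)) ν ∧
        f x ≤ Real.exp (∫ y, Real.log (g x y) ∂ν) := by
    intro x hx
    obtain ⟨hplusne, hmtop, hmne⟩ := hgb x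
    have hminusne : logMinusInt ν (g x) ≠ ⊤ := by
      intro h
      exact absurd (hmtop h) (not_le.2 hx)
    have hZm : MeasurableSet {y | g x y = 0} :=
      measurableSet_eq_fun (hgc x).measurable measurable_const
    have hZnull : ν {y | g x y = 0} = 0 := by
      by_contra hpos
      apply hminusne
      have h1 : (⊤:ℝ≥0∞) * ν {y | g x y = 0} ≤ logMinusInt ν (g x) := by
        rw [logMinusInt]
        calc (⊤:ℝ≥0∞) * ν {y | g x y = 0}
            = ∫⁻ _ in {y | g x y = 0}, (⊤:ℝ≥0∞) ∂ν := by rw [setLIntegral_const]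
          _ = ∫⁻ y in {y | g x y = 0},
              (if g x y = 0 then (⊤:ℝ≥0∞) else ENNReal.ofReal (-Real.log (g x y))) ∂ν := by
              apply setLIntegral_congr_fun hZm
              exact (fun y hy => (if_pos hy).symm)
          _ ≤ ∫⁻ y, (if g x y = 0 then (⊤:ℝ≥0∞)
                else ENNReal.ofReal (-Real.log (g x y))) ∂ν :=
              lintegral_mono' Measure.restrict_le_self le_rfl
      rw [ENNReal.top_mul hpos] at h1
      exact top_le_iff.mp h1
    have hae : ∀ᵐ y ∂ν, g x y ≠ 0 := by
      rw [ae_iff]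
      convert hZnull using 2
      simp [not_not]
    have hminus_eq : (∫⁻ y, ENNReal.ofReal (-Real.log (g x y)) ∂ν) = logMinusInt ν (g x) := by
      rw [logMinusInt]
      apply lintegral_congr_ae
      filter_upwards [hae] with y hy
      rw [if_neg hy]
    have hInt : Integrable (fun y => Real.log (g x y)) ν := by
      refine ⟨(hmlog x).aestronglyMeasurable, ?_⟩
      rw [hasFiniteIntegral_iff_norm]
      have hb : ∀ y, ENNReal.ofReal ‖Real.log (g x y)‖
          ≤ ENNReal.ofReal (Real.log (g x y)) + ENNReal.ofReal (-Real.log (g x y)) := by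
        intro y
        rcases le_total 0 (Real.log (g x y)) with h | h
        · rw [Real.norm_eq_abs, abs_of_nonneg h]
          exact le_add_right le_rfl
        · rw [Real.norm_eq_abs, abs_of_nonpos h]
          exact le_add_left le_rfl
      calc ∫⁻ y, ENNReal.ofReal ‖Real.log (g x y)‖ ∂ν
          ≤ ∫⁻ y, (ENNReal.ofReal (Real.log (g x y))
              + ENNReal.ofReal (-Real.log (g x y))) ∂ν := lintegral_mono hb
        _ = logPlusInt ν (g x) + ∫⁻ y, ENNReal.ofReal (-Real.log (g x y)) ∂ν := by
            rw [lintegral_add_left (Measurable.ennreal_ofReal (hmlog x))]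
            rfl
        _ < ⊤ := by
            rw [hminus_eq]
            exact ENNReal.add_lt_top.2 ⟨hplusne.lt_top, hminusne.lt_top⟩
    have hval : ∫ y, Real.log (g x y) ∂ν
        = (logPlusInt ν (g x)).toReal - (logMinusInt ν (g x)).toReal := by
      rw [integral_eq_lintegral_pos_part_sub_lintegral_neg_part hInt]
      rw [← hminus_eq]
      rfl
    refine ⟨hae, hInt, ?_⟩
    rw [hval]
    exact hmne hminusne
  intro n hn τ hτ
  haveI := hprob
  set Gs : (Fin n → X) → Y → ℝ := fun xs y => ∏ j, g (xs j) y with hGs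
  have hGscont : ∀ xs, Continuous (Gs xs) :=
    fun xs => continuous_finset_prod _ (fun j _ => hgc (xs j))
  have hGsint : ∀ xs, Integrable (Gs xs) ν := fun xs => cont_integrable ν (hGscont xs)
  have hGsnn : ∀ xs y, 0 ≤ Gs xs y :=
    fun xs y => Finset.prod_nonneg (fun j _ => hg (xs j) y)
  -- key per-sequence estimate
  have hkey : ∀ xs : Fin n → X, (∀ j, 0 < f (xs j)) →
      (∏ j, f (xs j)) ≤ ∫ y, Gs xs y ∂ν := by
    intro xs hall
    have haeG : ∀ᵐ y ∂ν, 0 < Gs xs y := by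
      have h1 : ∀ᵐ y ∂ν, ∀ j, g (xs j) y ≠ 0 :=
        (ae_all_iff).2 (fun j => (hxfacts (xs j) (hall j)).1)
      filter_upwards [h1] with y hy
      exact Finset.prod_pos (fun j _ => lt_of_le_of_ne (hg (xs j) y) (Ne.symm (hy j)))
    have haeLog : (fun y => ∑ j, Real.log (g (xs j) y)) =ᵐ[ν] fun y => Real.log (Gs xs y) := by
      have h1 : ∀ᵐ y ∂ν, ∀ j, g (xs j) y ≠ 0 :=
        (ae_all_iff).2 (fun j => (hxfacts (xs j) (hall j)).1)
      filter_upwards [h1] with y hy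
      exact (Real.log_prod (fun j _ => hy j)).symm
    have hIntSum : Integrable (fun y => ∑ j, Real.log (g (xs j) y)) ν :=
      integrable_finset_sum _ (fun j _ => (hxfacts (xs j) (hall j)).2.1)
    have hIntLogG : Integrable (fun y => Real.log (Gs xs y)) ν := hIntSum.congr haeLog
    set a : ℝ := ∫ y, Gs xs y ∂ν with ha
    have ha0 : 0 < a := by
      rcases (integral_nonneg (f := Gs xs) (fun y => hGsnn xs y)).lt_or_eq with h | h
      · exact h
      · exfalso
        have hzero : Gs xs =ᵐ[ν] 0 :=
          (integral_eq_zero_iff_of_nonneg (fun y => hGsnn xs y) (hGsint xs)).1 h.symm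
        obtain ⟨y, hy1, hy2⟩ := (haeG.and hzero).exists
        rw [Pi.zero_apply] at hy2
        rw [hy2] at hy1
        exact lt_irrefl 0 hy1
    have hJensen : ∫ y, Real.log (Gs xs y) ∂ν ≤ Real.log a := by
      have hI2 : Integrable (fun y => Gs xs y / a) ν := (hGsint xs).div_const a
      have hI1 : Integrable (fun y => Gs xs y / a - 1) ν := hI2.sub (integrable_const 1)
      have hIntRHS : Integrable (fun y => Gs xs y / a - 1 + Real.log a) ν :=
        hI1.add (integrable_const _)
      have hptwise : ∀ᵐ y ∂ν, Real.log (Gs xs y) ≤ Gs xs y / a - 1 + Real.log a := by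
        filter_upwards [haeG] with y hy
        have h1 := Real.log_le_sub_one_of_pos (div_pos hy ha0)
        rw [Real.log_div hy.ne' ha0.ne'] at h1
        linarith
      calc ∫ y, Real.log (Gs xs y) ∂ν ≤ ∫ y, (Gs xs y / a - 1 + Real.log a) ∂ν :=
            integral_mono_ae hIntLogG hIntRHS hptwise
        _ = ((∫ y, Gs xs y ∂ν) / a - 1) + Real.log a := by
            rw [integral_add hI1 (integrable_const _), integral_sub hI2
              (integrable_const 1), integral_div, integral_const, integral_const]
            simp [measure_univ]
        _ = Real.log a := by
            rw [← ha, div_self ha0.ne']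
            ring
    calc ∏ j, f (xs j) ≤ ∏ j, Real.exp (∫ y, Real.log (g (xs j) y) ∂ν) :=
          Finset.prod_le_prod (fun j _ => hf (xs j))
            (fun j _ => (hxfacts (xs j) (hall j)).2.2)
      _ = Real.exp (∑ j, ∫ y, Real.log (g (xs j) y) ∂ν) := (Real.exp_sum _ _).symm
      _ = Real.exp (∫ y, ∑ j, Real.log (g (xs j) y) ∂ν) := by
          rw [integral_finset_sum _ (fun j _ => (hxfacts (xs j) (hall j)).2.1)]
      _ = Real.exp (∫ y, Real.log (Gs xs y) ∂ν) := by
          rw [integral_congr_ae haeLog]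
      _ ≤ Real.exp (Real.log a) := Real.exp_le_exp.2 hJensen
      _ = a := Real.exp_log ha0
  -- assembly
  have hterm : ∀ xs : Fin n → X,
      (∏ j, f (xs j)) * τ xs ≤ (∫ y, Gs xs y ∂ν) * τ xs := by
    intro xs
    apply mul_le_mul_of_nonneg_right _ (hτ xs).1
    by_cases hall : ∀ j, 0 < f (xs j)
    · exact hkey xs hall
    · push_neg at hall
      obtain ⟨j, hj⟩ := hall
      have hj0 : f (xs j) = 0 := le_antisymm hj (hf (xs j))
      have : (∏ j, f (xs j)) = 0 := Finset.prod_eq_zero (Finset.mem_univ j) hj0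
      rw [this]
      exact integral_nonneg (fun y => hGsnn xs y)
  calc ∑ xs : Fin n → X, (∏ j, f (xs j)) * τ xs
      ≤ ∑ xs : Fin n → X, (∫ y, Gs xs y ∂ν) * τ xs := Finset.sum_le_sum (fun xs _ => hterm xs)
    _ = ∫ y, ∑ xs : Fin n → X, Gs xs y * τ xs ∂ν := by
        rw [integral_finset_sum _ (fun xs _ => (hGsint xs).mul_const (τ xs))]
        exact Finset.sum_congr rfl (fun xs _ => (integral_mul_const (τ xs) (Gs xs)).symm)
    _ ≤ ⨆ y : Y, ∑ xs : Fin n → X, (∏ j, g (xs j) y) * τ xs := by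
        have hc : Continuous fun y => ∑ xs : Fin n → X, Gs xs y * τ xs :=
          continuous_finset_sum _ (fun xs _ => (hGscont xs).mul continuous_const)
        obtain ⟨y0, hy0⟩ := exists_max hc
        calc ∫ y, ∑ xs : Fin n → X, Gs xs y * τ xs ∂ν
            ≤ ∫ _, (∑ xs : Fin n → X, Gs xs y0 * τ xs) ∂ν :=
              integral_mono (cont_integrable ν hc) (integrable_const _) hy0
          _ = ∑ xs : Fin n → X, Gs xs y0 * τ xs := by simp [measure_univ]
          _ ≤ ⨆ y : Y, ∑ xs : Fin n → X, (∏ j, g (xs j) y) * τ xs :=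
              le_ciSup ⟨∑ xs : Fin n → X, Gs xs y0 * τ xs,
                Set.forall_mem_range.2 hy0⟩ y0

end Backward


/-- **Statement 2.**  Let `X` be a finite set, `Y` a compact Hausdorff space,
`f : X → [0,∞)`, and `g : X × Y → [0,∞)` with each `g(x,·)` continuous.  Then the
inequality `∑_{x⃗} f^{⊗n}(x⃗) τ(x⃗) ≤ sup_y ∑_{x⃗} g_y^{⊗n}(x⃗) τ(x⃗)` holds for every
`n ≥ 1` and every `τ : X^n → [0,1]` if and only if there is a Borel probability measure
`ν` on `Y` such that `f(x) ≤ exp (∫_Y log g(x,y) dν(y))` for every `x ∈ X`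
(conventions: `log 0 = -∞`, `exp (-∞) = 0`). -/
theorem all_copy_test_bounds_iff_geometric_mean
    {X Y : Type*} [Fintype X]
    [TopologicalSpace Y] [CompactSpace Y] [T2Space Y]
    [MeasurableSpace Y] [BorelSpace Y] [Nonempty Y]
    (f : X → ℝ) (g : X → Y → ℝ)
    (hf : ∀ x, 0 ≤ f x) (hg : ∀ x y, 0 ≤ g x y)
    (hgc : ∀ x, Continuous (g x)) :
    (∀ n : ℕ, 0 < n → ∀ τ : (Fin n → X) → ℝ, (∀ xs, τ xs ∈ Set.Icc (0:ℝ) 1) →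
        ∑ xs : Fin n → X, (∏ j, f (xs j)) * τ xs ≤
          ⨆ y : Y, ∑ xs : Fin n → X, (∏ j, g (xs j) y) * τ xs) ↔
      (∃ ν : Measure Y, IsProbabilityMeasure ν ∧ ∀ x, geomBound ν (f x) (g x)) := by
  constructor
  · exact fun H => forward_direction f g hf hg hgc H
  · rintro ⟨ν, hprob, hgb⟩
    exact backward_direction f g hf hg hgc ν hprob hgb
end
end

section
/- Fix t ∈ (0,1). Then: (a) for every z ∈ (0,∞) there exist positive semidefinite operators A₁, A₂ on ℂ² such that (A₁^{t/(2z)} A₂^{(1-t)/z} A₁^{t/(2z)})^z is not ≤ A₂ #_t A₁ in the Löwner order; (b) for every z ∈ (0,∞) there exist positive semidefinite operators A₁, A₂ on ℂ² such that (A₂^{(1-t)/(2z)} A₁^{t/z} A₂^{(1-t)/(2z)})^z is not ≤ A₂ #_t A₁; (c) for every z ∈ (1,∞) there exist positive semidefinite operators A₁, A₂ on ℂ² such that (A₂^{1/z} #_t A₁^{1/z})^z is not ≤ A₂ #_t A₁; (d) there exist positive semidefinite operators A₁, A₂ on ℂ² such that the limit lim_{z→∞} (A₂^{1/z} #_t A₁^{1/z})^z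 exists and is not ≤ A₂ #_t A₁ (for positive definite arguments this limit equals exp(t log A₁ + (1-t) log A₂)). -/
open MeasureTheory Filter Matrix
open scoped ComplexOrder ENNReal NNReal

noncomputable section

/-- `n`-fold tensor (Kronecker) power of a matrix: the entries of `A^{⊗n}` are
`(A^{⊗n})_{i j} = ∏_k A_{i_k j_k}`. -/
def tensorPow {ι : Type} [Fintype ι] (A : Matrix ι ι ℂ) (n : ℕ) :
    Matrix (Fin n → ι) (Fin n → ι) ℂ :=
  Matrix.of fun i j => ∏ k, A (i k) (j k)

/-- Real power of a (Hermitian) matrix, via the continuous functional calculus. -/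
def mpow {ι : Type} [Fintype ι] [DecidableEq ι] (A : Matrix ι ι ℂ) (t : ℝ) :
    Matrix ι ι ℂ :=
  cfc (fun x : ℝ => x ^ t) A

/-- The `t`-weighted Kubo–Ando geometric mean `B #_t A`, defined as the limit as `ε ↓ 0` of
`(B+εI)^{1/2}((B+εI)^{-1/2}(A+εI)(B+εI)^{-1/2})^t(B+εI)^{1/2}`. -/
def kaMean {ι : Type} [Fintype ι] [DecidableEq ι] (t : ℝ) (A B : Matrix ι ι ℂ) :
    Matrix ι ι ℂ :=
  limUnder (nhdsWithin 0 (Set.Ioi (0:ℝ))) fun ε : ℝ =>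
    mpow (B + (ε : ℂ) • 1) (1/2) *
      mpow (mpow (B + (ε : ℂ) • 1) (-(1/2)) * (A + (ε : ℂ) • 1) *
        mpow (B + (ε : ℂ) • 1) (-(1/2))) t *
      mpow (B + (ε : ℂ) • 1) (1/2)

/-- The Löwner order on matrices: `loewner A B` iff `B - A` is positive semidefinite. -/
def loewner {ι : Type} [Fintype ι] (A B : Matrix ι ι ℂ) : Prop :=
  (B - A).PosSemidef

end

noncomputable section
open Filter Topology

/-- 2x2 complex matrix with real entries. -/
def rmat (a b c d : ℝ) : Matrix (Fin 2) (Fin 2) ℂ := !![(a:ℂ), b; c, d]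

lemma rmat_add (a b c d a' b' c' d' : ℝ) :
    rmat a b c d + rmat a' b' c' d' = rmat (a+a') (b+b') (c+c') (d+d') := by
  ext i j
  fin_cases i <;> fin_cases j <;> simp [rmat, Matrix.add_apply]

lemma rmat_mul (a b c d a' b' c' d' : ℝ) :
    rmat a b c d * rmat a' b' c' d' =
      rmat (a*a'+b*c') (a*b'+b*d') (c*a'+d*c') (c*b'+d*d') := by
  ext i j
  rw [Matrix.mul_apply]
  fin_cases i <;> fin_cases j <;> simp [rmat, Fin.sum_univ_two] <;> push_cast <;> ring

lemma rmat_smul (r a b c d : ℝ) :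
    r • rmat a b c d = rmat (r*a) (r*b) (r*c) (r*d) := by
  ext i j
  fin_cases i <;> fin_cases j <;> simp [rmat, Complex.real_smul] <;> push_cast <;> ring

lemma rmat_one : (1 : Matrix (Fin 2) (Fin 2) ℂ) = rmat 1 0 0 1 := by
  ext i j
  fin_cases i <;> fin_cases j <;> simp [rmat, Matrix.one_apply]

lemma rmat_selfAdjoint (a b d : ℝ) : _root_.IsSelfAdjoint (rmat a b b d) := by
  rw [_root_.IsSelfAdjoint, Matrix.star_eq_conjTranspose]
  ext i j
  fin_cases i <;> fin_cases j <;> simp [rmat, Matrix.conjTranspose_apply]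

lemma rmat_eq_iff {a b c d a' b' c' d' : ℝ} :
    rmat a b c d = rmat a' b' c' d' ↔ a = a' ∧ b = b' ∧ c = c' ∧ d = d' := by
  constructor
  · intro h
    have h00 := congrFun (congrFun h 0) 0
    have h01 := congrFun (congrFun h 0) 1
    have h10 := congrFun (congrFun h 1) 0
    have h11 := congrFun (congrFun h 1) 1
    simp [rmat, Complex.ofReal_inj] at h00 h01 h10 h11
    exact ⟨h00, h01, h10, h11⟩
  · rintro ⟨rfl, rfl, rfl, rfl⟩; rfl

end

noncomputable section
lemma rmat_sub (a b c d a' b' c' d' : ℝ) :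
    rmat a b c d - rmat a' b' c' d' = rmat (a-a') (b-b') (c-c') (d-d') := by
  ext i j
  fin_cases i <;> fin_cases j <;> simp [rmat, Matrix.sub_apply]

lemma rmat_det (a b c d : ℝ) : (rmat a b c d).det = ((a*d - b*c : ℝ) : ℂ) := by
  rw [rmat, Matrix.det_fin_two_of]; push_cast; ring

lemma algebraMap_rmat (μ : ℝ) :
    algebraMap ℝ (Matrix (Fin 2) (Fin 2) ℂ) μ = rmat μ 0 0 μ := by
  rw [Algebra.algebraMap_eq_smul_one, rmat_one, rmat_smul]
  norm_num

lemma spectrum_rmat_subset (a b d l1 l2 : ℝ) (hsum : a + d = l1 + l2)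
    (hprod : a*d - b*b = l1*l2) :
    spectrum ℝ (rmat a b b d) ⊆ {l1, l2} := by
  intro μ hμ
  rw [spectrum.mem_iff] at hμ
  by_contra hne
  simp only [Set.mem_insert_iff, Set.mem_singleton_iff, not_or] at hne
  apply hμ
  rw [algebraMap_rmat, rmat_sub, Matrix.isUnit_iff_isUnit_det, rmat_det, isUnit_iff_ne_zero]
  intro h
  rw [Complex.ofReal_eq_zero] at h
  have key : (μ - l1) * (μ - l2) = 0 := by linear_combination h + μ * hsum - hprod
  rcases mul_eq_zero.mp key with h1 | h1
  · exact hne.1 (by linarith)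
  · exact hne.2 (by linarith)
end

noncomputable section
lemma cfc_rmat (f : ℝ → ℝ) (a b d l1 l2 : ℝ) (hl : l1 ≠ l2) (hsum : a + d = l1 + l2)
    (hprod : a*d - b*b = l1*l2) :
    cfc f (rmat a b b d) =
      rmat (((f l1 - f l2)/(l1 - l2))*a + (l1 * f l2 - l2 * f l1)/(l1 - l2))
        (((f l1 - f l2)/(l1 - l2))*b) (((f l1 - f l2)/(l1 - l2))*b)
        (((f l1 - f l2)/(l1 - l2))*d + (l1 * f l2 - l2 * f l1)/(l1 - l2)) := by
  have hsa := rmat_selfAdjoint a b d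
  have hspec := spectrum_rmat_subset a b d l1 l2 hsum hprod
  set c1 := (f l1 - f l2)/(l1 - l2) with hc1
  set c0 := (l1 * f l2 - l2 * f l1)/(l1 - l2) with hc0
  have hll : l1 - l2 ≠ 0 := sub_ne_zero.mpr hl
  have h1 : cfc f (rmat a b b d) = cfc (fun x : ℝ => c1 * x + c0) (rmat a b b d) := by
    apply cfc_congr
    intro x hx
    rcases hspec hx with hx1 | hx1
    · subst hx1; rw [hc1, hc0]; field_simp; ring
    · rw [Set.mem_singleton_iff] at hx1
      subst hx1; rw [hc1, hc0]; field_simp; ring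
  rw [h1, cfc_add _ _ _ (by fun_prop) (by fun_prop), cfc_const_mul _ _ _ (by fun_prop),
    cfc_id' ℝ (rmat a b b d), cfc_const c0 _ hsa, algebraMap_rmat, rmat_smul, rmat_add]
  norm_num
end

noncomputable section
open Filter Topology

lemma smul_one_rmat (ε : ℝ) : (ε : ℂ) • (1 : Matrix (Fin 2) (Fin 2) ℂ) = rmat ε 0 0 ε := by
  ext i j
  fin_cases i <;> fin_cases j <;> simp [rmat, Matrix.one_apply]

lemma mpow_rmat (r : ℝ) (a b d l1 l2 : ℝ) (hl : l1 ≠ l2) (hsum : a + d = l1 + l2)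
    (hprod : a*d - b*b = l1*l2) :
    mpow (rmat a b b d) r =
      rmat (((l1^r - l2^r)/(l1 - l2))*a + (l1 * l2^r - l2 * l1^r)/(l1 - l2))
        (((l1^r - l2^r)/(l1 - l2))*b) (((l1^r - l2^r)/(l1 - l2))*b)
        (((l1^r - l2^r)/(l1 - l2))*d + (l1 * l2^r - l2 * l1^r)/(l1 - l2)) :=
  cfc_rmat (fun x : ℝ => x ^ r) a b d l1 l2 hl hsum hprod

lemma mpow_diag (r x y : ℝ) (hxy : x ≠ y) :
    mpow (rmat x 0 0 y) r = rmat (x^r) 0 0 (y^r) := by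
  rw [mpow_rmat r x 0 y x y hxy (by ring) (by ring), rmat_eq_iff]
  have h : x - y ≠ 0 := sub_ne_zero.mpr hxy
  refine ⟨?_, by ring, by ring, ?_⟩ <;> field_simp <;> ring

lemma tendsto_rmat {l : Filter ℝ} {f1 f2 f3 f4 : ℝ → ℝ} {x1 x2 x3 x4 : ℝ}
    (h1 : Tendsto f1 l (𝓝 x1)) (h2 : Tendsto f2 l (𝓝 x2))
    (h3 : Tendsto f3 l (𝓝 x3)) (h4 : Tendsto f4 l (𝓝 x4)) :
    Tendsto (fun ε => rmat (f1 ε) (f2 ε) (f3 ε) (f4 ε)) l (𝓝 (rmat x1 x2 x3 x4)) := by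
  refine tendsto_pi_nhds.mpr ?_
  intro i
  rw [tendsto_pi_nhds]
  intro j
  fin_cases i <;> fin_cases j <;> simp only [rmat, Matrix.of_apply, Matrix.cons_val', Matrix.cons_val_zero, Matrix.cons_val_one, Matrix.head_cons, Matrix.empty_val', Matrix.cons_val_fin_one, Matrix.head_fin_const]
  · exact (Complex.continuous_ofReal.tendsto _).comp h1
  · exact (Complex.continuous_ofReal.tendsto _).comp h2
  · exact (Complex.continuous_ofReal.tendsto _).comp h3
  · exact (Complex.continuous_ofReal.tendsto _).comp h4

lemma rpow_half_mul_half {x : ℝ} (hx : 0 < x) : x^(1/2:ℝ) * x^(1/2:ℝ) = x := by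
  rw [← Real.rpow_add hx]; norm_num

lemma rpow_half_mul_neg {x : ℝ} (hx : 0 < x) : x^(1/2:ℝ) * x^(-(1/2):ℝ) = 1 := by
  rw [← Real.rpow_add hx]; norm_num

lemma rpow_neg_mul_neg {x : ℝ} (hx : 0 < x) : x^(-(1/2):ℝ) * x^(-(1/2):ℝ) = x⁻¹ := by
  rw [← Real.rpow_add hx]; norm_num
  rw [Real.rpow_neg_one]
end

noncomputable section
open Filter Topology

def ktau (a d ε : ℝ) : ℝ := (a+ε)/(1+ε) + (d+ε)/ε
def kdel (a b d ε : ℝ) : ℝ := ((a+ε)*(d+ε) - b*b)/(ε*(1+ε))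
def kDel (a b d ε : ℝ) : ℝ := (ktau a d ε)^2 - 4 * kdel a b d ε
def kl1 (a b d ε : ℝ) : ℝ := (ktau a d ε + Real.sqrt (kDel a b d ε))/2
def kl2 (a b d ε : ℝ) : ℝ := (ktau a d ε - Real.sqrt (kDel a b d ε))/2
def kc1 (t a b d ε : ℝ) : ℝ :=
  ((kl1 a b d ε)^t - (kl2 a b d ε)^t)/((kl1 a b d ε) - (kl2 a b d ε))
def kc0 (t a b d ε : ℝ) : ℝ :=
  ((kl1 a b d ε)*(kl2 a b d ε)^t - (kl2 a b d ε)*(kl1 a b d ε)^t)/((kl1 a b d ε) - (kl2 a b d ε))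

section facts
variable {a b d ε : ℝ}

lemma hN_pos (ha : 0 < a) (hd : 0 < d) (hD : 0 < a*d - b*b) (hε : 0 < ε) :
    0 < (a+ε)*(d+ε) - b*b := by nlinarith

lemma kdel_pos (ha : 0 < a) (hd : 0 < d) (hD : 0 < a*d - b*b) (hε : 0 < ε) :
    0 < kdel a b d ε :=
  div_pos (hN_pos ha hd hD hε) (by positivity)

lemma ktau_pos (ha : 0 < a) (hd : 0 < d) (hε : 0 < ε) : 0 < ktau a d ε := by
  unfold ktau; positivity

lemma kDel_pos (hb : b ≠ 0) (hε : 0 < ε) : 0 < kDel a b d ε := by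
  have h1 : (0:ℝ) < 1 + ε := by linarith
  have key : kDel a b d ε = ((a+ε)/(1+ε) - (d+ε)/ε)^2 + 4*(b*b)/(ε*(1+ε)) := by
    unfold kDel ktau kdel
    field_simp
    ring
  rw [key]
  have : 0 < 4*(b*b)/(ε*(1+ε)) := by
    apply div_pos (by nlinarith [mul_self_pos.mpr hb]) (by positivity)
  nlinarith [sq_nonneg ((a+ε)/(1+ε) - (d+ε)/ε)]

lemma sqrt_kDel_lt (ha : 0 < a) (hd : 0 < d) (hD : 0 < a*d - b*b) (hε : 0 < ε) :
    Real.sqrt (kDel a b d ε) < ktau a d ε := by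
  rw [Real.sqrt_lt' (ktau_pos ha hd hε)]
  unfold kDel
  nlinarith [kdel_pos ha hd hD hε]

lemma kl2_pos (ha : 0 < a) (hd : 0 < d) (hD : 0 < a*d - b*b) (hε : 0 < ε) :
    0 < kl2 a b d ε := by
  have := sqrt_kDel_lt ha hd hD hε
  unfold kl2; linarith

lemma kl2_lt_kl1 (hb : b ≠ 0) (hε : 0 < ε) : kl2 a b d ε < kl1 a b d ε := by
  have := Real.sqrt_pos.mpr (kDel_pos hb hε (a := a) (d := d))
  unfold kl1 kl2; linarith

lemma kl_sum : kl1 a b d ε + kl2 a b d ε = ktau a d ε := by unfold kl1 kl2; ring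

lemma kl_prod (hb : b ≠ 0) (hε : 0 < ε) :
    kl1 a b d ε * kl2 a b d ε = kdel a b d ε := by
  have hs : Real.sqrt (kDel a b d ε) * Real.sqrt (kDel a b d ε)
      = ktau a d ε^2 - 4*kdel a b d ε := by
    rw [Real.mul_self_sqrt (le_of_lt (kDel_pos hb hε (a := a) (b := b) (d := d)))]
    rfl
  unfold kl1 kl2
  linear_combination (-(1/4)) * hs

end facts
end

noncomputable section
open Filter Topology

lemma K_formula (t a b d : ℝ) (ha : 0 < a) (hd : 0 < d) (hb : b ≠ 0)
    (hD : 0 < a*d - b*b) {ε : ℝ} (hε : 0 < ε) :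
    mpow (rmat 1 0 0 0 + (ε : ℂ) • 1) (1/2) *
      mpow (mpow (rmat 1 0 0 0 + (ε : ℂ) • 1) (-(1/2)) * (rmat a b b d + (ε : ℂ) • 1) *
        mpow (rmat 1 0 0 0 + (ε : ℂ) • 1) (-(1/2))) t *
      mpow (rmat 1 0 0 0 + (ε : ℂ) • 1) (1/2)
    = rmat (kc1 t a b d ε * (a+ε) + kc0 t a b d ε * (1+ε)) (kc1 t a b d ε * b)
        (kc1 t a b d ε * b) (kc1 t a b d ε * (d+ε) + kc0 t a b d ε * ε) := by
  have h1ε : (0:ℝ) < 1 + ε := by linarith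
  have hne : (1+ε : ℝ) ≠ ε := by linarith
  have hBε : rmat 1 0 0 0 + (ε:ℂ) • 1 = rmat (1+ε) 0 0 ε := by
    rw [smul_one_rmat, rmat_add]; norm_num
  have hAε : rmat a b b d + (ε:ℂ) • 1 = rmat (a+ε) b b (d+ε) := by
    rw [smul_one_rmat, rmat_add]; norm_num
  obtain ⟨α, hα⟩ : ∃ x, x = ((1+ε)^(-(1/2):ℝ) : ℝ) := ⟨_, rfl⟩
  obtain ⟨β, hβ⟩ : ∃ x, x = (ε^(-(1/2):ℝ) : ℝ) := ⟨_, rfl⟩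
  obtain ⟨hh, hhh⟩ : ∃ x, x = ((1+ε)^(1/2:ℝ) : ℝ) := ⟨_, rfl⟩
  obtain ⟨kk, hkk⟩ : ∃ x, x = (ε^(1/2:ℝ) : ℝ) := ⟨_, rfl⟩
  have hα2 : α*α = (1+ε)⁻¹ := by rw [hα]; exact rpow_neg_mul_neg h1ε
  have hβ2 : β*β = ε⁻¹ := by rw [hβ]; exact rpow_neg_mul_neg hε
  have hh2 : hh*hh = 1+ε := by rw [hhh]; exact rpow_half_mul_half h1ε
  have hk2 : kk*kk = ε := by rw [hkk]; exact rpow_half_mul_half hε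
  have hhα : hh*α = 1 := by rw [hhh, hα]; exact rpow_half_mul_neg h1ε
  have hkβ : kk*β = 1 := by rw [hkk, hβ]; exact rpow_half_mul_neg hε
  have hone : hh*α*(kk*β) = 1 := by rw [hhα, hkβ]; norm_num
  have hM : mpow (rmat (1+ε) 0 0 ε) (-(1/2)) * rmat (a+ε) b b (d+ε) *
      mpow (rmat (1+ε) 0 0 ε) (-(1/2))
      = rmat ((a+ε)/(1+ε)) (b*(α*β)) (b*(α*β)) ((d+ε)/ε) := by
    rw [mpow_diag _ _ _ hne, ← hα, ← hβ, rmat_mul, rmat_mul, rmat_eq_iff]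
    refine ⟨?_, by ring, by ring, ?_⟩
    · rw [div_eq_mul_inv]; linear_combination (a+ε) * hα2
    · rw [div_eq_mul_inv]; linear_combination (d+ε) * hβ2
  have hsum : (a+ε)/(1+ε) + (d+ε)/ε = kl1 a b d ε + kl2 a b d ε := by
    rw [kl_sum]; rfl
  have hprod : ((a+ε)/(1+ε)) * ((d+ε)/ε) - (b*(α*β))*(b*(α*β)) = kl1 a b d ε * kl2 a b d ε := by
    rw [kl_prod hb hε]
    unfold kdel
    have hee : (ε*(1+ε))⁻¹ = ε⁻¹*(1+ε)⁻¹ := by rw [mul_inv]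
    linear_combination (-(b*b*β*β)) * hα2 - (b*b*(1+ε)⁻¹) * hβ2
      - ((a+ε)*(d+ε) - b*b) * hee
  have hlne : kl1 a b d ε ≠ kl2 a b d ε := ne_of_gt (kl2_lt_kl1 hb hε)
  rw [hBε, hAε, hM, mpow_rmat t _ _ _ _ _ hlne hsum hprod, mpow_diag _ _ _ hne,
    ← hhh, ← hkk, rmat_mul, rmat_mul, rmat_eq_iff]
  obtain ⟨c1, hc1⟩ : ∃ x, x = (kl1 a b d ε ^ t - kl2 a b d ε ^ t) / (kl1 a b d ε - kl2 a b d ε) :=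
    ⟨_, rfl⟩
  obtain ⟨c0, hc0⟩ : ∃ x, x = (kl1 a b d ε * kl2 a b d ε ^ t - kl2 a b d ε * kl1 a b d ε ^ t) /
      (kl1 a b d ε - kl2 a b d ε) := ⟨_, rfl⟩
  rw [← hc1, ← hc0]
  have hgc1 : kc1 t a b d ε = c1 := hc1.symm
  have hgc0 : kc0 t a b d ε = c0 := hc0.symm
  rw [hgc1, hgc0]
  have e1 : (a+ε)/(1+ε)*(1+ε) = a+ε := div_mul_cancel₀ _ (ne_of_gt h1ε)
  have e2 : (d+ε)/ε*ε = d+ε := div_mul_cancel₀ _ (ne_of_gt hε)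
  refine ⟨?_, ?_, ?_, ?_⟩
  · linear_combination (c1*((a+ε)/(1+ε)) + c0) * hh2 + c1*e1
  · linear_combination (c1*b)*hone
  · linear_combination (c1*b)*hone
  · linear_combination (c1*((d+ε)/ε) + c0) * hk2 + c1*e2
end

noncomputable section
open Filter Topology

section tendsto
variable {t a b d : ℝ}

lemma tendsto_eps : Tendsto (fun ε : ℝ => ε) (𝓝[>] 0) (𝓝 0) :=
  tendsto_id.mono_left nhdsWithin_le_nhds

lemma tendsto_eps_tau (ha : 0 < a) (hd : 0 < d) :
    Tendsto (fun ε => ε * ktau a d ε) (𝓝[>] 0) (𝓝 d) := by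
  have h : Tendsto (fun ε : ℝ => ε * ((a+ε)/(1+ε)) + (d+ε)) (𝓝[>] 0) (𝓝 d) := by
    have h1 : Tendsto (fun ε : ℝ => ε * ((a+ε)/(1+ε)) + (d+ε)) (𝓝 0) (𝓝 (0 * ((a+0)/(1+0)) + (d+0))) := by
      apply Tendsto.add
      · exact (tendsto_id.mul ((tendsto_const_nhds.add tendsto_id).div
          (tendsto_const_nhds.add tendsto_id) (by norm_num)))
      · exact tendsto_const_nhds.add tendsto_id
    have h2 : (0 : ℝ) * ((a+0)/(1+0)) + (d+0) = d := by ring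
    rw [h2] at h1
    exact h1.mono_left nhdsWithin_le_nhds
  apply h.congr'
  filter_upwards [self_mem_nhdsWithin] with ε (hε : 0 < ε)
  unfold ktau
  field_simp

lemma tendsto_eps_del (ha : 0 < a) (hd : 0 < d) :
    Tendsto (fun ε => ε * kdel a b d ε) (𝓝[>] 0) (𝓝 (a*d - b*b)) := by
  have h1 : Tendsto (fun ε : ℝ => ((a+ε)*(d+ε) - b*b)/(1+ε)) (𝓝 0)
      (𝓝 (((a+0)*(d+0) - b*b)/(1+0))) := by
    apply Tendsto.div
    · exact ((tendsto_const_nhds.add tendsto_id).mul (tendsto_const_nhds.add tendsto_id)).sub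
        tendsto_const_nhds
    · exact tendsto_const_nhds.add tendsto_id
    · norm_num
  have h2 : ((a+0)*(d+0) - b*b)/(1+0) = a*d - b*b := by ring
  rw [h2] at h1
  apply (h1.mono_left nhdsWithin_le_nhds).congr'
  filter_upwards [self_mem_nhdsWithin] with ε (hε : 0 < ε)
  unfold kdel
  field_simp

lemma tendsto_eps_sqrtDel (ha : 0 < a) (hd : 0 < d) :
    Tendsto (fun ε => ε * Real.sqrt (kDel a b d ε)) (𝓝[>] 0) (𝓝 d) := by
  have h0 : Tendsto (fun ε => (ε * ktau a d ε)^2 - 4 * (ε * (ε * kdel a b d ε)))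
      (𝓝[>] 0) (𝓝 (d^2)) := by
    have := ((tendsto_eps_tau ha hd).pow 2).sub
      ((tendsto_eps.mul (tendsto_eps_del (b := b) ha hd)).const_mul 4)
    simpa using this
  have h1 : Tendsto (fun ε => Real.sqrt ((ε * ktau a d ε)^2 - 4 * (ε * (ε * kdel a b d ε))))
      (𝓝[>] 0) (𝓝 d) := by
    have := (Real.continuous_sqrt.tendsto (d^2)).comp h0
    rwa [Real.sqrt_sq hd.le] at this
  apply h1.congr'
  filter_upwards [self_mem_nhdsWithin] with ε (hε : 0 < ε)
  have : (ε * ktau a d ε)^2 - 4 * (ε * (ε * kdel a b d ε)) = ε^2 * kDel a b d ε := by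
    unfold kDel; ring
  rw [this, Real.sqrt_mul (sq_nonneg ε), Real.sqrt_sq hε.le]

lemma tendsto_kl2 (ha : 0 < a) (hd : 0 < d) (hb : b ≠ 0) (hD : 0 < a*d - b*b) :
    Tendsto (fun ε => kl2 a b d ε) (𝓝[>] 0) (𝓝 ((a*d - b*b)/d)) := by
  have h1 : Tendsto (fun ε => 2 * (ε * kdel a b d ε) / (ε * ktau a d ε + ε * Real.sqrt (kDel a b d ε)))
      (𝓝[>] 0) (𝓝 (2 * (a*d - b*b) / (d + d))) := by
    apply Tendsto.div
    · exact (tendsto_eps_del ha hd).const_mul 2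
    · exact (tendsto_eps_tau ha hd).add (tendsto_eps_sqrtDel ha hd)
    · intro h; rw [← h] at hd; norm_num at hd; linarith
  have h2 : 2 * (a*d - b*b) / (d + d) = (a*d - b*b)/d := by
    field_simp; ring
  rw [h2] at h1
  apply h1.congr'
  filter_upwards [self_mem_nhdsWithin] with ε (hε : 0 < ε)
  have htau := ktau_pos (a := a) (d := d) ha hd hε
  have hs := Real.sqrt_nonneg (kDel a b d ε)
  have hden : ktau a d ε + Real.sqrt (kDel a b d ε) ≠ 0 := by positivity
  have hprod := kl_prod (a := a) (d := d) hb hε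
  have hsum := kl_sum (a := a) (b := b) (d := d) (ε := ε)
  -- kl2 = 2*kdel/(tau+sqrt)
  have key : kl2 a b d ε = 2 * kdel a b d ε / (ktau a d ε + Real.sqrt (kDel a b d ε)) := by
    rw [eq_div_iff hden]
    unfold kl2
    have hs2 : Real.sqrt (kDel a b d ε) * Real.sqrt (kDel a b d ε)
        = ktau a d ε^2 - 4*kdel a b d ε := by
      rw [Real.mul_self_sqrt (le_of_lt (kDel_pos hb hε (a := a) (b := b) (d := d)))]; rfl
    linear_combination (-(1/2)) * hs2
  rw [key]
  have hden2 : ε * ktau a d ε + ε * Real.sqrt (kDel a b d ε) ≠ 0 := by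
    have h3 := mul_pos hε htau
    nlinarith [mul_nonneg hε.le hs]
  rw [div_eq_div_iff hden2 hden]
  ring
end tendsto
end

noncomputable section
open Filter Topology

variable {t a b d : ℝ}

lemma tendsto_kl1 (ha : 0 < a) (hd : 0 < d) :
    Tendsto (fun ε => kl1 a b d ε) (𝓝[>] 0) atTop := by
  have h1 : Tendsto (fun ε : ℝ => d/2 * ε⁻¹) (𝓝[>] 0) atTop :=
    (tendsto_inv_nhdsGT_zero).const_mul_atTop (by linarith)
  apply tendsto_atTop_mono' _ _ h1
  filter_upwards [self_mem_nhdsWithin] with ε (hε : 0 < ε)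
  have hs := Real.sqrt_nonneg (kDel a b d ε)
  have h2 : d/2 * ε⁻¹ ≤ ktau a d ε / 2 := by
    unfold ktau
    have h3 : (0:ℝ) ≤ (a+ε)/(1+ε) := by positivity
    have h4 : d * ε⁻¹ ≤ (d+ε)/ε := by
      rw [div_eq_mul_inv]
      have := mul_le_mul_of_nonneg_right (by linarith : d ≤ d + ε) (inv_nonneg.mpr hε.le)
      linarith
    linarith
  unfold kl1
  linarith

lemma tendsto_kc1 (ht : 0 < t) (ht1 : t < 1) (ha : 0 < a) (hd : 0 < d) (hb : b ≠ 0)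
    (hD : 0 < a*d - b*b) :
    Tendsto (fun ε => kc1 t a b d ε) (𝓝[>] 0) (𝓝 0) := by
  have hm : (0:ℝ) < (a*d - b*b)/d := div_pos hD hd
  have hbig : ∀ᶠ ε in 𝓝[>] (0:ℝ), 2 * ((a*d - b*b)/d + 1) ≤ kl1 a b d ε :=
    (tendsto_kl1 ha hd (b := b)).eventually_ge_atTop _
  have hsml : ∀ᶠ ε in 𝓝[>] (0:ℝ), kl2 a b d ε ≤ (a*d - b*b)/d + 1 :=
    (tendsto_kl2 ha hd hb hD).eventually (eventually_le_nhds (by linarith))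
  have htop : Tendsto (fun ε => 2 * (kl1 a b d ε) ^ (t - 1)) (𝓝[>] 0) (𝓝 0) := by
    have h0 : Tendsto (fun x : ℝ => x ^ (-(1-t))) atTop (𝓝 0) := tendsto_rpow_neg_atTop (by linarith)
    have h1 : Tendsto (fun x : ℝ => x ^ (t-1)) atTop (𝓝 0) := by
      have : (fun x : ℝ => x ^ (-(1-t))) = fun x : ℝ => x ^ (t-1) := by
        funext x; norm_num
      rwa [this] at h0
    have := (h1.comp (tendsto_kl1 ha hd (b := b))).const_mul 2
    simpa using this
  apply tendsto_of_tendsto_of_tendsto_of_le_of_le' tendsto_const_nhds htop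
  · filter_upwards [self_mem_nhdsWithin] with ε (hε : 0 < ε)
    have h12 := kl2_lt_kl1 (a := a) (d := d) hb hε
    have h2p := kl2_pos ha hd hD hε
    unfold kc1
    apply div_nonneg _ (by linarith)
    have := Real.rpow_le_rpow h2p.le h12.le ht.le
    linarith
  · filter_upwards [self_mem_nhdsWithin, hbig, hsml] with ε (hε : 0 < ε) h1 h2
    have h12 := kl2_lt_kl1 (a := a) (d := d) hb hε
    have h2p := kl2_pos ha hd hD hε
    have h1p : 0 < kl1 a b d ε := lt_trans h2p h12
    have hgap : kl1 a b d ε / 2 ≤ kl1 a b d ε - kl2 a b d ε := by linarith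
    have hnum : kl1 a b d ε ^ t - kl2 a b d ε ^ t ≤ kl1 a b d ε ^ t := by
      have := Real.rpow_nonneg h2p.le t
      linarith
    have hnumng : 0 ≤ kl1 a b d ε ^ t - kl2 a b d ε ^ t := by
      have := Real.rpow_le_rpow h2p.le h12.le ht.le
      linarith
    unfold kc1
    calc (kl1 a b d ε ^ t - kl2 a b d ε ^ t) / (kl1 a b d ε - kl2 a b d ε)
        ≤ (kl1 a b d ε ^ t) / (kl1 a b d ε / 2) := by
          exact div_le_div₀ (Real.rpow_nonneg h1p.le t) hnum (half_pos h1p) hgap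
      _ = 2 * kl1 a b d ε ^ (t-1) := by
          rw [Real.rpow_sub h1p, Real.rpow_one]
          field_simp
end

noncomputable section
open Filter Topology
variable {t a b d : ℝ}

lemma tendsto_kc0 (ht : 0 < t) (ht1 : t < 1) (ha : 0 < a) (hd : 0 < d) (hb : b ≠ 0)
    (hD : 0 < a*d - b*b) :
    Tendsto (fun ε => kc0 t a b d ε) (𝓝[>] 0) (𝓝 (((a*d - b*b)/d)^t)) := by
  have hm : (0:ℝ) < (a*d - b*b)/d := div_pos hD hd
  have h1 : Tendsto (fun ε => (kl2 a b d ε)^t - kl2 a b d ε * kc1 t a b d ε)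
      (𝓝[>] 0) (𝓝 (((a*d - b*b)/d)^t)) := by
    have ha1 : Tendsto (fun ε => (kl2 a b d ε)^t) (𝓝[>] 0) (𝓝 (((a*d - b*b)/d)^t)) := by
      have hc : ContinuousAt (fun x : ℝ => x ^ t) ((a*d - b*b)/d) :=
        Real.continuousAt_rpow_const _ _ (Or.inl (ne_of_gt hm))
      exact hc.tendsto.comp (tendsto_kl2 ha hd hb hD)
    have ha2 : Tendsto (fun ε => kl2 a b d ε * kc1 t a b d ε) (𝓝[>] 0) (𝓝 0) := by
      have := (tendsto_kl2 ha hd hb hD).mul (tendsto_kc1 ht ht1 ha hd hb hD)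
      simpa using this
    have := ha1.sub ha2
    simpa using this
  apply h1.congr'
  filter_upwards [self_mem_nhdsWithin] with ε (hε : 0 < ε)
  have h12 := kl2_lt_kl1 (a := a) (d := d) hb hε
  have hne : kl1 a b d ε - kl2 a b d ε ≠ 0 := by linarith
  unfold kc0 kc1
  field_simp
  ring

lemma kaMean_rmat (ht : 0 < t) (ht1 : t < 1) (ha : 0 < a) (hd : 0 < d) (hb : b ≠ 0)
    (hD : 0 < a*d - b*b) :
    kaMean t (rmat a b b d) (rmat 1 0 0 0) = rmat (((a*d - b*b)/d)^t) 0 0 0 := by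
  apply Tendsto.limUnder_eq
  have hc1 := tendsto_kc1 ht ht1 ha hd hb hD
  have hc0 := tendsto_kc0 ht ht1 ha hd hb hD
  have e1 : Tendsto (fun ε => kc1 t a b d ε * (a+ε) + kc0 t a b d ε * (1+ε)) (𝓝[>] 0)
      (𝓝 (((a*d - b*b)/d)^t)) := by
    have := (hc1.mul ((tendsto_const_nhds : Tendsto (fun _ : ℝ => a) _ (𝓝 a)).add tendsto_eps)).add
      (hc0.mul ((tendsto_const_nhds : Tendsto (fun _ : ℝ => (1:ℝ)) _ (𝓝 1)).add tendsto_eps))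
    simpa using this
  have e2 : Tendsto (fun ε => kc1 t a b d ε * b) (𝓝[>] 0) (𝓝 0) := by
    have := hc1.mul (tendsto_const_nhds : Tendsto (fun _ : ℝ => b) _ _)
    simpa using this
  have e4 : Tendsto (fun ε => kc1 t a b d ε * (d+ε) + kc0 t a b d ε * ε) (𝓝[>] 0) (𝓝 0) := by
    have := (hc1.mul ((tendsto_const_nhds : Tendsto (fun _ : ℝ => d) _ (𝓝 d)).add tendsto_eps)).add
      (hc0.mul tendsto_eps)
    simpa using this
  have hG := tendsto_rmat e1 e2 e2 e4
  apply hG.congr'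
  filter_upwards [self_mem_nhdsWithin] with ε (hε : 0 < ε)
  exact (K_formula t a b d ha hd hb hD hε).symm
end

noncomputable section
open Filter Topology

lemma rmat_psd_diag {x y y' w : ℝ} (h : (rmat x y y' w).PosSemidef) : 0 ≤ x ∧ 0 ≤ w := by
  constructor
  · have h1 := h.dotProduct_mulVec_nonneg ![1, 0]
    simp [rmat, Matrix.mulVec, dotProduct, Fin.sum_univ_two] at h1
    exact_mod_cast h1
  · have h1 := h.dotProduct_mulVec_nonneg ![0, 1]
    simp [rmat, Matrix.mulVec, dotProduct, Fin.sum_univ_two] at h1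
    exact_mod_cast h1

lemma P_psd : (rmat 1 0 0 0).PosSemidef := by
  refine Matrix.PosSemidef.of_dotProduct_mulVec_nonneg ?_ ?_
  · exact rmat_selfAdjoint 1 0 0
  · intro x
    have key : dotProduct (star x) ((rmat 1 0 0 0) *ᵥ x) = star (x 0) * x 0 := by
      simp [rmat, Matrix.mulVec, dotProduct, Fin.sum_univ_two]
    rw [key]
    exact star_mul_self_nonneg _

lemma A_psd : (rmat (5/2) (3/2) (3/2) (5/2)).PosSemidef := by
  refine Matrix.PosSemidef.of_dotProduct_mulVec_nonneg ?_ ?_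
  · exact rmat_selfAdjoint _ _ _
  · intro x
    have key : dotProduct (star x) ((rmat (5/2) (3/2) (3/2) (5/2)) *ᵥ x) =
        star (x 0) * x 0 + star (x 1) * x 1 +
          (3/2 : ℂ) * (star (x 0 + x 1) * (x 0 + x 1)) := by
      simp [rmat, Matrix.mulVec, dotProduct, Fin.sum_univ_two, star_add]
      ring
    rw [key]
    have h1 := star_mul_self_nonneg (x 0)
    have h2 := star_mul_self_nonneg (x 1)
    have h3 := star_mul_self_nonneg (x 0 + x 1)
    have h4 : (0:ℂ) ≤ (3/2 : ℂ) * (star (x 0 + x 1) * (x 0 + x 1)) := by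
      apply mul_nonneg _ h3
      rw [show ((3:ℂ)/2) = ((3/2:ℝ):ℂ) by norm_num, ← Complex.ofReal_zero,
        Complex.real_le_real]
      norm_num
    exact add_nonneg (add_nonneg h1 h2) h4

lemma mpowA (s : ℝ) : mpow (rmat (5/2) (3/2) (3/2) (5/2)) s =
    rmat ((4^s+1)/2) ((4^s-1)/2) ((4^s-1)/2) ((4^s+1)/2) := by
  rw [mpow_rmat s (5/2) (3/2) (5/2) 4 1 (by norm_num) (by norm_num) (by norm_num),
    Real.one_rpow, rmat_eq_iff]
  refine ⟨by ring, by ring, by ring, by ring⟩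

lemma mpowP {s : ℝ} (hs : s ≠ 0) : mpow (rmat 1 0 0 0) s = rmat 1 0 0 0 := by
  rw [mpow_diag s 1 0 one_ne_zero, Real.one_rpow, Real.zero_rpow hs]

lemma four_rpow_gt_one {s : ℝ} (hs : 0 < s) : 1 < (4:ℝ)^s := by
  have := Real.one_lt_rpow_iff_of_pos (by norm_num : (0:ℝ) < 4) (y := s)
  rw [this]
  exact Or.inl ⟨by norm_num, hs⟩

lemma kaMeanAP (t : ℝ) (ht : 0 < t) (ht1 : t < 1) :
    kaMean t (rmat (5/2) (3/2) (3/2) (5/2)) (rmat 1 0 0 0) = rmat ((8/5:ℝ)^t) 0 0 0 := by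
  have h := kaMean_rmat (t := t) (a := 5/2) (b := 3/2) (d := 5/2) ht ht1
    (by norm_num) (by norm_num) (by norm_num) (by norm_num)
  rw [h]
  norm_num

noncomputable section
open Filter Topology

lemma partA (t : ℝ) (ht : 0 < t) (ht1 : t < 1) (z : ℝ) (hz : 0 < z) :
    ¬ ((kaMean t (rmat (5/2) (3/2) (3/2) (5/2)) (rmat 1 0 0 0)) - (mpow (mpow (rmat (5/2) (3/2) (3/2) (5/2)) (t / (2 * z)) * mpow (rmat 1 0 0 0) ((1 - t) / z) *
        mpow (rmat (5/2) (3/2) (3/2) (5/2)) (t / (2 * z))) z)).PosSemidef := by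
  set s := t / (2 * z) with hs
  have hspos : 0 < s := by positivity
  have h4s := four_rpow_gt_one hspos
  set p := ((4:ℝ)^s + 1)/2 with hp
  set q := ((4:ℝ)^s - 1)/2 with hq
  have hppos : 0 < p := by rw [hp]; linarith
  have hqpos : 0 < q := by rw [hq]; linarith
  have hX : mpow (rmat (5/2) (3/2) (3/2) (5/2)) s * mpow (rmat 1 0 0 0) ((1 - t) / z) * mpow (rmat (5/2) (3/2) (3/2) (5/2)) s
      = rmat (p*p) (p*q) (p*q) (q*q) := by
    have h1t : (0:ℝ) < 1 - t := by linarith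
    rw [mpowA, mpowP (by positivity : (1-t)/z ≠ 0), ← hp, ← hq, rmat_mul, rmat_mul, rmat_eq_iff]
    refine ⟨by ring, by ring, by ring, by ring⟩
  have hl : p*p + q*q ≠ 0 := by positivity
  have hmp : mpow (rmat (p*p) (p*q) (p*q) (q*q)) z =
      rmat ((((p*p+q*q)^z - (0:ℝ)^z)/((p*p+q*q) - 0))*(p*p) +
          ((p*p+q*q) * (0:ℝ)^z - 0 * (p*p+q*q)^z)/((p*p+q*q) - 0))
        ((((p*p+q*q)^z - (0:ℝ)^z)/((p*p+q*q) - 0))*(p*q))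
        ((((p*p+q*q)^z - (0:ℝ)^z)/((p*p+q*q) - 0))*(p*q))
        ((((p*p+q*q)^z - (0:ℝ)^z)/((p*p+q*q) - 0))*(q*q) +
          ((p*p+q*q) * (0:ℝ)^z - 0 * (p*p+q*q)^z)/((p*p+q*q) - 0)) :=
    mpow_rmat z (p*p) (p*q) (q*q) (p*p+q*q) 0 hl (by ring) (by ring)
  intro hpsd
  rw [hX, hmp, kaMeanAP t ht ht1] at hpsd
  rw [rmat_sub] at hpsd
  have h22 := (rmat_psd_diag hpsd).2
  rw [Real.zero_rpow (ne_of_gt hz)] at h22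
  have hgt : 0 < (((p*p+q*q)^z - 0)/((p*p+q*q) - 0))*(q*q) +
      ((p*p+q*q) * 0 - 0 * (p*p+q*q)^z)/((p*p+q*q) - 0) := by
    have h1 : 0 < (p*p+q*q)^z := Real.rpow_pos_of_pos (by positivity) z
    have h2 : 0 < p*p + q*q := by positivity
    have h3 : 0 < ((p*p+q*q)^z - 0)/((p*p+q*q) - 0) := by
      rw [sub_zero, sub_zero]
      positivity
    have h4 : 0 < q*q := by positivity
    have h5 : ((p*p+q*q) * 0 - 0 * (p*p+q*q)^z)/((p*p+q*q) - 0) = 0 := by ring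
    rw [h5]
    nlinarith
  linarith

lemma partB (t : ℝ) (ht : 0 < t) (ht1 : t < 1) (z : ℝ) (hz : 0 < z) :
    ¬ ((kaMean t (rmat (5/2) (3/2) (3/2) (5/2)) (rmat 1 0 0 0)) - (mpow (mpow (rmat 1 0 0 0) ((1 - t) / (2 * z)) * mpow (rmat (5/2) (3/2) (3/2) (5/2)) (t / z) *
        mpow (rmat 1 0 0 0) ((1 - t) / (2 * z))) z)).PosSemidef := by
  set u := t / z with hu
  have hupos : 0 < u := by positivity
  have h4u := four_rpow_gt_one hupos
  set p := ((4:ℝ)^u + 1)/2 with hp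
  have hppos : 0 < p := by rw [hp]; linarith
  have hX : mpow (rmat 1 0 0 0) ((1 - t) / (2*z)) * mpow (rmat (5/2) (3/2) (3/2) (5/2)) u * mpow (rmat 1 0 0 0) ((1 - t) / (2*z))
      = rmat p 0 0 0 := by
    have h1t : (0:ℝ) < 1 - t := by linarith
    rw [mpowA, mpowP (by positivity : (1-t)/(2*z) ≠ 0), ← hp, rmat_mul, rmat_mul, rmat_eq_iff]
    refine ⟨by ring, by ring, by ring, by ring⟩
  intro hpsd
  rw [hX, mpow_diag z p 0 (ne_of_gt hppos), kaMeanAP t ht ht1,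
    Real.zero_rpow (ne_of_gt hz), rmat_sub] at hpsd
  have h11 := (rmat_psd_diag hpsd).1
  -- need p^z > (8/5)^t
  have hlow : (2:ℝ)^u ≤ p := by
    have h1 : (4:ℝ)^u = (2:ℝ)^u * (2:ℝ)^u := by
      rw [← Real.mul_rpow (by norm_num) (by norm_num)]
      norm_num
    have h2 : 0 < (2:ℝ)^u := Real.rpow_pos_of_pos (by norm_num) u
    rw [hp]
    nlinarith [sq_nonneg ((2:ℝ)^u - 1)]
  have h2z : ((2:ℝ)^u)^z = 2^t := by
    rw [← Real.rpow_mul (by norm_num : (0:ℝ) ≤ 2), hu, div_mul_cancel₀ _ (ne_of_gt hz)]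
  have hptz : (2:ℝ)^t ≤ p^z := by
    rw [← h2z]
    exact Real.rpow_le_rpow (Real.rpow_pos_of_pos (by norm_num) u).le hlow hz.le
  have hfinal : (8/5:ℝ)^t < p^z := by
    have := Real.rpow_lt_rpow (by norm_num : (0:ℝ) ≤ 8/5) (by norm_num : (8/5:ℝ) < 2) ht
    linarith
  linarith
end

noncomputable section
open Filter Topology

lemma inner_mean (t : ℝ) (ht : 0 < t) (ht1 : t < 1) {s : ℝ} (hs : 0 < s) :
    kaMean t (mpow (rmat (5/2) (3/2) (3/2) (5/2)) s) (mpow (rmat 1 0 0 0) s)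
      = rmat ((2/(4^(-s) + 1) : ℝ)^t) 0 0 0 := by
  have h4s := four_rpow_gt_one hs
  have h4pos : (0:ℝ) < 4^s := by linarith
  set p := ((4:ℝ)^s + 1)/2 with hp
  set q := ((4:ℝ)^s - 1)/2 with hq
  have hppos : 0 < p := by rw [hp]; linarith
  have hqpos : 0 < q := by rw [hq]; linarith
  have hD : 0 < p*p - q*q := by
    have : p*p - q*q = 4^s := by rw [hp, hq]; ring
    rw [this]; exact h4pos
  rw [mpowA, mpowP (ne_of_gt hs), ← hp, ← hq,
    kaMean_rmat ht ht1 hppos hppos (ne_of_gt hqpos) hD]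
  have hm : (p*p - q*q)/p = 2/(4^(-s) + 1) := by
    rw [Real.rpow_neg (by norm_num : (0:ℝ) ≤ 4)]
    rw [hp, hq]
    rw [div_eq_div_iff (by rw [← hp]; exact ne_of_gt hppos) (by positivity)]
    field_simp
    ring
  rw [hm]

lemma partC (t : ℝ) (ht : 0 < t) (ht1 : t < 1) (z : ℝ) (hz : 1 < z) :
    ¬ ((kaMean t (rmat (5/2) (3/2) (3/2) (5/2)) (rmat 1 0 0 0)) -
        mpow (kaMean t (mpow (rmat (5/2) (3/2) (3/2) (5/2)) (1/z))
          (mpow (rmat 1 0 0 0) (1/z))) z).PosSemidef := by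
  have hzpos : 0 < z := by linarith
  have hs : 0 < 1/z := by positivity
  set w : ℝ := (4:ℝ)^(-(1/z)) with hw
  have hwpos : 0 < w := Real.rpow_pos_of_pos (by norm_num) _
  have hwlt : w < 1 := Real.rpow_lt_one_of_one_lt_of_neg (by norm_num) (by simp; positivity)
  have hm : (0:ℝ) < 2/(w + 1) := by positivity
  have hkey : ((w+1)/2)^z < 5/8 := by
    have hconv := (strictConvexOn_rpow hz).2 (Set.mem_Ici.mpr hwpos.le)
      (Set.mem_Ici.mpr (by norm_num : (0:ℝ) ≤ 1)) (ne_of_lt hwlt)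
      (by norm_num : (0:ℝ) < 1/2) (by norm_num : (0:ℝ) < 1/2) (by norm_num)
    simp only [smul_eq_mul] at hconv
    have hwz : w^z = 1/4 := by
      rw [hw, ← Real.rpow_mul (by norm_num : (0:ℝ) ≤ 4)]
      have : (-(1/z))*z = -1 := by field_simp
      rw [this, Real.rpow_neg_one]
      norm_num
    have e : (1/2)*w + (1/2)*1 = (w+1)/2 := by ring
    rw [e, hwz, Real.one_rpow] at hconv
    linarith
  have hy : (0:ℝ) < ((w+1)/2)^z := Real.rpow_pos_of_pos (by positivity) z
  have hmz : (2/(w+1))^z = (((w+1)/2)^z)⁻¹ := by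
    rw [show (2/(w+1) : ℝ) = ((w+1)/2)⁻¹ by rw [inv_div]]
    exact Real.inv_rpow (by positivity) z
  have h85 : (8/5:ℝ) < (2/(w+1))^z := by
    rw [hmz]
    have h1 : ((w+1)/2)^z * (((w+1)/2)^z)⁻¹ = 1 := mul_inv_cancel₀ (ne_of_gt hy)
    nlinarith
  have hfin : (8/5:ℝ)^t < ((2/(w+1))^t)^z := by
    have e1 : ((2/(w+1))^t)^z = ((2/(w+1))^z)^t := by
      rw [← Real.rpow_mul hm.le, ← Real.rpow_mul hm.le, mul_comm]
    rw [e1]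
    exact Real.rpow_lt_rpow (by norm_num) h85 ht
  intro hpsd
  rw [inner_mean t ht ht1 hs, kaMeanAP t ht ht1,
    mpow_diag z _ 0 (ne_of_gt (Real.rpow_pos_of_pos hm t)),
    Real.zero_rpow (ne_of_gt hzpos), rmat_sub] at hpsd
  have h11 := (rmat_psd_diag hpsd).1
  linarith
end

noncomputable section
open Filter Topology

lemma psi_hasDeriv : HasDerivAt (fun s : ℝ => Real.log (1 + Real.exp (Real.log 4 * (-s))))
    (-(Real.log 2)) 0 := by
  have h1 : HasDerivAt (fun s : ℝ => Real.log 4 * (-s)) (Real.log 4 * (-1)) 0 :=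
    ((hasDerivAt_id (0:ℝ)).neg).const_mul (Real.log 4)
  have h2 := h1.exp
  have h3 := h2.const_add 1
  have h4 := h3.log (by positivity)
  convert h4 using 1
  rw [neg_zero, mul_zero, Real.exp_zero]
  have hlog4 : Real.log 4 = 2 * Real.log 2 := by
    rw [show (4:ℝ) = 2^2 by norm_num, Real.log_pow]
    norm_num
  rw [hlog4]
  ring

lemma tendsto_zlog (t : ℝ) :
    Tendsto (fun z : ℝ => z * Real.log (2/((4:ℝ)^(-(1/z)) + 1))) atTop (𝓝 (Real.log 2)) := by
  have hψ0 : Real.log (1 + Real.exp (Real.log 4 * (-(0:ℝ)))) = Real.log 2 := by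
    rw [neg_zero, mul_zero, Real.exp_zero]
    norm_num
  have hslope := hasDerivAt_iff_tendsto_slope.mp psi_hasDeriv
  have hinv : Tendsto (fun z : ℝ => 1/z) atTop (𝓝[≠] (0:ℝ)) := by
    apply tendsto_nhdsWithin_of_tendsto_nhds_of_eventually_within
    · simpa [one_div] using tendsto_inv_atTop_zero
    · filter_upwards [eventually_ge_atTop (1:ℝ)] with z hz
      have : (0:ℝ) < 1/z := by positivity
      simpa using ne_of_gt this
  have hcomp := (hslope.comp hinv).neg
  rw [neg_neg] at hcomp
  apply hcomp.congr'
  filter_upwards [eventually_ge_atTop (1:ℝ)] with z hz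
  have hzpos : (0:ℝ) < z := by linarith
  have hw : (4:ℝ)^(-(1/z)) = Real.exp (Real.log 4 * (-(1/z))) :=
    Real.rpow_def_of_pos (by norm_num) _
  have hwpos : (0:ℝ) < (4:ℝ)^(-(1/z)) := Real.rpow_pos_of_pos (by norm_num) _
  simp only [Function.comp_apply, slope_def_field]
  rw [hψ0]
  have hne : (4:ℝ)^(-(1/z)) + 1 ≠ 0 := by positivity
  rw [Real.log_div (by norm_num) hne]
  rw [show (1:ℝ) + Real.exp (Real.log 4 * -(1/z)) = (4:ℝ)^(-(1/z)) + 1 by rw [hw]; ring]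
  field_simp
  ring

lemma partD_tendsto (t : ℝ) (ht : 0 < t) (ht1 : t < 1) :
    Tendsto (fun z : ℝ => mpow (kaMean t (mpow (rmat (5/2) (3/2) (3/2) (5/2)) (1/z))
      (mpow (rmat 1 0 0 0) (1/z))) z) atTop (𝓝 (rmat ((2:ℝ)^t) 0 0 0)) := by
  have hsc : Tendsto (fun z : ℝ => ((2/((4:ℝ)^(-(1/z))+1))^t)^z) atTop (𝓝 ((2:ℝ)^t)) := by
    have h1 := (tendsto_zlog t).const_mul t
    have h2 := (Real.continuous_exp.tendsto _).comp h1
    have h3 : Real.exp (t * Real.log 2) = (2:ℝ)^t := by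
      rw [Real.rpow_def_of_pos (by norm_num : (0:ℝ) < 2), mul_comm]
    rw [h3] at h2
    apply h2.congr'
    filter_upwards [eventually_ge_atTop (1:ℝ)] with z hz
    have hzpos : (0:ℝ) < z := by linarith
    have hwpos : (0:ℝ) < (4:ℝ)^(-(1/z)) := Real.rpow_pos_of_pos (by norm_num) _
    have hm : (0:ℝ) < 2/((4:ℝ)^(-(1/z))+1) := by positivity
    rw [Function.comp_apply, ← Real.rpow_mul hm.le,
      Real.rpow_def_of_pos hm]
    ring_nf
  have hmat := tendsto_rmat hsc (tendsto_const_nhds (x := (0:ℝ)))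
    (tendsto_const_nhds (x := (0:ℝ))) (tendsto_const_nhds (x := (0:ℝ)))
  apply hmat.congr'
  filter_upwards [eventually_gt_atTop (1:ℝ)] with z hz
  have hzpos : (0:ℝ) < z := by linarith
  have hs : 0 < 1/z := by positivity
  have hwpos : (0:ℝ) < (4:ℝ)^(-(1/z)) := Real.rpow_pos_of_pos (by norm_num) _
  have hm : (0:ℝ) < 2/((4:ℝ)^(-(1/z))+1) := by positivity
  rw [inner_mean t ht ht1 hs, mpow_diag z _ 0 (ne_of_gt (Real.rpow_pos_of_pos hm t)),
    Real.zero_rpow (ne_of_gt hzpos)]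

lemma partD_not (t : ℝ) (ht : 0 < t) (ht1 : t < 1) :
    ¬ ((kaMean t (rmat (5/2) (3/2) (3/2) (5/2)) (rmat 1 0 0 0)) -
        rmat ((2:ℝ)^t) 0 0 0).PosSemidef := by
  intro hpsd
  rw [kaMeanAP t ht ht1, rmat_sub] at hpsd
  have h11 := (rmat_psd_diag hpsd).1
  have := Real.rpow_lt_rpow (by norm_num : (0:ℝ) ≤ 8/5) (by norm_num : (8/5:ℝ) < 2) ht
  linarith
end

end

/-- Fix `t ∈ (0,1)`.  None of the operator geometric means
`G_{t,z}`, `G̃_{t,z}` (`z ∈ (0,∞)`), `Ĝ_{t,z}` (`z ∈ (1,∞]`) is dominated by the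
`t`-weighted Kubo–Ando geometric mean: there are `2×2` positive semidefinite
counterexamples in each case. -/
theorem alternative_means_not_le_kuboAndo (t : ℝ) (ht : t ∈ Set.Ioo (0:ℝ) 1) :
    (∀ z : ℝ, 0 < z → ∃ A₁ A₂ : Matrix (Fin 2) (Fin 2) ℂ,
      A₁.PosSemidef ∧ A₂.PosSemidef ∧
        ¬ loewner (mpow (mpow A₁ (t / (2 * z)) * mpow A₂ ((1 - t) / z) *
            mpow A₁ (t / (2 * z))) z) (kaMean t A₁ A₂))
    ∧
    (∀ z : ℝ, 0 < z → ∃ A₁ A₂ : Matrix (Fin 2) (Fin 2) ℂ,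
      A₁.PosSemidef ∧ A₂.PosSemidef ∧
        ¬ loewner (mpow (mpow A₂ ((1 - t) / (2 * z)) * mpow A₁ (t / z) *
            mpow A₂ ((1 - t) / (2 * z))) z) (kaMean t A₁ A₂))
    ∧
    (∀ z : ℝ, 1 < z → ∃ A₁ A₂ : Matrix (Fin 2) (Fin 2) ℂ,
      A₁.PosSemidef ∧ A₂.PosSemidef ∧
        ¬ loewner (mpow (kaMean t (mpow A₁ (1 / z)) (mpow A₂ (1 / z))) z)
          (kaMean t A₁ A₂))
    ∧
    (∃ A₁ A₂ : Matrix (Fin 2) (Fin 2) ℂ, A₁.PosSemidef ∧ A₂.PosSemidef ∧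
      ∃ L : Matrix (Fin 2) (Fin 2) ℂ,
        Filter.Tendsto (fun z : ℝ => mpow (kaMean t (mpow A₁ (1 / z)) (mpow A₂ (1 / z))) z)
          Filter.atTop (nhds L) ∧
        ¬ loewner L (kaMean t A₁ A₂)) := by
  obtain ⟨ht0, ht1⟩ := ht
  refine ⟨?_, ?_, ?_, ?_⟩
  · intro z hz
    exact ⟨rmat (5/2) (3/2) (3/2) (5/2), rmat 1 0 0 0, A_psd, P_psd,
      by unfold loewner; exact partA t ht0 ht1 z hz⟩
  · intro z hz
    exact ⟨rmat (5/2) (3/2) (3/2) (5/2), rmat 1 0 0 0, A_psd, P_psd,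
      by unfold loewner; exact partB t ht0 ht1 z hz⟩
  · intro z hz
    exact ⟨rmat (5/2) (3/2) (3/2) (5/2), rmat 1 0 0 0, A_psd, P_psd,
      by unfold loewner; exact partC t ht0 ht1 z hz⟩
  · exact ⟨rmat (5/2) (3/2) (3/2) (5/2), rmat 1 0 0 0, A_psd, P_psd,
      rmat ((2:ℝ)^t) 0 0 0, partD_tendsto t ht0 ht1,
      by unfold loewner; exact partD_not t ht0 ht1⟩
end

section
/- Let Y be a nonempty set and G a Y-variable positive operator function that is tensor multiplicative, block additive, and has the reduction property. Then for every family A = (A_y)_{y∈Y} ∈ dom(G) of positive semidefinite operators on a d-dimensional complex Hilbert space, the scalar family det A := (det A_y)_{y∈Y} belongs to the one-dimensional part of dom(G), and det G(A) = G(det A). -/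
open MeasureTheory Filter Matrix
open scoped ComplexOrder ENNReal NNReal

namespace OpFunAux

variable {ι : Type} [Fintype ι] [DecidableEq ι] {d : ℕ}

lemma det_col {n : Type*} [DecidableEq n] [Fintype n] (M : Matrix n n ℂ) :
    M.det = ∑ σ : Equiv.Perm n, ((Equiv.Perm.sign σ : ℤ) : ℂ) * ∏ k, M k (σ k) := by
  rw [← Matrix.det_transpose, Matrix.det_apply']
  rfl

lemma det_submatrix_perm (M : Matrix ι ι ℂ) (e : Fin d ≃ ι) (τ : Equiv.Perm (Fin d)) :
    (M.submatrix (⇑e ∘ ⇑τ) ⇑e).det = ((Equiv.Perm.sign τ : ℤ) : ℂ) * M.det := by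
  have h : M.submatrix (⇑e ∘ ⇑τ) ⇑e = (M.submatrix ⇑e ⇑e).submatrix ⇑τ id := by
    rw [Matrix.submatrix_submatrix]
    rfl
  rw [h, Matrix.det_permute, Matrix.det_submatrix_equiv_self]

lemma det_submatrix_eq_zero (M : Matrix ι ι ℂ) {i : Fin d → ι}
    (h : ¬ Function.Injective i) (f : Fin d → ι) : (M.submatrix i f).det = 0 := by
  rw [Function.not_injective_iff] at h
  obtain ⟨a, b, hab, hne⟩ := h
  refine Matrix.det_zero_of_row_eq hne ?_
  funext m
  simp [Matrix.submatrix_apply, hab]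

lemma det_submatrix_key (X : Matrix ι ι ℂ) (i : Fin d → ι) (e : Fin d ≃ ι) :
    (X.submatrix i ⇑e).det = X.det * ((1 : Matrix ι ι ℂ).submatrix i ⇑e).det := by
  by_cases hi : Function.Injective i
  · have hb : Function.Bijective i :=
      (Fintype.bijective_iff_injective_and_card i).2 ⟨hi, Fintype.card_congr e⟩
    set τ : Equiv.Perm (Fin d) := (Equiv.ofBijective i hb).trans e.symm with hτ
    have hi' : i = ⇑e ∘ ⇑τ := by
      funext k
      simp [hτ, Equiv.ofBijective]
    rw [hi', det_submatrix_perm, det_submatrix_perm, Matrix.det_one]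
    ring
  · rw [det_submatrix_eq_zero X hi, det_submatrix_eq_zero 1 hi]
    ring

lemma sum_prod_det (X M : Matrix ι ι ℂ) (i : Fin d → ι) (e : Fin d ≃ ι) :
    ∑ j : Fin d → ι, (∏ k, X (i k) (j k)) * (M.submatrix j ⇑e).det
      = ((X * M).submatrix i ⇑e).det := by
  have hdet : ∀ j : Fin d → ι, (M.submatrix j ⇑e).det
      = ∑ σ : Equiv.Perm (Fin d), ((Equiv.Perm.sign σ : ℤ) : ℂ) * ∏ k, M (j k) (e (σ k)) := by
    intro j
    rw [det_col]
    rfl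
  have hdet2 : ((X * M).submatrix i ⇑e).det
      = ∑ σ : Equiv.Perm (Fin d), ((Equiv.Perm.sign σ : ℤ) : ℂ)
          * ∏ k, (X * M) (i k) (e (σ k)) := by
    rw [det_col]
    rfl
  simp only [hdet, Finset.mul_sum]
  rw [Finset.sum_comm, hdet2]
  refine Finset.sum_congr rfl fun σ _ => ?_
  simp only [Matrix.mul_apply]
  rw [Finset.prod_univ_sum, Finset.mul_sum]
  rw [Fintype.piFinset_univ]
  refine Finset.sum_congr rfl fun j _ => ?_
  rw [Finset.prod_mul_distrib]
  ring

lemma sum_star_det (e : Fin d ≃ ι) :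
    ∑ i : Fin d → ι, star (((1 : Matrix ι ι ℂ).submatrix i ⇑e).det)
        * ((1 : Matrix ι ι ℂ).submatrix i ⇑e).det = (d.factorial : ℂ) := by
  classical
  have h0 : ∀ i ∈ (Finset.univ : Finset (Fin d → ι)),
      i ∉ Finset.image (fun τ : Equiv.Perm (Fin d) => ⇑e ∘ ⇑τ) Finset.univ →
      star (((1 : Matrix ι ι ℂ).submatrix i ⇑e).det)
        * ((1 : Matrix ι ι ℂ).submatrix i ⇑e).det = 0 := by
    intro i _ hi
    have hni : ¬ Function.Injective i := by
      intro hinj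
      have hb : Function.Bijective i :=
        (Fintype.bijective_iff_injective_and_card i).2 ⟨hinj, Fintype.card_congr e⟩
      refine hi (Finset.mem_image.2 ⟨(Equiv.ofBijective i hb).trans e.symm, Finset.mem_univ _, ?_⟩)
      funext k
      simp [Equiv.ofBijective]
    rw [det_submatrix_eq_zero 1 hni]
    simp
  rw [← Finset.sum_subset (Finset.subset_univ _) h0]
  rw [Finset.sum_image (by
    intro τ _ τ' _ h
    exact Equiv.ext fun k => e.injective (congrFun h k))]
  have hterm : ∀ τ : Equiv.Perm (Fin d),
      star (((1 : Matrix ι ι ℂ).submatrix (⇑e ∘ ⇑τ) ⇑e).det)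
        * ((1 : Matrix ι ι ℂ).submatrix (⇑e ∘ ⇑τ) ⇑e).det = 1 := by
    intro τ
    rw [det_submatrix_perm, Matrix.det_one, mul_one]
    rcases Int.units_eq_one_or (Equiv.Perm.sign τ) with h | h <;> simp [h]
  rw [Finset.sum_congr rfl fun τ _ => hterm τ]
  simp [Finset.card_univ, Fintype.card_perm]

noncomputable def detVec (e : Fin d ≃ ι) : Matrix (Fin d → ι) (Fin 1) ℂ :=
  Matrix.of fun i _ => (((Real.sqrt d.factorial : ℝ) : ℂ))⁻¹
    * ((1 : Matrix ι ι ℂ).submatrix i ⇑e).det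

lemma detVec_norm (e : Fin d ≃ ι) : (detVec e)ᴴ * detVec e = 1 := by
  ext a b
  have hab : a = b := Subsingleton.elim a b
  subst hab
  rw [Matrix.one_apply_eq]
  simp only [Matrix.mul_apply, Matrix.conjTranspose_apply, detVec, Matrix.of_apply]
  have : ∀ i : Fin d → ι,
      star ((((Real.sqrt d.factorial : ℝ) : ℂ))⁻¹ * ((1 : Matrix ι ι ℂ).submatrix i ⇑e).det)
        * ((((Real.sqrt d.factorial : ℝ) : ℂ))⁻¹ * ((1 : Matrix ι ι ℂ).submatrix i ⇑e).det)
      = (((Real.sqrt d.factorial : ℝ) : ℂ))⁻¹ * (((Real.sqrt d.factorial : ℝ) : ℂ))⁻¹ *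
          (star (((1 : Matrix ι ι ℂ).submatrix i ⇑e).det)
            * ((1 : Matrix ι ι ℂ).submatrix i ⇑e).det) := by
    intro i
    rw [star_mul', star_inv₀]
    rw [show star ((Real.sqrt d.factorial : ℝ) : ℂ) = ((Real.sqrt d.factorial : ℝ) : ℂ) by
      rw [RCLike.star_def, Complex.conj_ofReal]]
    ring
  rw [Finset.sum_congr rfl fun i _ => this i, ← Finset.mul_sum, sum_star_det]
  have hpos : (0 : ℝ) < d.factorial := by exact_mod_cast d.factorial_pos
  have : (((Real.sqrt d.factorial : ℝ) : ℂ))⁻¹ * (((Real.sqrt d.factorial : ℝ) : ℂ))⁻¹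
      * (d.factorial : ℂ) = 1 := by
    rw [← Complex.ofReal_inv, ← Complex.ofReal_mul]
    rw [show ((d.factorial : ℂ)) = ((d.factorial : ℝ) : ℂ) by push_cast; ring]
    rw [← Complex.ofReal_mul]
    norm_cast
    rw [← mul_inv, Real.mul_self_sqrt hpos.le]
    field_simp
  exact this

lemma tensorPow_mul_detVec (X : Matrix ι ι ℂ) (e : Fin d ≃ ι) :
    tensorPow X d * detVec e = X.det • detVec e := by
  ext i b
  simp only [Matrix.mul_apply, tensorPow, detVec, Matrix.of_apply, Matrix.smul_apply,
    smul_eq_mul]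
  have : ∀ j : Fin d → ι,
      (∏ k, X (i k) (j k)) * ((((Real.sqrt d.factorial : ℝ) : ℂ))⁻¹
        * ((1 : Matrix ι ι ℂ).submatrix j ⇑e).det)
      = (((Real.sqrt d.factorial : ℝ) : ℂ))⁻¹ *
          ((∏ k, X (i k) (j k)) * ((1 : Matrix ι ι ℂ).submatrix j ⇑e).det) := by
    intro j; ring
  rw [Finset.sum_congr rfl fun j _ => this j, ← Finset.mul_sum, sum_prod_det, mul_one,
    det_submatrix_key]
  ring

lemma tensorPow_conjTranspose (X : Matrix ι ι ℂ) (n : ℕ) :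
    (tensorPow X n)ᴴ = tensorPow Xᴴ n := by
  ext i j
  simp [tensorPow, Matrix.conjTranspose_apply, star_prod]

lemma exists_complement {N : Type} [Fintype N] [DecidableEq N]
    (V : Matrix N (Fin 1) ℂ) (hV : Vᴴ * V = 1) :
    ∃ (m : ℕ) (W : Matrix N (Fin m) ℂ), Wᴴ * W = 1 ∧ Vᴴ * W = 0 ∧
      1 + m = Fintype.card N := by
  classical
  set v : EuclideanSpace ℂ N := WithLp.toLp 2 (fun i => V i 0) with hv
  have hvne : v ≠ 0 := by
    intro h
    have hV0 : V = 0 := by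
      ext i j
      have := congrArg (fun w : EuclideanSpace ℂ N => w i) h
      rw [show j = 0 from Subsingleton.elim j 0]
      simpa using this
    rw [hV0] at hV
    simp at hV
  set K : Submodule ℂ (EuclideanSpace ℂ N) := (ℂ ∙ v)ᗮ with hK
  set b := stdOrthonormalBasis ℂ K with hb
  refine ⟨Module.finrank ℂ K, Matrix.of fun i k => ((b k : EuclideanSpace ℂ N) i), ?_, ?_, ?_⟩
  · ext k l
    have horth := orthonormal_iff_ite.mp b.orthonormal k l
    rw [Submodule.coe_inner] at horth
    rw [PiLp.inner_apply] at horth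
    simp only [RCLike.inner_apply] at horth
    simp only [Matrix.mul_apply, Matrix.conjTranspose_apply, Matrix.of_apply, Matrix.one_apply]
    simpa [mul_comm] using horth
  · ext a k
    have hmem : ((b k : EuclideanSpace ℂ N)) ∈ (ℂ ∙ v)ᗮ := (b k).2
    have h0 : (inner ℂ v ((b k : EuclideanSpace ℂ N)) : ℂ) = 0 :=
      (Submodule.mem_orthogonal _ _).1 hmem v (Submodule.mem_span_singleton_self v)
    rw [PiLp.inner_apply] at h0
    simp only [RCLike.inner_apply] at h0
    simp only [Matrix.mul_apply, Matrix.conjTranspose_apply, Matrix.of_apply, Matrix.zero_apply]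
    rw [show a = 0 from Subsingleton.elim a 0]
    simpa [mul_comm] using h0
  · have hfr : Module.finrank ℂ (ℂ ∙ v) + Module.finrank ℂ ((ℂ ∙ v)ᗮ)
        = Module.finrank ℂ (EuclideanSpace ℂ N) :=
      Submodule.finrank_add_finrank_orthogonal _
    rw [finrank_span_singleton hvne, finrank_euclideanSpace] at hfr
    exact hfr

end OpFunAux

/-- **Statement 13 (determinant identity).**  Let `Y` be a nonempty set and `G` a
`Y`-variable positive operator function (unitarily covariant, with positive semidefinite
arguments and values) that is tensor multiplicative, block additive, and has the reduction
property.  Then for every family `A ∈ dom G` on a (nonzero) finite-dimensional space, the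
scalar family `det A` belongs to the one-dimensional part of `dom G` and
`det (G A) = G (det A)` (scalars being identified with operators on a one-dimensional
space). -/
theorem opFun_det_identity {Y : Type*} [Nonempty Y]
    (dom : ∀ (ι : Type) [Fintype ι] [DecidableEq ι], Set (Y → Matrix ι ι ℂ))
    (G : ∀ (ι : Type) [Fintype ι] [DecidableEq ι], (Y → Matrix ι ι ℂ) → Matrix ι ι ℂ)
    (hne : ∃ (ι : Type) (_ : Fintype ι) (_ : DecidableEq ι), (dom ι).Nonempty)
    (hdompsd : ∀ (ι : Type) [Fintype ι] [DecidableEq ι],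
      ∀ A ∈ dom ι, ∀ y, (A y).PosSemidef)
    (hGpsd : ∀ (ι : Type) [Fintype ι] [DecidableEq ι], ∀ A ∈ dom ι, (G ι A).PosSemidef)
    (hcov : ∀ (ι κ : Type) [Fintype ι] [DecidableEq ι] [Fintype κ] [DecidableEq κ],
      ∀ A ∈ dom ι, ∀ U : Matrix κ ι ℂ, Uᴴ * U = 1 → U * Uᴴ = 1 →
        (fun y => U * A y * Uᴴ) ∈ dom κ ∧
          G κ (fun y => U * A y * Uᴴ) = U * G ι A * Uᴴ)
    (htensor : ∀ (ι : Type) [Fintype ι] [DecidableEq ι], ∀ A ∈ dom ι, ∀ n : ℕ, 0 < n →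
      (fun y => tensorPow (A y) n) ∈ dom (Fin n → ι) ∧
        G (Fin n → ι) (fun y => tensorPow (A y) n) = tensorPow (G ι A) n)
    (hblock : ∀ (ι κ : Type) [Fintype ι] [DecidableEq ι] [Fintype κ] [DecidableEq κ],
      ∀ A ∈ dom ι, ∀ B ∈ dom κ,
        (fun y => Matrix.fromBlocks (A y) 0 0 (B y)) ∈ dom (ι ⊕ κ) ∧
          G (ι ⊕ κ) (fun y => Matrix.fromBlocks (A y) 0 0 (B y)) =
            Matrix.fromBlocks (G ι A) 0 0 (G κ B))
    (hred : ∀ (ι κ : Type) [Fintype ι] [DecidableEq ι] [Fintype κ] [DecidableEq κ],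
      ∀ A ∈ dom ι, ∀ V : Matrix ι κ ℂ, Vᴴ * V = 1 →
        (∀ y, A y * V = V * (Vᴴ * A y * V)) →
        (fun y => Vᴴ * A y * V) ∈ dom κ) :
    ∀ (ι : Type) [Fintype ι] [DecidableEq ι] [Nonempty ι], ∀ A ∈ dom ι,
      (fun y => (A y).det • (1 : Matrix (Fin 1) (Fin 1) ℂ)) ∈ dom (Fin 1) ∧
        G (Fin 1) (fun y => (A y).det • (1 : Matrix (Fin 1) (Fin 1) ℂ)) =
          (G ι A).det • (1 : Matrix (Fin 1) (Fin 1) ℂ) := by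

  intro ι _ _ _ A hA
  classical
  obtain ⟨e⟩ : Nonempty (Fin (Fintype.card ι) ≃ ι) := ⟨(Fintype.equivFin ι).symm⟩
  set d := Fintype.card ι with hd
  have hd0 : 0 < d := Fintype.card_pos
  set V : Matrix (Fin d → ι) (Fin 1) ℂ := OpFunAux.detVec e with hVdef
  have hVV : Vᴴ * V = 1 := OpFunAux.detVec_norm e
  obtain ⟨hTdom, hGT⟩ := htensor ι A hA d hd0
  set T : Y → Matrix (Fin d → ι) (Fin d → ι) ℂ := fun y => tensorPow (A y) d with hTdef
  have hkey : ∀ X : Matrix ι ι ℂ, tensorPow X d * V = X.det • V :=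
    fun X => OpFunAux.tensorPow_mul_detVec X e
  have hTV : ∀ y, T y * V = (A y).det • V := fun y => hkey (A y)
  have hAherm : ∀ y, (A y)ᴴ = A y := fun y => (hdompsd ι A hA y).1
  have hdetstar : ∀ y, star (A y).det = (A y).det := by
    intro y
    rw [← Matrix.det_conjTranspose, hAherm y]
  have hTherm : ∀ y, (T y)ᴴ = T y := by
    intro y
    show (tensorPow (A y) d)ᴴ = tensorPow (A y) d
    rw [OpFunAux.tensorPow_conjTranspose, hAherm y]
  have hVT : ∀ y, Vᴴ * T y = (A y).det • Vᴴ := by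
    intro y
    calc Vᴴ * T y = Vᴴ * (T y)ᴴ := by rw [hTherm y]
    _ = (T y * V)ᴴ := by rw [Matrix.conjTranspose_mul]
    _ = ((A y).det • V)ᴴ := by rw [hTV y]
    _ = (A y).det • Vᴴ := by rw [Matrix.conjTranspose_smul, hdetstar y]
  have hVTV : ∀ y, Vᴴ * T y * V = (A y).det • (1 : Matrix (Fin 1) (Fin 1) ℂ) := by
    intro y
    rw [Matrix.mul_assoc, hTV y, Matrix.mul_smul, hVV]
  have hinvV : ∀ y, T y * V = V * (Vᴴ * T y * V) := by
    intro y
    rw [hVTV y, hTV y, Matrix.mul_smul, Matrix.mul_one]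
  have hBdom0 := hred _ _ T hTdom V hVV hinvV
  have hBeq : (fun y => Vᴴ * T y * V) = fun y => (A y).det • (1 : Matrix (Fin 1) (Fin 1) ℂ) :=
    funext fun y => hVTV y
  rw [hBeq] at hBdom0
  refine ⟨hBdom0, ?_⟩
  obtain ⟨m, W, hWW, hVW, hcard⟩ := OpFunAux.exists_complement V hVV
  have hWV : Wᴴ * V = 0 := by
    have := congrArg Matrix.conjTranspose hVW
    simpa using this
  have hVTW : ∀ y, Vᴴ * T y * W = 0 := by
    intro y
    rw [hVT y, Matrix.smul_mul, hVW, smul_zero]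
  have hWTV : ∀ y, Wᴴ * T y * V = 0 := by
    intro y
    rw [Matrix.mul_assoc, hTV y, Matrix.mul_smul, hWV, smul_zero]
  set U : Matrix (Fin 1 ⊕ Fin m) (Fin d → ι) ℂ := Matrix.fromRows Vᴴ Wᴴ with hUdef
  have hUH : Uᴴ = Matrix.fromCols V W := by
    rw [hUdef, Matrix.conjTranspose_fromRows_eq_fromCols_conjTranspose,
      Matrix.conjTranspose_conjTranspose, Matrix.conjTranspose_conjTranspose]
  have hUUH : U * Uᴴ = 1 := by
    rw [hUH, hUdef, Matrix.fromRows_mul_fromCols, hVV, hVW, hWV, hWW,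
      Matrix.fromBlocks_one]
  have hUHU : Uᴴ * U = 1 := by
    have e2 : (Fin 1 ⊕ Fin m) ≃ (Fin d → ι) :=
      Fintype.equivOfCardEq (by simpa using hcard)
    exact (Matrix.mul_eq_one_comm_of_equiv e2).1 hUUH
  have hcompl : V * Vᴴ + W * Wᴴ = 1 := by
    rw [← hUHU, hUH, hUdef, Matrix.fromCols_mul_fromRows]
  have hinvW : ∀ y, T y * W = W * (Wᴴ * T y * W) := by
    intro y
    have h1 : T y * W = (V * Vᴴ + W * Wᴴ) * (T y * W) := by rw [hcompl, Matrix.one_mul]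
    have h2 : Vᴴ * (T y * W) = 0 := by
      rw [← Matrix.mul_assoc, hVT y, Matrix.smul_mul, hVW, smul_zero]
    rw [h1, Matrix.add_mul, Matrix.mul_assoc V, h2, Matrix.mul_zero, zero_add,
      Matrix.mul_assoc W, ← Matrix.mul_assoc Wᴴ]
  have hCdom := hred _ _ T hTdom W hWW hinvW
  obtain ⟨hUdom, hGU⟩ := hcov _ _ T hTdom U hUHU hUUH
  have hUXU : ∀ X : Matrix (Fin d → ι) (Fin d → ι) ℂ,
      U * X * Uᴴ = Matrix.fromBlocks (Vᴴ * X * V) (Vᴴ * X * W) (Wᴴ * X * V) (Wᴴ * X * W) := by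
    intro X
    rw [hUH, hUdef, Matrix.fromRows_mul, Matrix.fromRows_mul_fromCols]
  have hUTU : (fun y => U * T y * Uᴴ)
      = fun y => Matrix.fromBlocks ((A y).det • (1 : Matrix (Fin 1) (Fin 1) ℂ)) 0 0
          (Wᴴ * T y * W) := by
    funext y
    rw [hUXU (T y), hVTV y, hVTW y, hWTV y]
  obtain ⟨-, hGblock⟩ := hblock (Fin 1) (Fin m) _ hBdom0 _ hCdom
  have hchain : Matrix.fromBlocks
      (G (Fin 1) fun y => (A y).det • (1 : Matrix (Fin 1) (Fin 1) ℂ)) 0 0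
      (G (Fin m) fun y => Wᴴ * T y * W)
      = Matrix.fromBlocks (Vᴴ * tensorPow (G ι A) d * V) (Vᴴ * tensorPow (G ι A) d * W)
          (Wᴴ * tensorPow (G ι A) d * V) (Wᴴ * tensorPow (G ι A) d * W) := by
    rw [← hGblock, ← hUXU, ← hGT]
    rw [← hGU]
    congr 1
    rw [hUTU]
  have hGB := congrArg Matrix.toBlocks₁₁ hchain
  rw [Matrix.toBlocks_fromBlocks₁₁, Matrix.toBlocks_fromBlocks₁₁] at hGB
  rw [hGB, Matrix.mul_assoc, hkey (G ι A), Matrix.mul_smul, hVV]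
end

section
/- Let S and Q be orthogonal projections on a finite-dimensional complex Hilbert space H, and let ε ∈ [0,1). Then the following are equivalent: (i) ‖SQv‖² ≤ ε²‖Qv‖² for every v ∈ H; (ii) QSQ ≤ ε²Q; (iii) overlap(S,Q) ≤ ε, where overlap(S,Q) := sup{ |⟨v,w⟩| : v ∈ ran S, w ∈ ran Q, ‖v‖ = ‖w‖ = 1 } (interpreted as 0 if either range is the zero subspace); (iv) (1-ε)(Q∨S) ≤ Q + S ≤ (1+ε)(Q∨S), where Q∨S denotes the orthogonal projection onto ran Q + ran S; (v) SQS ≤ ε²S; (vi) ‖QSv‖² ≤ ε²‖Sv‖² for every v ∈ H. -/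
set_option maxHeartbeats 1000000


open Matrix
open scoped ComplexOrder

noncomputable section

/-- Squared Euclidean norm of a vector in `ℂ^d`. -/
def nsq {d : ℕ} (v : Fin d → ℂ) : ℝ := (dotProduct (star v) v).re

/-- The overlap of two orthogonal projections: the supremum of `|⟨v,w⟩|` over unit vectors
`v ∈ ran S`, `w ∈ ran Q` (equal to `0` if either range is the zero subspace, since
`sSup ∅ = 0`). -/
def overlap {d : ℕ} (S Q : Matrix (Fin d) (Fin d) ℂ) : ℝ :=
  sSup {r : ℝ | ∃ v w : Fin d → ℂ, S.mulVec v = v ∧ Q.mulVec w = w ∧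
    nsq v = 1 ∧ nsq w = 1 ∧ r = ‖dotProduct (star v) w‖}

end

namespace EpsOrtho
variable {d : ℕ}

noncomputable def tv (x : Fin d → ℂ) : EuclideanSpace ℂ (Fin d) := (WithLp.equiv 2 _).symm x

lemma ip_inner (x y : Fin d → ℂ) :
    dotProduct (star x) y = (inner ℂ (tv x) (tv y) : ℂ) :=
  by simp only [tv, WithLp.equiv_symm_apply, EuclideanSpace.inner_toLp_toLp]; exact dotProduct_comm _ _

lemma tv_add (x y : Fin d → ℂ) : tv (x + y) = tv x + tv y := rfl
lemma tv_smul (c : ℂ) (x : Fin d → ℂ) : tv (c • x) = c • tv x := rfl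
lemma tv_eq_zero {x : Fin d → ℂ} (h : tv x = 0) : x = 0 := by
  simpa [tv] using congrArg (WithLp.equiv 2 (Fin d → ℂ)) h

lemma nsq_eq (v : Fin d → ℂ) : nsq v = ‖tv v‖ ^ 2 := by
  rw [nsq, ip_inner, ← inner_self_eq_norm_sq (𝕜 := ℂ)]; rfl

lemma nsq_nonneg (v : Fin d → ℂ) : 0 ≤ nsq v := by rw [nsq_eq]; positivity

lemma norm_tv_of_nsq_one {v : Fin d → ℂ} (h : nsq v = 1) : ‖tv v‖ = 1 := by
  rw [nsq_eq] at h
  nlinarith [norm_nonneg (tv v)]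

lemma ip_self (v : Fin d → ℂ) : dotProduct (star v) v = ((nsq v : ℝ) : ℂ) := by
  rw [ip_inner, nsq_eq, inner_self_eq_norm_sq_to_K]; norm_num

lemma herm_move {M : Matrix (Fin d) (Fin d) ℂ} (hM : M.IsHermitian) (x y : Fin d → ℂ) :
    dotProduct (star (M *ᵥ x)) y = dotProduct (star x) (M *ᵥ y) := by
  rw [star_mulVec, ← dotProduct_mulVec, hM.eq]

lemma proj_fix {M : Matrix (Fin d) (Fin d) ℂ} (hMp : M * M = M) (x : Fin d → ℂ) :
    M *ᵥ (M *ᵥ x) = M *ᵥ x := by rw [mulVec_mulVec, hMp]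

lemma proj_quad {M : Matrix (Fin d) (Fin d) ℂ} (hM : M.IsHermitian) (hMp : M * M = M)
    (x : Fin d → ℂ) :
    dotProduct (star x) (M *ᵥ x) = ((nsq (M *ᵥ x) : ℝ) : ℂ) := by
  conv_lhs => rw [← hMp, ← mulVec_mulVec, ← herm_move hM]
  exact ip_self _

lemma posSemidef_of_re {M : Matrix (Fin d) (Fin d) ℂ} (hM : M.IsHermitian)
    (h : ∀ x, 0 ≤ (dotProduct (star x) (M *ᵥ x)).re) : M.PosSemidef := by
  refine Matrix.PosSemidef.of_dotProduct_mulVec_nonneg hM (fun x => ?_)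
  rw [Complex.nonneg_iff]
  refine ⟨h x, ?_⟩
  have h1 : star (dotProduct (star x) (M *ᵥ x)) = dotProduct (star x) (M *ᵥ x) := by
    rw [← star_dotProduct]
    exact herm_move hM x x
  have := congrArg Complex.im h1
  simp only [Complex.star_def, Complex.conj_im] at this
  linarith

lemma posSemidef_re {M : Matrix (Fin d) (Fin d) ℂ} (h : M.PosSemidef) (x : Fin d → ℂ) :
    0 ≤ (dotProduct (star x) (M *ᵥ x)).re := ((Complex.nonneg_iff).mp (h.dotProduct_mulVec_nonneg x)).1

lemma herm_smul {Q : Matrix (Fin d) (Fin d) ℂ} (hQ : Q.IsHermitian) (r : ℝ) :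
    ((r : ℝ) • Q).IsHermitian := by
  unfold Matrix.IsHermitian
  rw [conjTranspose_smul, star_trivial, hQ.eq]

lemma herm_comb {S Q : Matrix (Fin d) (Fin d) ℂ}
    (hS : S.IsHermitian) (hQ : Q.IsHermitian) (r : ℝ) :
    ((r : ℝ) • Q - Q * S * Q).IsHermitian := by
  have h1 : (Q * S * Q).IsHermitian := by
    have := isHermitian_conjTranspose_mul_mul Q hS
    rwa [hQ.eq] at this
  exact (herm_smul hQ r).sub h1

lemma quad_comb {S Q : Matrix (Fin d) (Fin d) ℂ}
    (hS : S.IsHermitian) (hSproj : S * S = S)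
    (hQ : Q.IsHermitian) (hQproj : Q * Q = Q) (r : ℝ) (x : Fin d → ℂ) :
    dotProduct (star x) (((r : ℝ) • Q - Q * S * Q) *ᵥ x)
      = ((r * nsq (Q *ᵥ x) - nsq (S *ᵥ (Q *ᵥ x)) : ℝ) : ℂ) := by
  rw [sub_mulVec, dotProduct_sub, smul_mulVec, dotProduct_smul,
    proj_quad hQ hQproj]
  have h2 : dotProduct (star x) ((Q * S * Q) *ᵥ x)
      = ((nsq (S *ᵥ (Q *ᵥ x)) : ℝ) : ℂ) := by
    rw [← mulVec_mulVec, ← mulVec_mulVec, ← herm_move hQ, proj_quad hS hSproj]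
  rw [h2, Complex.real_smul]
  push_cast
  ring

lemma AB {S Q : Matrix (Fin d) (Fin d) ℂ}
    (hS : S.IsHermitian) (hSproj : S * S = S)
    (hQ : Q.IsHermitian) (hQproj : Q * Q = Q) (ε : ℝ) :
    (∀ v : Fin d → ℂ, nsq (S.mulVec (Q.mulVec v)) ≤ ε ^ 2 * nsq (Q.mulVec v)) ↔
      ((ε ^ 2 : ℝ) • Q - Q * S * Q).PosSemidef := by
  constructor
  · intro h
    refine posSemidef_of_re (herm_comb hS hQ _) (fun x => ?_)
    rw [quad_comb hS hSproj hQ hQproj, Complex.ofReal_re]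
    linarith [h x]
  · intro h v
    have := posSemidef_re h v
    rw [quad_comb hS hSproj hQ hQproj, Complex.ofReal_re] at this
    linarith

/-- the overlap set is bounded above by 1 -/
lemma overlap_bddAbove (S Q : Matrix (Fin d) (Fin d) ℂ) :
    BddAbove {r : ℝ | ∃ v w : Fin d → ℂ, S.mulVec v = v ∧ Q.mulVec w = w ∧
      nsq v = 1 ∧ nsq w = 1 ∧ r = ‖dotProduct (star v) w‖} := by
  refine ⟨1, fun r hr => ?_⟩
  obtain ⟨v, w, -, -, hv1, hw1, rfl⟩ := hr
  rw [ip_inner]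
  calc ‖(inner ℂ (tv v) (tv w) : ℂ)‖ ≤ ‖tv v‖ * ‖tv w‖ := norm_inner_le_norm _ _
  _ = 1 := by rw [norm_tv_of_nsq_one hv1, norm_tv_of_nsq_one hw1]; ring

/-- cross bound from the overlap -/
lemma cross {S Q : Matrix (Fin d) (Fin d) ℂ} {ε : ℝ} (hε0 : 0 ≤ ε)
    (hov : overlap S Q ≤ ε) (v w : Fin d → ℂ)
    (hv : S *ᵥ v = v) (hw : Q *ᵥ w = w) :
    ‖dotProduct (star v) w‖ ≤ ε * ‖tv v‖ * ‖tv w‖ := by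
  rcases eq_or_ne v 0 with rfl | hv0
  · simp [tv]
  rcases eq_or_ne w 0 with rfl | hw0
  · simp [tv]
  have hnv : (0:ℝ) < ‖tv v‖ := by
    rw [norm_pos_iff]; exact fun h => hv0 (tv_eq_zero h)
  have hnw : (0:ℝ) < ‖tv w‖ := by
    rw [norm_pos_iff]; exact fun h => hw0 (tv_eq_zero h)
  set v' : Fin d → ℂ := ((‖tv v‖⁻¹ : ℝ) : ℂ) • v with hv'def
  set w' : Fin d → ℂ := ((‖tv w‖⁻¹ : ℝ) : ℂ) • w with hw'def
  have hv' : S *ᵥ v' = v' := by rw [hv'def, mulVec_smul, hv]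
  have hw' : Q *ᵥ w' = w' := by rw [hw'def, mulVec_smul, hw]
  have hnv' : nsq v' = 1 := by
    rw [nsq_eq, hv'def, tv_smul, norm_smul]
    simp only [Complex.norm_real, Real.norm_eq_abs, abs_of_pos (inv_pos.mpr hnv)]
    field_simp
  have hnw' : nsq w' = 1 := by
    rw [nsq_eq, hw'def, tv_smul, norm_smul]
    simp only [Complex.norm_real, Real.norm_eq_abs, abs_of_pos (inv_pos.mpr hnw)]
    field_simp
  have hmem : ‖dotProduct (star v') w'‖ ∈
      {r : ℝ | ∃ v w : Fin d → ℂ, S.mulVec v = v ∧ Q.mulVec w = w ∧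
        nsq v = 1 ∧ nsq w = 1 ∧ r = ‖dotProduct (star v) w‖} :=
    ⟨v', w', hv', hw', hnv', hnw', rfl⟩
  have hle : ‖dotProduct (star v') w'‖ ≤ ε :=
    le_trans (le_csSup (overlap_bddAbove S Q) hmem) hov
  have hcalc : ‖dotProduct (star v') w'‖
      = ‖tv v‖⁻¹ * ‖tv w‖⁻¹ * ‖dotProduct (star v) w‖ := by
    rw [hv'def, hw'def, star_smul, smul_dotProduct, dotProduct_smul]
    simp only [smul_eq_mul, norm_mul, Complex.norm_real, Real.norm_eq_abs, RCLike.star_def,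
      Complex.norm_conj]
    rw [abs_of_pos (inv_pos.mpr hnv), abs_of_pos (inv_pos.mpr hnw)]
    ring
  rw [hcalc] at hle
  have h2 := mul_le_mul_of_nonneg_left hle (le_of_lt (mul_pos hnv hnw))
  calc ‖dotProduct (star v) w‖
      = (‖tv v‖ * ‖tv w‖) * (‖tv v‖⁻¹ * ‖tv w‖⁻¹ * ‖dotProduct (star v) w‖) := by
        field_simp
  _ ≤ (‖tv v‖ * ‖tv w‖) * ε := h2
  _ = ε * ‖tv v‖ * ‖tv w‖ := by ring

lemma AC {S Q : Matrix (Fin d) (Fin d) ℂ}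
    (hS : S.IsHermitian) (hSproj : S * S = S)
    (hQ : Q.IsHermitian) (hQproj : Q * Q = Q) {ε : ℝ} (hε0 : 0 ≤ ε) :
    (∀ v : Fin d → ℂ, nsq (S.mulVec (Q.mulVec v)) ≤ ε ^ 2 * nsq (Q.mulVec v)) ↔
      overlap S Q ≤ ε := by
  constructor
  · intro h
    apply Real.sSup_le _ hε0
    rintro r ⟨v, w, hv, hw, hv1, hw1, rfl⟩
    have key : dotProduct (star v) w
        = dotProduct (star v) (S *ᵥ (Q *ᵥ w)) := by
      rw [hw, ← herm_move hS, hv]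
    rw [hw] at key
    have hb : ‖tv (S *ᵥ w)‖ ≤ ε := by
      have h1 := h w
      rw [hw, hw1] at h1
      have h2 : ‖tv (S *ᵥ w)‖ ^ 2 ≤ ε ^ 2 := by
        rw [← nsq_eq]
        linarith
      nlinarith [norm_nonneg (tv (S *ᵥ w))]
    calc ‖dotProduct (star v) w‖
        = ‖(inner ℂ (tv v) (tv (S *ᵥ w)) : ℂ)‖ := by
          rw [key, ip_inner]
    _ ≤ ‖tv v‖ * ‖tv (S *ᵥ w)‖ := norm_inner_le_norm _ _
    _ = ‖tv (S *ᵥ w)‖ := by rw [norm_tv_of_nsq_one hv1, one_mul]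
    _ ≤ ε := hb
  · intro h v
    set y := S *ᵥ (Q *ᵥ v) with hydef
    have hy : S *ᵥ y = y := proj_fix hSproj _
    have key : dotProduct (star y) (Q *ᵥ v) = ((nsq y : ℝ) : ℂ) := by
      conv_lhs => rw [← hy]
      rw [herm_move hS, ← hydef]
      exact ip_self y
    have hcross := cross hε0 h y (Q *ᵥ v) hy (proj_fix hQproj v)
    rw [key, Complex.norm_real, Real.norm_eq_abs, abs_of_nonneg (nsq_nonneg y)] at hcross
    have h1 : nsq y = ‖tv y‖ ^ 2 := nsq_eq y
    have h2 : nsq (Q *ᵥ v) = ‖tv (Q *ᵥ v)‖ ^ 2 := nsq_eq _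
    rw [h1, h2]
    rw [h1] at hcross
    rcases eq_or_lt_of_le (norm_nonneg (tv y)) with h0 | h0
    · rw [← h0]
      norm_num
      positivity
    · have hY : ‖tv y‖ ≤ ε * ‖tv (Q *ᵥ v)‖ := by nlinarith
      nlinarith [norm_nonneg (tv (Q *ᵥ v)),
        mul_nonneg hε0 (norm_nonneg (tv (Q *ᵥ v)))]

lemma overlap_comm (S Q : Matrix (Fin d) (Fin d) ℂ) : overlap S Q = overlap Q S := by
  unfold overlap
  congr 1
  ext r
  constructor
  · rintro ⟨v, w, hv, hw, h1, h2, rfl⟩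
    refine ⟨w, v, hw, hv, h2, h1, ?_⟩
    rw [star_dotProduct (v := w) (w := v)]
    simp
  · rintro ⟨v, w, hv, hw, h1, h2, rfl⟩
    refine ⟨w, v, hw, hv, h2, h1, ?_⟩
    rw [star_dotProduct (v := w) (w := v)]
    simp

lemma vec_ext {u a : Fin d → ℂ}
    (h : ∀ y, dotProduct (star y) u = dotProduct (star y) a) : u = a := by
  have key : tv u = tv a := by
    apply ext_inner_left ℂ
    intro z
    have := h ((WithLp.equiv 2 (Fin d → ℂ)) z)
    rw [ip_inner, ip_inner] at this
    have hz : tv ((WithLp.equiv 2 (Fin d → ℂ)) z) = z := by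
      simp [tv]
    rwa [hz] at this
  simpa [tv] using congrArg (WithLp.equiv 2 (Fin d → ℂ)) key

lemma herm_of_move {P : Matrix (Fin d) (Fin d) ℂ}
    (h : ∀ x y, dotProduct (star (P *ᵥ x)) y = dotProduct (star x) (P *ᵥ y)) :
    P.IsHermitian := by
  apply Matrix.IsHermitian.ext
  intro i j
  have := h (Pi.single i 1) (Pi.single j 1)
  simpa [dotProduct_single, single_dotProduct, mulVec_single, dotProduct, Pi.single_apply,
    Finset.sum_ite_eq, apply_ite] using this

lemma fix_of_mem_range {P : Matrix (Fin d) (Fin d) ℂ} (hPp : P * P = P) {u : Fin d → ℂ}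
    (hu : u ∈ LinearMap.range P.mulVecLin) : P *ᵥ u = u := by
  obtain ⟨y, rfl⟩ := hu
  rw [mulVecLin_apply]
  exact proj_fix hPp y

lemma exists_proj (K : Submodule ℂ (Fin d → ℂ)) :
    ∃ P : Matrix (Fin d) (Fin d) ℂ, P.IsHermitian ∧ P * P = P ∧
      LinearMap.range P.mulVecLin = K := by
  classical
  set e : EuclideanSpace ℂ (Fin d) ≃ₗ[ℂ] (Fin d → ℂ) := WithLp.linearEquiv 2 ℂ (Fin d → ℂ)
    with hedef
  set K' : Submodule ℂ (EuclideanSpace ℂ (Fin d)) := K.comap e.toLinearMap with hK'def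
  set L : (Fin d → ℂ) →ₗ[ℂ] (Fin d → ℂ) :=
    e.toLinearMap ∘ₗ K'.subtype ∘ₗ (K'.orthogonalProjection).toLinearMap
      ∘ₗ e.symm.toLinearMap with hLdef
  have hLx : ∀ x : Fin d → ℂ, L x = e ((K'.orthogonalProjection (tv x) : EuclideanSpace ℂ (Fin d))) :=
    fun x => rfl
  have htvL : ∀ x : Fin d → ℂ, tv (L x) = (K'.orthogonalProjection (tv x) : EuclideanSpace ℂ (Fin d)) :=
    fun x => rfl
  have hmv : ∀ x, (LinearMap.toMatrix' L) *ᵥ x = L x := fun x => by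
    rw [← Matrix.toLin'_apply, Matrix.toLin'_toMatrix']
  refine ⟨LinearMap.toMatrix' L, ?_, ?_, ?_⟩
  · apply herm_of_move
    intro x y
    rw [hmv, hmv, ip_inner, ip_inner, htvL, htvL]
    exact Submodule.inner_starProjection_left_eq_right K' (tv x) (tv y)
  · apply Matrix.toLin'.injective
    rw [Matrix.toLin'_mul, Matrix.toLin'_toMatrix']
    apply LinearMap.ext
    intro x
    show L (L x) = L x
    rw [hLx (L x), hLx x]
    have h9 : tv (e ((K'.orthogonalProjection (tv x) : EuclideanSpace ℂ (Fin d))))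
        = (K'.orthogonalProjection (tv x) : EuclideanSpace ℂ (Fin d)) := rfl
    rw [h9, Submodule.orthogonalProjection_mem_subspace_eq_self]
  · apply le_antisymm
    · rintro u ⟨x, rfl⟩
      rw [mulVecLin_apply, hmv, hLx]
      exact (K'.orthogonalProjection (tv x)).2
    · intro x hx
      refine ⟨x, ?_⟩
      rw [mulVecLin_apply, hmv, hLx]
      have hxK' : tv x ∈ K' := hx
      rw [show ((K'.orthogonalProjection (tv x) : EuclideanSpace ℂ (Fin d))) = tv x from
          Submodule.starProjection_eq_self_iff.mpr hxK']
      rfl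

lemma quad_sum {Q S : Matrix (Fin d) (Fin d) ℂ}
    (hQ : Q.IsHermitian) (hQproj : Q * Q = Q)
    (hS : S.IsHermitian) (hSproj : S * S = S) (x : Fin d → ℂ) :
    dotProduct (star x) ((Q + S) *ᵥ x)
      = ((nsq (Q *ᵥ x) + nsq (S *ᵥ x) : ℝ) : ℂ) := by
  rw [add_mulVec, dotProduct_add, proj_quad hQ hQproj, proj_quad hS hSproj]
  push_cast
  ring

lemma quad_smulP {P : Matrix (Fin d) (Fin d) ℂ}
    (hP : P.IsHermitian) (hPp : P * P = P) (r : ℝ) (x : Fin d → ℂ) :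
    dotProduct (star x) (((r : ℝ) • P) *ᵥ x)
      = ((r * nsq (P *ᵥ x) : ℝ) : ℂ) := by
  rw [smul_mulVec, dotProduct_smul, proj_quad hP hPp, Complex.real_smul]
  push_cast
  ring

lemma CD {S Q : Matrix (Fin d) (Fin d) ℂ}
    (hS : S.IsHermitian) (hSproj : S * S = S)
    (hQ : Q.IsHermitian) (hQproj : Q * Q = Q)
    {ε : ℝ} (hε : ε ∈ Set.Ico (0:ℝ) 1) :
    overlap S Q ≤ ε ↔
      (∀ P : Matrix (Fin d) (Fin d) ℂ, P.IsHermitian → P * P = P →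
        LinearMap.range P.mulVecLin =
          LinearMap.range Q.mulVecLin ⊔ LinearMap.range S.mulVecLin →
        ((Q + S - (1 - ε) • P).PosSemidef ∧ ((1 + ε) • P - (Q + S)).PosSemidef)) := by
  obtain ⟨hε0, hε1⟩ := hε
  constructor
  · intro hov P hP hPp hran
    -- absorption identities
    have hmemQ : ∀ x, Q *ᵥ x ∈ LinearMap.range P.mulVecLin := by
      intro x
      rw [hran]
      exact Submodule.mem_sup_left ⟨x, mulVecLin_apply _ _⟩
    have hmemS : ∀ x, S *ᵥ x ∈ LinearMap.range P.mulVecLin := by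
      intro x
      rw [hran]
      exact Submodule.mem_sup_right ⟨x, mulVecLin_apply _ _⟩
    have hPQ : ∀ x, P *ᵥ (Q *ᵥ x) = Q *ᵥ x := fun x => fix_of_mem_range hPp (hmemQ x)
    have hPS : ∀ x, P *ᵥ (S *ᵥ x) = S *ᵥ x := fun x => fix_of_mem_range hPp (hmemS x)
    have hQP : ∀ x, Q *ᵥ (P *ᵥ x) = Q *ᵥ x := by
      intro x
      apply vec_ext
      intro y
      calc dotProduct (star y) (Q *ᵥ (P *ᵥ x))
          = dotProduct (star (Q *ᵥ y)) (P *ᵥ x) := (herm_move hQ y _).symm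
      _ = dotProduct (star (P *ᵥ (Q *ᵥ y))) x := (herm_move hP _ x).symm
      _ = dotProduct (star (Q *ᵥ y)) x := by rw [hPQ y]
      _ = dotProduct (star y) (Q *ᵥ x) := herm_move hQ y x
    have hSP : ∀ x, S *ᵥ (P *ᵥ x) = S *ᵥ x := by
      intro x
      apply vec_ext
      intro y
      calc dotProduct (star y) (S *ᵥ (P *ᵥ x))
          = dotProduct (star (S *ᵥ y)) (P *ᵥ x) := (herm_move hS y _).symm
      _ = dotProduct (star (P *ᵥ (S *ᵥ y))) x := (herm_move hP _ x).symm
      _ = dotProduct (star (S *ᵥ y)) x := by rw [hPS y]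
      _ = dotProduct (star y) (S *ᵥ x) := herm_move hS y x
    -- extra mulVec-fix corrections used below
    -- the two key real inequalities
    have upper : ∀ x, nsq (Q *ᵥ x) + nsq (S *ᵥ x) ≤ (1 + ε) * nsq (P *ᵥ x) := by
      intro x
      set A := ‖tv (Q *ᵥ x)‖ with hA
      set B := ‖tv (S *ᵥ x)‖ with hB
      set p := ‖tv (P *ᵥ x)‖ with hp
      set u := Q *ᵥ x + S *ᵥ x with hu
      have f1 : dotProduct (star u) (P *ᵥ x)
          = ((nsq (Q *ᵥ x) + nsq (S *ᵥ x) : ℝ) : ℂ) := by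
        rw [hu, star_add, add_dotProduct]
        have e1 : dotProduct (star (Q *ᵥ x)) (P *ᵥ x)
            = ((nsq (Q *ᵥ x) : ℝ) : ℂ) := by
          rw [← herm_move hP, hPQ, herm_move hQ, proj_quad hQ hQproj]
        have e2 : dotProduct (star (S *ᵥ x)) (P *ᵥ x)
            = ((nsq (S *ᵥ x) : ℝ) : ℂ) := by
          rw [← herm_move hP, hPS, herm_move hS, proj_quad hS hSproj]
        rw [e1, e2]
        push_cast
        ring
      have hcross := cross hε0 hov (S *ᵥ x) (Q *ᵥ x) (proj_fix hSproj x) (proj_fix hQproj x)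
      have hreuv : (2:ℝ) * (inner ℂ (tv (Q *ᵥ x)) (tv (S *ᵥ x)) : ℂ).re ≤ 2 * (ε * B * A) := by
        have habs : ‖(inner ℂ (tv (Q *ᵥ x)) (tv (S *ᵥ x)) : ℂ)‖ ≤ ε * B * A := by
          rw [← ip_inner]
          have : dotProduct (star (Q *ᵥ x)) (S *ᵥ x)
              = star (dotProduct (star (S *ᵥ x)) (Q *ᵥ x)) :=
            star_dotProduct (v := Q *ᵥ x) (w := S *ᵥ x)
          rw [this]
          simpa using hcross
        have h9 := (abs_le.mp
          (Complex.abs_re_le_norm ((inner ℂ (tv (Q *ᵥ x)) (tv (S *ᵥ x)) : ℂ)))).2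
        linarith [le_trans h9 habs]
      have f2 : ‖tv u‖ ^ 2 ≤ (1 + ε) * (nsq (Q *ᵥ x) + nsq (S *ᵥ x)) := by
        have hsplit : tv u = tv (Q *ᵥ x) + tv (S *ᵥ x) := rfl
        rw [hsplit, norm_add_sq (𝕜 := ℂ)]
        have hA2 : ‖tv (Q *ᵥ x)‖ ^ 2 = nsq (Q *ᵥ x) := (nsq_eq _).symm
        have hB2 : ‖tv (S *ᵥ x)‖ ^ 2 = nsq (S *ᵥ x) := (nsq_eq _).symm
        rw [hA2, hB2]
        have h2ab : 2 * (ε * B * A) ≤ ε * (nsq (Q *ᵥ x) + nsq (S *ᵥ x)) := by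
          rw [← hA2, ← hB2, ← hA, ← hB]
          nlinarith [sq_nonneg (A - B), norm_nonneg (tv (Q *ᵥ x)), norm_nonneg (tv (S *ᵥ x))]
        have : (RCLike.re (inner ℂ (tv (Q *ᵥ x)) (tv (S *ᵥ x)) : ℂ)) =
            ((inner ℂ (tv (Q *ᵥ x)) (tv (S *ᵥ x)) : ℂ)).re := rfl
        rw [this]
        linarith
      have f3 : (dotProduct (star u) (P *ᵥ x)).re ≤ ‖tv u‖ * p := by
        rw [ip_inner]
        simpa using re_inner_le_norm (𝕜 := ℂ) (tv u) (tv (P *ᵥ x))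
      rw [f1, Complex.ofReal_re] at f3
      have ht0 : 0 ≤ nsq (Q *ᵥ x) + nsq (S *ᵥ x) := by
        linarith [nsq_nonneg (Q *ᵥ x), nsq_nonneg (S *ᵥ x)]
      have hpn : nsq (P *ᵥ x) = p ^ 2 := nsq_eq _
      rw [hpn]
      rcases eq_or_lt_of_le ht0 with h0 | h0
      · nlinarith [sq_nonneg p]
      · nlinarith [norm_nonneg (tv u), norm_nonneg (tv (P *ᵥ x)), sq_nonneg (‖tv u‖ - p)]
    have lower : ∀ x, (1 - ε) * nsq (P *ᵥ x) ≤ nsq (Q *ᵥ x) + nsq (S *ᵥ x) := by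
      intro x
      have hmem : P *ᵥ x ∈ LinearMap.range Q.mulVecLin ⊔ LinearMap.range S.mulVecLin := by
        rw [← hran]
        exact ⟨x, mulVecLin_apply _ _⟩
      obtain ⟨y, hy, z, hz, hyz⟩ := Submodule.mem_sup.mp hmem
      have hQy : Q *ᵥ y = y := fix_of_mem_range hQproj hy
      have hSz : S *ᵥ z = z := fix_of_mem_range hSproj hz
      set A := ‖tv (Q *ᵥ x)‖ with hA
      set B := ‖tv (S *ᵥ x)‖ with hB
      set Yn := ‖tv y‖ with hYn
      set Zn := ‖tv z‖ with hZn
      have g2 : (dotProduct (star (P *ᵥ x)) y).re ≤ A * Yn := by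
        have e1 : dotProduct (star (P *ᵥ x)) y
            = dotProduct (star (Q *ᵥ x)) y := by
          conv_lhs => rw [← hQy]
          rw [← herm_move hQ, hQP]
        rw [e1, ip_inner]
        calc ((inner ℂ (tv (Q *ᵥ x)) (tv y) : ℂ)).re
            ≤ ‖(inner ℂ (tv (Q *ᵥ x)) (tv y) : ℂ)‖ := Complex.re_le_norm _
        _ = ‖(inner ℂ (tv (Q *ᵥ x)) (tv y) : ℂ)‖ := rfl
        _ ≤ A * Yn := norm_inner_le_norm _ _
      have g3 : (dotProduct (star (P *ᵥ x)) z).re ≤ B * Zn := by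
        have e1 : dotProduct (star (P *ᵥ x)) z
            = dotProduct (star (S *ᵥ x)) z := by
          conv_lhs => rw [← hSz]
          rw [← herm_move hS, hSP]
        rw [e1, ip_inner]
        calc ((inner ℂ (tv (S *ᵥ x)) (tv z) : ℂ)).re
            ≤ ‖(inner ℂ (tv (S *ᵥ x)) (tv z) : ℂ)‖ := Complex.re_le_norm _
        _ = ‖(inner ℂ (tv (S *ᵥ x)) (tv z) : ℂ)‖ := rfl
        _ ≤ B * Zn := norm_inner_le_norm _ _
      have g1 : nsq (P *ᵥ x) = (dotProduct (star (P *ᵥ x)) y).re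
          + (dotProduct (star (P *ᵥ x)) z).re := by
        have : dotProduct (star (P *ᵥ x)) (P *ᵥ x)
            = dotProduct (star (P *ᵥ x)) y + dotProduct (star (P *ᵥ x)) z := by
          conv_lhs => rw [← hyz]
          rw [dotProduct_add, hyz]
        have h2 := congrArg Complex.re this
        rw [ip_self, Complex.ofReal_re] at h2
        simpa [Complex.add_re] using h2
      have k1 : nsq (P *ᵥ x) ≤ A * Yn + B * Zn := by
        rw [g1]; linarith
      have hcross := cross hε0 hov z y hSz hQy
      have g4 : Yn ^ 2 + Zn ^ 2 - 2 * (ε * Zn * Yn) ≤ nsq (P *ᵥ x) := by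
        have hsplit : tv (P *ᵥ x) = tv y + tv z := by
          rw [← hyz]; rfl
        rw [nsq_eq, hsplit, norm_add_sq (𝕜 := ℂ)]
        have habs : ‖(inner ℂ (tv y) (tv z) : ℂ)‖ ≤ ε * Zn * Yn := by
          rw [← ip_inner]
          have : dotProduct (star y) z
              = star (dotProduct (star z) y) := star_dotProduct (v := y) (w := z)
          rw [this]
          simpa using hcross
        have hre : -(ε * Zn * Yn) ≤ ((inner ℂ (tv y) (tv z) : ℂ)).re := by
          have := (abs_le.mp (Complex.abs_re_le_norm ((inner ℂ (tv y) (tv z) : ℂ)))).1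
          linarith [habs]
        have hrfl : (RCLike.re (inner ℂ (tv y) (tv z) : ℂ)) =
            ((inner ℂ (tv y) (tv z) : ℂ)).re := rfl
        rw [hrfl]
        nlinarith [hre]
      have hYn0 : 0 ≤ Yn := norm_nonneg _
      have hZn0 : 0 ≤ Zn := norm_nonneg _
      have hA0 : 0 ≤ A := norm_nonneg _
      have hB0 : 0 ≤ B := norm_nonneg _
      have hpp0 : 0 ≤ nsq (P *ᵥ x) := nsq_nonneg _
      have hA2 : nsq (Q *ᵥ x) = A ^ 2 := nsq_eq _
      have hB2 : nsq (S *ᵥ x) = B ^ 2 := nsq_eq _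
      rw [hA2, hB2]
      set pp := nsq (P *ᵥ x) with hppdef
      have k3 : (1 - ε) * (Yn ^ 2 + Zn ^ 2) ≤ pp := by
        nlinarith [sq_nonneg (Yn - Zn)]
      have k4 : pp ^ 2 ≤ (A ^ 2 + B ^ 2) * (Yn ^ 2 + Zn ^ 2) := by
        nlinarith [sq_nonneg (A * Zn - B * Yn)]
      rcases eq_or_lt_of_le hpp0 with h0 | h0
      · nlinarith [sq_nonneg A, sq_nonneg B]
      · nlinarith [mul_pos h0 h0]
    constructor
    · apply posSemidef_of_re ((hQ.add hS).sub (herm_smul hP (1 - ε)))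
      intro x
      rw [sub_mulVec, dotProduct_sub, quad_sum hQ hQproj hS hSproj, quad_smulP hP hPp]
      rw [← Complex.ofReal_sub, Complex.ofReal_re]
      linarith [lower x]
    · apply posSemidef_of_re ((herm_smul hP (1 + ε)).sub (hQ.add hS))
      intro x
      rw [sub_mulVec, dotProduct_sub, quad_sum hQ hQproj hS hSproj, quad_smulP hP hPp]
      rw [← Complex.ofReal_sub, Complex.ofReal_re]
      linarith [upper x]
  · intro hD
    obtain ⟨P, hP, hPp, hran⟩ :=
      exists_proj (LinearMap.range Q.mulVecLin ⊔ LinearMap.range S.mulVecLin)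
    obtain ⟨-, hupper⟩ := hD P hP hPp hran
    apply Real.sSup_le _ hε0
    rintro r ⟨v, w, hv, hw, hv1, hw1, rfl⟩
    set z := dotProduct (star v) w with hzdef
    rcases eq_or_ne z 0 with hz0 | hz0
    · rw [hz0]
      simpa using hε0
    set φ : ℂ := ((‖z‖ : ℝ) : ℂ) / z with hφdef
    have hφnorm : ‖φ‖ = 1 := by
      rw [hφdef, norm_div, Complex.norm_real, Real.norm_eq_abs,
        abs_of_nonneg (norm_nonneg z)]
      field_simp [norm_ne_zero_iff.mpr hz0]
    set w' : Fin d → ℂ := φ • w with hw'def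
    have hQw' : Q *ᵥ w' = w' := by rw [hw'def, mulVec_smul, hw]
    have hw'1 : nsq w' = 1 := by
      rw [nsq_eq, hw'def, tv_smul, norm_smul, hφnorm, one_mul, ← nsq_eq, hw1]
    set c := ‖z‖ with hcdef
    have hc0 : (0:ℝ) ≤ c := norm_nonneg z
    have hipvw' : dotProduct (star v) w' = (c : ℂ) := by
      rw [hw'def, dotProduct_smul, smul_eq_mul, ← hzdef, hφdef]
      field_simp
    have hip_wv : dotProduct (star w') v = (c : ℂ) := by
      have h9 := star_dotProduct (v := w') (w := v)
      rw [hipvw'] at h9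
      simpa using h9
    set x := v + w' with hxdef
    -- x is fixed by P
    have hxmem : x ∈ LinearMap.range P.mulVecLin := by
      rw [hran]
      apply Submodule.add_mem
      · apply Submodule.mem_sup_right
        exact ⟨v, by rw [mulVecLin_apply, hv]⟩
      · apply Submodule.mem_sup_left
        exact ⟨w', by rw [mulVecLin_apply, hQw']⟩
    have hPx : P *ᵥ x = x := fix_of_mem_range hPp hxmem
    -- nsq x = 2 + 2c
    have hnsqx : nsq x = 2 + 2 * c := by
      have : dotProduct (star x) x
          = dotProduct (star v) v + dotProduct (star v) w'
          + (dotProduct (star w') v + dotProduct (star w') w') := by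
        rw [hxdef, star_add, add_dotProduct, dotProduct_add, dotProduct_add]
      rw [ip_self, ip_self v, ip_self w', hv1, hw'1, hipvw', hip_wv] at this
      have h8 := congrArg Complex.re this
      simp only [Complex.ofReal_re, Complex.add_re, Complex.ofReal_one] at h8
      norm_num at h8
      linarith
    -- lower bounds for nsq (Q x) and nsq (S x)
    have hQlow : (1 + c) ^ 2 ≤ nsq (Q *ᵥ x) := by
      have hipe : dotProduct (star w') (Q *ᵥ x) = ((1 + c : ℝ) : ℂ) := by
        rw [← herm_move hQ, hQw', hxdef, dotProduct_add, ip_self w', hw'1, hip_wv]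
        push_cast
        ring
      have hle : (1 + c : ℝ) ≤ ‖tv w'‖ * ‖tv (Q *ᵥ x)‖ := by
        have h1 : ‖dotProduct (star w') (Q *ᵥ x)‖
            ≤ ‖tv w'‖ * ‖tv (Q *ᵥ x)‖ := by
          rw [ip_inner]
          exact norm_inner_le_norm _ _
        rw [hipe, Complex.norm_real, Real.norm_eq_abs, abs_of_nonneg (by linarith)] at h1
        exact h1
      rw [norm_tv_of_nsq_one hw'1, one_mul] at hle
      rw [nsq_eq]
      nlinarith [norm_nonneg (tv (Q *ᵥ x))]
    have hSlow : (1 + c) ^ 2 ≤ nsq (S *ᵥ x) := by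
      have hipe : dotProduct (star v) (S *ᵥ x) = ((1 + c : ℝ) : ℂ) := by
        rw [← herm_move hS, hv, hxdef, dotProduct_add, ip_self v, hv1, hipvw']
        push_cast
        ring
      have hle : (1 + c : ℝ) ≤ ‖tv v‖ * ‖tv (S *ᵥ x)‖ := by
        have h1 : ‖dotProduct (star v) (S *ᵥ x)‖
            ≤ ‖tv v‖ * ‖tv (S *ᵥ x)‖ := by
          rw [ip_inner]
          exact norm_inner_le_norm _ _
        rw [hipe, Complex.norm_real, Real.norm_eq_abs, abs_of_nonneg (by linarith)] at h1
        exact h1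
      rw [norm_tv_of_nsq_one hv1, one_mul] at hle
      rw [nsq_eq]
      nlinarith [norm_nonneg (tv (S *ᵥ x))]
    -- use the upper PSD bound
    have hq := posSemidef_re hupper x
    rw [sub_mulVec, dotProduct_sub, quad_sum hQ hQproj hS hSproj, quad_smulP hP hPp,
      ← Complex.ofReal_sub, Complex.ofReal_re, hPx] at hq
    rw [hnsqx] at hq
    -- conclude c ≤ ε
    show c ≤ ε
    nlinarith [hQlow, hSlow, hc0]

end EpsOrtho

/-- **Statement 17.**  For orthogonal projections `S`, `Q` on a finite-dimensional complex
Hilbert space and `ε ∈ [0,1)`, the following are equivalent (ε-orthogonality):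
(i) `‖SQv‖² ≤ ε²‖Qv‖²` for all `v`; (ii) `QSQ ≤ ε²Q`; (iii) `overlap(S,Q) ≤ ε`;
(iv) `(1-ε)(Q∨S) ≤ Q + S ≤ (1+ε)(Q∨S)`, where `Q∨S` is the orthogonal projection onto
`ran Q + ran S`; (v) `SQS ≤ ε²S`; (vi) `‖QSv‖² ≤ ε²‖Sv‖²` for all `v`. -/
theorem eps_orthogonality_tfae
    {d : ℕ} (S Q : Matrix (Fin d) (Fin d) ℂ)
    (hS : S.IsHermitian) (hSproj : S * S = S)
    (hQ : Q.IsHermitian) (hQproj : Q * Q = Q)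
    (ε : ℝ) (hε : ε ∈ Set.Ico (0:ℝ) 1) :
    ((∀ v : Fin d → ℂ, nsq (S.mulVec (Q.mulVec v)) ≤ ε ^ 2 * nsq (Q.mulVec v)) ↔
      ((ε ^ 2 : ℝ) • Q - Q * S * Q).PosSemidef)
    ∧
    ((((ε ^ 2 : ℝ) • Q - Q * S * Q).PosSemidef) ↔ overlap S Q ≤ ε)
    ∧
    ((overlap S Q ≤ ε) ↔
      (∀ P : Matrix (Fin d) (Fin d) ℂ, P.IsHermitian → P * P = P →
        LinearMap.range P.mulVecLin =
          LinearMap.range Q.mulVecLin ⊔ LinearMap.range S.mulVecLin →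
        ((Q + S - (1 - ε) • P).PosSemidef ∧ ((1 + ε) • P - (Q + S)).PosSemidef)))
    ∧
    ((∀ P : Matrix (Fin d) (Fin d) ℂ, P.IsHermitian → P * P = P →
        LinearMap.range P.mulVecLin =
          LinearMap.range Q.mulVecLin ⊔ LinearMap.range S.mulVecLin →
        ((Q + S - (1 - ε) • P).PosSemidef ∧ ((1 + ε) • P - (Q + S)).PosSemidef)) ↔
      ((ε ^ 2 : ℝ) • S - S * Q * S).PosSemidef)
    ∧
    ((((ε ^ 2 : ℝ) • S - S * Q * S).PosSemidef) ↔
      (∀ v : Fin d → ℂ, nsq (Q.mulVec (S.mulVec v)) ≤ ε ^ 2 * nsq (S.mulVec v))) := by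
  have hAB := EpsOrtho.AB hS hSproj hQ hQproj ε
  have hAC := EpsOrtho.AC hS hSproj hQ hQproj hε.1
  have hCD := EpsOrtho.CD hS hSproj hQ hQproj hε
  have hAB' := EpsOrtho.AB hQ hQproj hS hSproj ε
  have hAC' := EpsOrtho.AC hQ hQproj hS hSproj hε.1
  have hcomm : (overlap Q S ≤ ε) ↔ (overlap S Q ≤ ε) := by
    rw [EpsOrtho.overlap_comm S Q]
  have hEC : ((ε ^ 2 : ℝ) • S - S * Q * S).PosSemidef ↔ overlap S Q ≤ ε :=
    (hAB'.symm.trans hAC').trans hcomm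
  exact ⟨hAB, hAB.symm.trans hAC, hCD,
    hCD.symm.trans hEC.symm, hAB'.symm⟩
end

section
/- For every natural number r ≥ 2 and every real t ∈ (1,∞) there exists ε ∈ (0,1) such that for every finite-dimensional complex Hilbert space H and all orthogonal projections Q₁,…,Q_r on H satisfying Q_j Q_k Q_j ≤ ε² Q_j for all j ≠ k in {1,…,r}, the orthogonal projection ∨_{j=1}^r Q_j onto the subspace ran Q₁ + … + ran Q_r satisfies ∨_{j=1}^r Q_j ≤ t ∑_{j=1}^r Q_j in the Löwner order. -/
open Matrix
open scoped ComplexOrder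

open scoped InnerProductSpace

section aux

variable {d : ℕ}

private noncomputable def eL (d : ℕ) : (Fin d → ℂ) ≃ₗ[ℂ] EuclideanSpace ℂ (Fin d) :=
  (WithLp.linearEquiv 2 ℂ (Fin d → ℂ)).symm

private lemma eL_inner (x y : Fin d → ℂ) : ⟪eL d x, eL d y⟫_ℂ = star x ⬝ᵥ y := by
  simp [eL, dotProduct, PiLp.inner_apply, mul_comm]

private lemma eL_self (x : Fin d → ℂ) : star x ⬝ᵥ x = ((‖eL d x‖ : ℝ) : ℂ) ^ 2 := by
  rw [← eL_inner]; exact_mod_cast inner_self_eq_norm_sq_to_K (𝕜 := ℂ) (eL d x)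

private lemma herm_move {M : Matrix (Fin d) (Fin d) ℂ} (hM : M.IsHermitian) (x y : Fin d → ℂ) :
    star x ⬝ᵥ (M *ᵥ y) = star (M *ᵥ x) ⬝ᵥ y := by
  rw [dotProduct_mulVec, star_mulVec, hM.eq]

/-- quadratic form of a hermitian idempotent is a squared norm -/
private lemma proj_quad {M : Matrix (Fin d) (Fin d) ℂ} (hM : M.IsHermitian) (hMM : M * M = M)
    (x : Fin d → ℂ) : star x ⬝ᵥ (M *ᵥ x) = ((‖eL d (M *ᵥ x)‖ : ℝ) : ℂ) ^ 2 := by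
  conv_lhs => rw [← hMM, ← mulVec_mulVec, herm_move hM]
  exact eL_self _

end aux

section aux2
variable {d : ℕ}

private lemma cross_norm {ε : ℝ} (hε0 : 0 ≤ ε) {A B : Matrix (Fin d) (Fin d) ℂ}
    (hA : A.IsHermitian) (hB : B.IsHermitian) (hBB : B * B = B)
    (h : ((ε ^ 2 : ℝ) • A - A * B * A).PosSemidef) (w : Fin d → ℂ) (hw : A *ᵥ w = w) :
    ‖eL d (B *ᵥ w)‖ ≤ ε * ‖eL d w‖ := by
  have h0 := h.dotProduct_mulVec_nonneg w
  have hexp : star w ⬝ᵥ (((ε ^ 2 : ℝ) • A - A * B * A) *ᵥ w)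
      = ((ε ^ 2 * ‖eL d w‖ ^ 2 - ‖eL d (B *ᵥ w)‖ ^ 2 : ℝ) : ℂ) := by
    rw [sub_mulVec, dotProduct_sub]
    have h1 : star w ⬝ᵥ (((ε ^ 2 : ℝ) • A) *ᵥ w) = ((ε ^ 2 * ‖eL d w‖ ^ 2 : ℝ) : ℂ) := by
      rw [smul_mulVec, dotProduct_smul, hw, eL_self]
      push_cast
      rw [Complex.real_smul]; push_cast; ring
    have h2 : star w ⬝ᵥ ((A * B * A) *ᵥ w) = ((‖eL d (B *ᵥ w)‖ ^ 2 : ℝ) : ℂ) := by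
      rw [← mulVec_mulVec, ← mulVec_mulVec, hw, herm_move hA, hw, proj_quad hB hBB]
      push_cast; ring
    rw [h1, h2]; push_cast; ring
  rw [hexp] at h0
  have hre : (0:ℝ) ≤ ε ^ 2 * ‖eL d w‖ ^ 2 - ‖eL d (B *ᵥ w)‖ ^ 2 := by
    exact_mod_cast h0
  have hsq : ‖eL d (B *ᵥ w)‖ ^ 2 ≤ (ε * ‖eL d w‖) ^ 2 := by nlinarith
  exact le_of_pow_le_pow_left₀ two_ne_zero (by positivity) hsq

end aux2

section key
variable {d : ℕ}

private lemma key_bound {r d : ℕ} {t ε : ℝ} (ht0 : 0 < t) (hε0 : 0 ≤ ε)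
    (hkey : 1/t ≤ 1 - ((r:ℝ) - 1) * ε)
    {Q : Fin r → Matrix (Fin d) (Fin d) ℂ}
    (hQ : ∀ j, (Q j).IsHermitian ∧ Q j * Q j = Q j)
    (hortho : ∀ j k, j ≠ k → ((ε ^ 2 : ℝ) • Q j - Q j * Q k * Q j).PosSemidef)
    (v : Fin d → ℂ) (hv : v ∈ ⨆ j, LinearMap.range (Q j).mulVecLin) :
    ‖eL d v‖ ^ 2 ≤ t * ∑ j, ‖eL d (Q j *ᵥ v)‖ ^ 2 := by
  obtain ⟨f, hf, hsum⟩ := (Submodule.mem_iSup_iff_exists_finsupp _ _).mp hv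
  set w : Fin r → (Fin d → ℂ) := fun j => f j with hwdef
  have hw : ∀ j, Q j *ᵥ w j = w j := by
    intro j
    obtain ⟨u, hu⟩ := hf j
    simp only [hwdef, ← hu, Matrix.mulVecLin_apply, mulVec_mulVec, (hQ j).2]
  have hv_eq : v = ∑ j, w j := by
    rw [← hsum, Finsupp.sum_fintype]
    intro; rfl
  set a : Fin r → ℝ := fun j => ‖eL d (w j)‖ with hadef
  set b : Fin r → ℝ := fun j => ‖eL d (Q j *ᵥ v)‖ with hbdef
  have hA0 : (0:ℝ) ≤ ∑ j, a j ^ 2 := Finset.sum_nonneg fun j _ => sq_nonneg _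
  have hB0 : (0:ℝ) ≤ ∑ j, b j ^ 2 := Finset.sum_nonneg fun j _ => sq_nonneg _
  have hV0 : (0:ℝ) ≤ ‖eL d v‖ ^ 2 := sq_nonneg _
  -- cross bound
  have hcross : ∀ j k, j ≠ k → ‖(⟪eL d (w j), eL d (w k)⟫_ℂ)‖ ≤ ε * (a j * a k) := by
    intro j k hjk
    have h1 : star (w j) ⬝ᵥ (w k) = star (Q k *ᵥ w j) ⬝ᵥ (w k) := by
      conv_lhs => rw [← hw k]
      rw [herm_move (hQ k).1]
    calc ‖(⟪eL d (w j), eL d (w k)⟫_ℂ)‖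
        = ‖(⟪eL d (Q k *ᵥ w j), eL d (w k)⟫_ℂ)‖ := by rw [eL_inner, eL_inner, h1]
      _ ≤ ‖eL d (Q k *ᵥ w j)‖ * ‖eL d (w k)‖ := norm_inner_le_norm _ _
      _ ≤ (ε * a j) * a k := by
          exact mul_le_mul_of_nonneg_right
            (cross_norm hε0 (hQ j).1 (hQ k).1 (hQ k).2 (hortho j k hjk) (w j) (hw j))
            (norm_nonneg _)
      _ = ε * (a j * a k) := by ring
  -- expansion of the norm of v
  have hV2 : ‖eL d v‖ ^ 2 = ∑ j, ∑ k, (⟪eL d (w j), eL d (w k)⟫_ℂ).re := by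
    have h1 : (‖eL d v‖ ^ 2 : ℝ) = (⟪eL d v, eL d v⟫_ℂ).re :=
      (inner_self_eq_norm_sq (𝕜 := ℂ) _).symm
    rw [h1, hv_eq, map_sum, sum_inner, Complex.re_sum]
    exact Finset.sum_congr rfl fun j _ => by rw [inner_sum, Complex.re_sum]
  have hdiag : ∀ j, (⟪eL d (w j), eL d (w j)⟫_ℂ).re = a j ^ 2 := fun j =>
    inner_self_eq_norm_sq (𝕜 := ℂ) _
  -- pointwise lower bound
  have hpt : ∀ j k, -(ε * (a j * a k)) + (if j = k then (1+ε) * a j ^ 2 else 0)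
      ≤ (⟪eL d (w j), eL d (w k)⟫_ℂ).re := by
    intro j k
    by_cases hjk : j = k
    · subst hjk
      rw [hdiag j, if_pos rfl]
      exact le_of_eq (by ring)
    · simp only [if_neg hjk, add_zero]
      have h2 := hcross j k hjk
      have h3 : |(⟪eL d (w j), eL d (w k)⟫_ℂ).re| ≤ ‖(⟪eL d (w j), eL d (w k)⟫_ℂ)‖ :=
        Complex.abs_re_le_norm _
      have := neg_abs_le (⟪eL d (w j), eL d (w k)⟫_ℂ).re
      linarith
  -- lower bound for the norm of v
  have hlow : (1+ε) * (∑ j, a j ^ 2) - ε * (∑ j, a j) ^ 2 ≤ ‖eL d v‖ ^ 2 := by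
    rw [hV2]
    have e1 : ∑ j, ∑ k, (-(ε * (a j * a k)) + (if j = k then (1+ε) * a j ^ 2 else 0))
        = (1+ε) * (∑ j, a j ^ 2) - ε * (∑ j, a j) ^ 2 := by
      rw [Finset.sum_congr rfl (fun j _ => Finset.sum_add_distrib), Finset.sum_add_distrib]
      have e2 : ∑ j : Fin r, ∑ k : Fin r, -(ε * (a j * a k)) = -(ε * (∑ j, a j) ^ 2) := by
        rw [sq, Finset.sum_mul_sum, Finset.mul_sum, ← Finset.sum_neg_distrib]
        refine Finset.sum_congr rfl fun j _ => ?_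
        rw [Finset.mul_sum, ← Finset.sum_neg_distrib]
      have e3 : ∑ j : Fin r, ∑ k : Fin r, (if j = k then (1+ε) * a j ^ 2 else 0)
          = (1+ε) * (∑ j, a j ^ 2) := by
        rw [Finset.mul_sum]
        exact Finset.sum_congr rfl fun j _ => by rw [Finset.sum_ite_eq]; simp
      rw [e2, e3]; ring
    rw [← e1]
    exact Finset.sum_le_sum fun j _ => Finset.sum_le_sum fun k _ => hpt j k
  have hsq_sum : (∑ j, a j) ^ 2 ≤ (r:ℝ) * ∑ j, a j ^ 2 := by
    simpa using sq_sum_le_card_mul_sum_sq (s := Finset.univ) (f := a)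
  -- A / t ≤ V2
  have h5 : (∑ j, a j ^ 2) * (1/t) ≤ ‖eL d v‖ ^ 2 := by
    nlinarith [mul_nonneg hε0 (sub_nonneg.2 hsq_sum),
      mul_nonneg hA0 (sub_nonneg.2 hkey), hlow]
  have hAleq : (∑ j, a j ^ 2) ≤ (‖eL d v‖ ^ 2) * t := by
    rw [← div_le_iff₀ ht0]
    calc (∑ j, a j ^ 2) / t = (∑ j, a j ^ 2) * (1/t) := by ring
      _ ≤ _ := h5
  -- Cauchy-Schwarz step
  have hVb : ‖eL d v‖ ^ 2 ≤ ∑ j, a j * b j := by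
    have h1 : (‖eL d v‖ ^ 2 : ℝ) = (⟪eL d v, eL d v⟫_ℂ).re :=
      (inner_self_eq_norm_sq (𝕜 := ℂ) _).symm
    have hEv : eL d v = ∑ j, eL d (w j) := by rw [hv_eq, map_sum]
    rw [h1]
    nth_rewrite 1 [hEv]
    rw [sum_inner, Complex.re_sum]
    refine Finset.sum_le_sum fun j _ => ?_
    have h2 : star (w j) ⬝ᵥ v = star (w j) ⬝ᵥ (Q j *ᵥ v) := by
      conv_lhs => rw [← hw j]
      rw [herm_move (hQ j).1]
    calc (⟪eL d (w j), eL d v⟫_ℂ).re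
        ≤ ‖(⟪eL d (w j), eL d v⟫_ℂ)‖ := Complex.re_le_norm _
      _ = ‖(⟪eL d (w j), eL d (Q j *ᵥ v)⟫_ℂ)‖ := by rw [eL_inner, eL_inner, h2]
      _ ≤ a j * b j := norm_inner_le_norm _ _
  have hab : (∑ j, a j * b j) ^ 2 ≤ (∑ j, a j ^ 2) * (∑ j, b j ^ 2) :=
    Finset.sum_mul_sq_le_sq_mul_sq _ _ _
  rcases eq_or_lt_of_le hV0 with h0 | h0
  · calc ‖eL d v‖ ^ 2 = 0 := h0.symm
      _ ≤ t * ∑ j, b j ^ 2 := mul_nonneg ht0.le hB0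
  · have h4 : (‖eL d v‖ ^ 2) ^ 2 ≤ ((‖eL d v‖ ^ 2) * t) * (∑ j, b j ^ 2) := by
      calc (‖eL d v‖ ^ 2) ^ 2 ≤ (∑ j, a j * b j) ^ 2 := by
            exact pow_le_pow_left₀ hV0 hVb 2
        _ ≤ (∑ j, a j ^ 2) * (∑ j, b j ^ 2) := hab
        _ ≤ ((‖eL d v‖ ^ 2) * t) * (∑ j, b j ^ 2) :=
            mul_le_mul_of_nonneg_right hAleq hB0
    nlinarith [h4, h0]
end key


/-- **Statement 18.**  For every `r ≥ 2` and `t > 1` there is `ε ∈ (0,1)` such that for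
every finite-dimensional complex Hilbert space and all orthogonal projections
`Q₁, …, Q_r` that are pairwise ε-orthogonal (`Q_j Q_k Q_j ≤ ε² Q_j` for `j ≠ k`), the
orthogonal projection onto `ran Q₁ + … + ran Q_r` is dominated by `t ∑_j Q_j` in the
Löwner order. -/
theorem join_le_sum_of_eps_orthogonal
    (r : ℕ) (hr : 2 ≤ r) (t : ℝ) (ht : 1 < t) :
    ∃ ε ∈ Set.Ioo (0:ℝ) 1, ∀ d : ℕ, ∀ Q : Fin r → Matrix (Fin d) (Fin d) ℂ,
      (∀ j, (Q j).IsHermitian ∧ Q j * Q j = Q j) →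
      (∀ j k, j ≠ k → ((ε ^ 2 : ℝ) • Q j - Q j * Q k * Q j).PosSemidef) →
      ∀ P : Matrix (Fin d) (Fin d) ℂ, P.IsHermitian → P * P = P →
        LinearMap.range P.mulVecLin = (⨆ j, LinearMap.range (Q j).mulVecLin) →
        (t • ∑ j, Q j - P).PosSemidef := by
  have ht0 : (0:ℝ) < t := by linarith
  have hr1 : (1:ℝ) ≤ (r:ℝ) - 1 := by
    have h2 : (2:ℝ) ≤ (r:ℝ) := by exact_mod_cast hr
    linarith
  set ε : ℝ := (t - 1) / (((r:ℝ) - 1) * t) with hεdef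
  have hden : (0:ℝ) < ((r:ℝ) - 1) * t := by nlinarith
  have hεpos : 0 < ε := div_pos (by linarith) hden
  have hε1 : ε < 1 := by rw [hεdef, div_lt_one hden]; nlinarith
  have hkey : 1/t ≤ 1 - ((r:ℝ) - 1) * ε := by
    have h3 : ((r:ℝ) - 1) * ε = (t-1)/t := by
      rw [hεdef]
      field_simp
    rw [h3]
    have h4 : 1 - (t-1)/t = 1/t := by field_simp; ring
    rw [h4]
  refine ⟨ε, ⟨hεpos, hε1⟩, ?_⟩
  intro d Q hQ hortho P hPh hP2 hrange
  -- `P` acts as identity on the ranges of the `Q j`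
  have hQP : ∀ j, Q j * P = Q j := by
    intro j
    have hsub : LinearMap.range (Q j).mulVecLin ≤ LinearMap.range P.mulVecLin := by
      rw [hrange]; exact le_iSup (fun j => LinearMap.range (Q j).mulVecLin) j
    have hfix : ∀ z, P *ᵥ (Q j *ᵥ z) = Q j *ᵥ z := by
      intro z
      obtain ⟨y, hy⟩ := hsub (LinearMap.mem_range_self _ z)
      simp only [Matrix.mulVecLin_apply] at hy
      rw [← hy, mulVec_mulVec, hP2]
    have hPQ : P * Q j = Q j := by
      ext i k
      have h := congrFun (hfix (Pi.single k 1)) i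
      rw [mulVec_mulVec] at h
      simpa [Matrix.mulVec_single_one] using h
    have h5 := congrArg conjTranspose hPQ
    rwa [conjTranspose_mul, (hQ j).1.eq, hPh.eq] at h5
  rw [posSemidef_iff_dotProduct_mulVec]
  constructor
  · -- Hermitian
    have h6 : (∑ j, Q j).IsHermitian := by
      unfold Matrix.IsHermitian
      rw [conjTranspose_sum]
      exact Finset.sum_congr rfl fun j _ => (hQ j).1.eq
    have h7 : (t • ∑ j, Q j).IsHermitian := by
      unfold Matrix.IsHermitian
      rw [conjTranspose_smul, star_trivial, h6.eq]
    exact h7.sub hPh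
  · intro x
    set v : Fin d → ℂ := P *ᵥ x with hvdef
    have hvmem : v ∈ ⨆ j, LinearMap.range (Q j).mulVecLin := by
      rw [← hrange]
      exact ⟨x, rfl⟩
    have hQjx : ∀ j, Q j *ᵥ x = Q j *ᵥ v := by
      intro j
      rw [hvdef, mulVec_mulVec, hQP j]
    have hqS : star x ⬝ᵥ ((t • ∑ j, Q j) *ᵥ x)
        = ((t * ∑ j, ‖eL d (Q j *ᵥ v)‖ ^ 2 : ℝ) : ℂ) := by
      rw [smul_mulVec, dotProduct_smul]
      have h8 : (∑ j, Q j) *ᵥ x = ∑ j, Q j *ᵥ x := by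
        funext i
        simp only [Matrix.mulVec, dotProduct, Matrix.sum_apply, Finset.sum_apply,
          Finset.sum_mul]
        exact Finset.sum_comm
      rw [h8]
      have h9 : star x ⬝ᵥ (∑ j, Q j *ᵥ x) = ∑ j, star x ⬝ᵥ (Q j *ᵥ x) := by
        simp only [dotProduct, Finset.sum_apply, Finset.mul_sum]
        exact Finset.sum_comm
      rw [h9]
      have h10 : ∀ j, star x ⬝ᵥ (Q j *ᵥ x) = ((‖eL d (Q j *ᵥ v)‖ ^ 2 : ℝ) : ℂ) := by
        intro j
        rw [proj_quad (hQ j).1 (hQ j).2, hQjx j]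
        push_cast; ring
      rw [Finset.sum_congr rfl fun j _ => h10 j]
      rw [Complex.real_smul]
      push_cast
      ring
    have hqP : star x ⬝ᵥ (P *ᵥ x) = ((‖eL d v‖ ^ 2 : ℝ) : ℂ) := by
      rw [proj_quad hPh hP2]
      push_cast; ring
    rw [sub_mulVec, dotProduct_sub, hqS, hqP, ← Complex.ofReal_sub]
    rw [Complex.zero_le_real]
    have := key_bound ht0 hεpos.le hkey hQ hortho v hvmem
    linarith
end
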